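/- arXiv:math/0606360 — 8 statements merged into one kernel-verified Lean document; each statement's English description precedes it below -/
import Mathlib

section
/- Let f, g ∈ ℝ[z₁,…,zₙ] and let z_{n+1} be a new indeterminate. Then f ≪ g if and only if the polynomial g + z_{n+1}·f ∈ ℝ[z₁,…,zₙ,z_{n+1}] is real stable. Moreover, if f is real stable, then f ≪ g if and only if Im(g(z)/f(z)) ≥ 0 for every z = (z₁,…,zₙ) ∈ ℂⁿ with Im(zᵢ) > 0 for all 1 ≤ i ≤ n. -/
open MvPolynomial

def IsStable {σ : Type*} (f : MvPolynomial σ ℂ) : Prop :=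
  ∀ z : σ → ℂ, (∀ i, 0 < (z i).im) → eval z f ≠ 0

def IsRealStable {σ : Type*} (f : MvPolynomial σ ℝ) : Prop :=
  IsStable (f.map (algebraMap ℝ ℂ))

def ProperPosition {σ : Type*} (f g : MvPolynomial σ ℝ) : Prop :=
  IsStable (g.map (algebraMap ℝ ℂ) + C Complex.I * f.map (algebraMap ℝ ℂ))

/-!
Restricting `h = g + i f` to the line `t ↦ Re z + t Im z` gives a univariate polynomial
`Q + i P` with `P, Q` real. If `h` is stable, all roots of `Q + i P` lie in the closed lower
half-plane, so its modulus at `-i` is at most its modulus at `i`; as `P, Q` are real this reads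
`|g(z) - i f(z)| ≤ |g(z) + i f(z)|`, that is `Im (g(z) · conj f(z)) ≥ 0`. Then `g(z) + w f(z) = 0`
with `Im w > 0` forces `f(z) = g(z) = 0`, so `g + w f` vanishes nowhere on the upper half-space
either; both equivalences follow.
-/

open ComplexConjugate Complex

theorem Complex.norm_conj_sub_le_norm_sub {t r : ℂ} (ht : 0 ≤ t.im) (hr : r.im ≤ 0) :
    ‖conj t - r‖ ≤ ‖t - r‖ := by
  rw [← sq_le_sq₀ (norm_nonneg _) (norm_nonneg _), Complex.sq_norm, Complex.sq_norm]
  simp only [normSq_apply, sub_re, sub_im, conj_re, conj_im]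
  nlinarith

theorem Complex.im_div_nonneg_iff {a b : ℂ} : 0 ≤ (b / a).im ↔ 0 ≤ (b * conj a).im := by
  rcases eq_or_ne a 0 with rfl | ha
  · simp
  rw [div_eq_mul_inv, inv_def, ← mul_assoc, im_mul_ofReal]
  exact mul_nonneg_iff_of_pos_right (inv_pos.2 (normSq_pos.2 ha))

theorem Complex.eq_zero_of_add_mul_eq_zero {a b w : ℂ} (hab : 0 ≤ (b * conj a).im)
    (hw : 0 < w.im) (h : b + w * a = 0) : a = 0 ∧ b = 0 := by
  have ha : normSq a = 0 := by
    have him : (b * conj a).im + w.im * normSq a = 0 := by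
      simpa [mul_assoc, mul_conj, add_mul] using congrArg (fun x => (x * conj a).im) h
    nlinarith [normSq_nonneg a]
  rw [normSq_eq_zero] at ha
  subst ha
  simpa using h

namespace Polynomial

theorem norm_eval_conj_le {h : ℂ[X]} (hh : ∀ s : ℂ, 0 < s.im → h.eval s ≠ 0) {t : ℂ}
    (ht : 0 < t.im) : ‖h.eval (conj t)‖ ≤ ‖h.eval t‖ := by
  have hs := IsAlgClosed.splits h
  have norm_prod (m : Multiset ℂ) : ‖m.prod‖ = (m.map (‖·‖)).prod :=
    map_multiset_prod (normHom (α := ℂ)) m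
  rw [hs.eval_eq_prod_roots, hs.eval_eq_prod_roots, norm_mul, norm_mul, norm_prod, norm_prod,
    Multiset.map_map, Multiset.map_map]
  refine mul_le_mul_of_nonneg_left (Multiset.prod_map_le_prod_map₀ _ _ (fun _ _ => norm_nonneg _)
    fun r hr => ?_) (norm_nonneg _)
  exact norm_conj_sub_le_norm_sub ht.le (not_lt.1 fun hr' => hh r hr' (isRoot_of_mem_roots hr))

theorem im_aeval_I_mul_conj_nonneg {P Q : ℝ[X]}
    (hPQ : ∀ t : ℂ, 0 < t.im → aeval t Q + I * aeval t P ≠ 0) :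
    0 ≤ (aeval I Q * conj (aeval I P)).im := by
  set H : ℂ[X] := Q.map (algebraMap ℝ ℂ) + C I * P.map (algebraMap ℝ ℂ)
  have hH (t : ℂ) : H.eval t = aeval t Q + I * aeval t P := by
    simp [H, eval_map_algebraMap]
  have hle := norm_eval_conj_le (h := H) (fun s hs => hH s ▸ hPQ s hs) (t := I) (by simp)
  rw [hH, hH, aeval_conj, aeval_conj, ← sq_le_sq₀ (norm_nonneg _) (norm_nonneg _),
    Complex.sq_norm, Complex.sq_norm] at hle
  simp only [normSq_apply, add_re, add_im, mul_re, mul_im, conj_re, conj_im, I_re, I_im] at hle ⊢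
  nlinarith

end Polynomial

variable {σ : Type*}

theorem ProperPosition.im_mul_conj_nonneg {f g : MvPolynomial σ ℝ} (hfg : ProperPosition f g)
    {z : σ → ℂ} (hz : ∀ i, 0 < (z i).im) :
    0 ≤ (eval z (g.map (algebraMap ℝ ℂ)) * conj (eval z (f.map (algebraMap ℝ ℂ)))).im := by
  let line : σ → Polynomial ℝ := fun i =>
    Polynomial.C (z i).re + Polynomial.C (z i).im * Polynomial.X
  have hline (t : ℂ) (p : MvPolynomial σ ℝ) : Polynomial.aeval t (aeval line p) =
      eval (fun i => (z i).re + (z i).im * t) (p.map (algebraMap ℝ ℂ)) := by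
    rw [← AlgHom.comp_apply, comp_aeval, eval_map, ← aeval_def]
    simp [line]
  have hzI : (fun i => ((z i).re : ℂ) + (z i).im * I) = z := funext fun i => re_add_im (z i)
  have hstable (t : ℂ) (ht : 0 < t.im) :
      Polynomial.aeval t (aeval line g) + I * Polynomial.aeval t (aeval line f) ≠ 0 := by
    have := hfg _ fun i =>
      (by simpa using mul_pos (hz i) ht : 0 < (((z i).re : ℂ) + (z i).im * t).im)
    simpa [hline] using this
  simpa [hline, hzI] using Polynomial.im_aeval_I_mul_conj_nonneg hstable

theorem ProperPosition.eval_add_mul_ne_zero {f g : MvPolynomial σ ℝ} (hfg : ProperPosition f g)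
    {z : σ → ℂ} (hz : ∀ i, 0 < (z i).im) {w : ℂ} (hw : 0 < w.im) :
    eval z (g.map (algebraMap ℝ ℂ)) + w * eval z (f.map (algebraMap ℝ ℂ)) ≠ 0 := fun h => by
  obtain ⟨hf, hg⟩ := eq_zero_of_add_mul_eq_zero (hfg.im_mul_conj_nonneg hz) hw h
  exact hfg z hz (by simp [hf, hg])

theorem stmt0 {n : ℕ} (f g : MvPolynomial (Fin n) ℝ) :
    (ProperPosition f g ↔
      IsRealStable (rename Fin.castSucc g + X (Fin.last n) * rename Fin.castSucc f)) ∧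
    (IsRealStable f →
      (ProperPosition f g ↔
        ∀ z : Fin n → ℂ, (∀ i, 0 < (z i).im) →
          0 ≤ (eval z (g.map (algebraMap ℝ ℂ)) / eval z (f.map (algebraMap ℝ ℂ))).im)) := by
  have eval_snoc (z : Fin (n + 1) → ℂ) :
      eval z ((rename Fin.castSucc g + X (Fin.last n) * rename Fin.castSucc f).map
        (algebraMap ℝ ℂ)) = eval (z ∘ Fin.castSucc) (g.map (algebraMap ℝ ℂ)) +
          z (Fin.last n) * eval (z ∘ Fin.castSucc) (f.map (algebraMap ℝ ℂ)) := by
    simp [map_rename, eval_rename]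
  refine ⟨⟨fun hfg z hz => ?_, fun hst z hz => ?_⟩,
    fun hf => ⟨fun hfg z hz => ?_, fun hdiv z hz => ?_⟩⟩
  · rw [eval_snoc]
    exact hfg.eval_add_mul_ne_zero (fun i => hz _) (hz _)
  · have := hst (Fin.snoc z I) (Fin.lastCases (by simp) fun i => by simpa using hz i)
    rw [eval_snoc] at this
    simpa using this
  · exact im_div_nonneg_iff.2 (hfg.im_mul_conj_nonneg hz)
  · intro h
    simp only [map_add, map_mul, eval_C] at h
    exact hf z hz (eq_zero_of_add_mul_eq_zero (im_div_nonneg_iff.1 (hdiv z hz)) (by simp) h).1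
end

section
/- Let f, g ∈ ℝ[z₁,…,zₙ]. Then α·f + β·g is real stable or identically zero for all α, β ∈ ℝ if and only if either f ≪ g, or g ≪ f, or f and g are both identically zero. -/
open MvPolynomial

noncomputable section
namespace StableAux
variable {n : ℕ}
lemma diff_eval (p : MvPolynomial (Fin n) ℂ) :
    Differentiable ℂ (fun z : Fin n → ℂ => eval z p) := by
  induction p using MvPolynomial.induction_on with
  | C a => simpa using differentiable_const a
  | add p q hp hq => simp only [eval_add]; exact hp.add hq
  | mul_X p i hp => simp only [eval_mul, eval_X]; exact hp.mul (differentiable_pi.mp differentiable_id i)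

lemma analytic_eval (p : MvPolynomial (Fin n) ℂ) :
    AnalyticOnNhd ℂ (fun z : Fin n → ℂ => eval z p) Set.univ := by
  induction p using MvPolynomial.induction_on with
  | C a => simp only [eval_C]; exact fun x _ => analyticAt_const
  | add p q hp hq => simp only [eval_add]; exact hp.add hq
  | mul_X p i hp =>
      simp only [eval_mul, eval_X]
      exact hp.mul ((ContinuousLinearMap.proj i : (Fin n → ℂ) →L[ℂ] ℂ).analyticOnNhd _)

lemma eval_conj_aux (f : MvPolynomial (Fin n) ℝ) (z : Fin n → ℂ) :
    eval (fun j => (starRingEnd ℂ) (z j)) (f.map (algebraMap ℝ ℂ))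
      = (starRingEnd ℂ) (eval z (f.map (algebraMap ℝ ℂ))) := by
  induction f using MvPolynomial.induction_on with
  | C a => simp
  | add p q hp hq => simp [hp, hq]
  | mul_X p i hp => simp [hp]

lemma eval_line (a v : Fin n → ℝ) (p : MvPolynomial (Fin n) ℂ) (t : ℂ) :
    Polynomial.eval t (MvPolynomial.aeval
        (fun j => (Polynomial.C (a j : ℂ) + Polynomial.C (v j : ℂ) * Polynomial.X)) p)
      = eval (fun j => (a j : ℂ) + (v j : ℂ) * t) p := by
  induction p using MvPolynomial.induction_on with
  | C a => simp [MvPolynomial.aeval_C]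
  | add p q hp hq => simp [hp, hq]
  | mul_X p i hp => simp [hp]

lemma prod_norm_le (s : Multiset ℂ) (f g : ℂ → ℂ) (h : ∀ r ∈ s, ‖f r‖ ≤ ‖g r‖) :
    ‖(s.map f).prod‖ ≤ ‖(s.map g).prod‖ := by
  induction s using Multiset.induction_on with
  | empty => simp
  | cons a s ih =>
      simp only [Multiset.map_cons, Multiset.prod_cons, norm_mul]
      exact mul_le_mul (h a (Multiset.mem_cons_self a s))
        (ih fun r hr => h r (Multiset.mem_cons_of_mem hr)) (norm_nonneg _)
        ((norm_nonneg _).trans (h a (Multiset.mem_cons_self a s)))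

lemma uni_key (H : Polynomial ℂ) (hH : ∀ t : ℂ, 0 < t.im → Polynomial.eval t H ≠ 0) :
    ‖Polynomial.eval (-Complex.I) H‖ ≤ ‖Polynomial.eval Complex.I H‖ := by
  by_cases h0 : H = 0
  · simp [h0]
  have hsplit : Multiset.card H.roots = H.natDegree :=
    (Polynomial.splits_iff_card_roots).mp (IsAlgClosed.splits H)
  have hfact := Polynomial.C_leadingCoeff_mul_prod_multiset_X_sub_C hsplit
  have heval : ∀ t : ℂ, Polynomial.eval t H
      = H.leadingCoeff * ((H.roots.map (fun r => t - r)).prod) := by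
    intro t
    conv_lhs => rw [← hfact]
    simp [Polynomial.eval_multiset_prod, Multiset.map_map, Function.comp]
  have hroot : ∀ r ∈ H.roots, r.im ≤ 0 := by
    intro r hr
    by_contra hc
    exact hH r (lt_of_not_ge hc) ((Polynomial.mem_roots'.mp hr).2)
  rw [heval, heval, norm_mul, norm_mul]
  refine mul_le_mul_of_nonneg_left ?_ (norm_nonneg _)
  refine prod_norm_le _ _ _ ?_
  intro r hr
  have hb := hroot r hr
  have h1 : Complex.normSq (-Complex.I - r) ≤ Complex.normSq (Complex.I - r) := by
    simp only [Complex.normSq_apply, Complex.sub_re, Complex.sub_im, Complex.neg_re,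
      Complex.neg_im, Complex.I_re, Complex.I_im]
    nlinarith
  have := Real.sqrt_le_sqrt h1
  simpa [Complex.norm_def] using this

def U (n : ℕ) : Set (Fin n → ℂ) := {z | ∀ i, 0 < (z i).im}

lemma isOpen_U : IsOpen (U n) := by
  have : U n = Set.pi Set.univ (fun _ : Fin n => {w : ℂ | 0 < w.im}) := by
    ext z; simp [U, Set.mem_pi]
  rw [this]
  exact isOpen_set_pi Set.finite_univ
    (fun i _ => isOpen_lt continuous_const Complex.continuous_im)

lemma convex_U : Convex ℝ (U n) := by
  have : U n = Set.pi Set.univ (fun _ : Fin n => {w : ℂ | 0 < w.im}) := by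
    ext z; simp [U, Set.mem_pi]
  rw [this]
  exact convex_pi (fun i _ => convex_halfSpace_im_gt 0)

lemma preconnected_U : IsPreconnected (U n) := (convex_U).isPreconnected

lemma mem_U : (fun _ : Fin n => Complex.I) ∈ U n := fun i => by simp

lemma reflect_le {f g : MvPolynomial (Fin n) ℝ}
    (hs : IsStable (g.map (algebraMap ℝ ℂ) + C Complex.I * f.map (algebraMap ℝ ℂ)))
    {z : Fin n → ℂ} (hz : z ∈ U n) :
    ‖eval z (g.map (algebraMap ℝ ℂ) - C Complex.I * f.map (algebraMap ℝ ℂ))‖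
      ≤ ‖eval z (g.map (algebraMap ℝ ℂ) + C Complex.I * f.map (algebraMap ℝ ℂ))‖ := by
  set fC := f.map (algebraMap ℝ ℂ) with hfC
  set gC := g.map (algebraMap ℝ ℂ) with hgC
  set a : Fin n → ℝ := fun j => (z j).re with ha
  set v : Fin n → ℝ := fun j => (z j).im with hv
  set H : Polynomial ℂ := MvPolynomial.aeval
      (fun j => (Polynomial.C (a j : ℂ) + Polynomial.C (v j : ℂ) * Polynomial.X))
      (gC + C Complex.I * fC) with hH
  have hline : ∀ t : ℂ, Polynomial.eval t H
      = eval (fun j => (a j : ℂ) + (v j : ℂ) * t) (gC + C Complex.I * fC) :=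
    fun t => eval_line a v _ t
  have h1 : ∀ t : ℂ, 0 < t.im → Polynomial.eval t H ≠ 0 := by
    intro t ht
    rw [hline]
    apply hs
    intro i
    have : ((a i : ℂ) + (v i : ℂ) * t).im = v i * t.im := by
      simp [Complex.add_im, Complex.mul_im]
    rw [this]
    exact mul_pos (hz i) ht
  have hIpt : (fun j => (a j : ℂ) + (v j : ℂ) * Complex.I) = z := by
    funext j; exact Complex.re_add_im (z j)
  have hmIpt : (fun j => (a j : ℂ) + (v j : ℂ) * (-Complex.I))
      = fun j => (starRingEnd ℂ) (z j) := by
    funext j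
    apply Complex.ext <;> simp [ha, hv]
  have hI : Polynomial.eval Complex.I H = eval z (gC + C Complex.I * fC) := by
    rw [hline, hIpt]
  have hmI : Polynomial.eval (-Complex.I) H
      = (starRingEnd ℂ) (eval z (gC - C Complex.I * fC)) := by
    rw [hline, hmIpt]
    simp only [eval_add, eval_sub, eval_mul, eval_C, map_sub, map_mul]
    rw [hfC, hgC, eval_conj_aux, eval_conj_aux]
    simp [Complex.conj_I]
  calc ‖eval z (gC - C Complex.I * fC)‖
      = ‖Polynomial.eval (-Complex.I) H‖ := by rw [hmI]; exact (norm_star _).symm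
    _ ≤ ‖Polynomial.eval Complex.I H‖ := uni_key H h1
    _ = ‖eval z (gC + C Complex.I * fC)‖ := by rw [hI]

lemma eval_map_combo (f g : MvPolynomial (Fin n) ℝ) (α β : ℝ) (z : Fin n → ℂ) :
    eval z ((C α * f + C β * g).map (algebraMap ℝ ℂ))
      = (α : ℂ) * eval z (f.map (algebraMap ℝ ℂ)) + (β : ℂ) * eval z (g.map (algebraMap ℝ ℂ)) := by
  simp [map_add, map_mul]

lemma map_eq_zero_iff' (f : MvPolynomial (Fin n) ℝ) :
    f.map (algebraMap ℝ ℂ) = 0 ↔ f = 0 := by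
  constructor
  · intro hf
    exact MvPolynomial.map_injective (algebraMap ℝ ℂ) (algebraMap ℝ ℂ).injective
      (by simpa using hf)
  · rintro rfl; simp

lemma backward {f g : MvPolynomial (Fin n) ℝ} (hpp : ProperPosition f g) (α β : ℝ) :
    IsRealStable (C α * f + C β * g) ∨ C α * f + C β * g = 0 := by
  by_cases hzero : C α * f + C β * g = 0
  · exact Or.inr hzero
  refine Or.inl ?_
  intro z hz hPz
  set fC := f.map (algebraMap ℝ ℂ) with hfC
  set gC := g.map (algebraMap ℝ ℂ) with hgC
  set h := gC + C Complex.I * fC with hh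
  set ht := gC - C Complex.I * fC with hht
  have hzU : z ∈ U n := hz
  have hstab : ∀ w ∈ U n, eval w h ≠ 0 := fun w hw => hpp w hw
  rw [eval_map_combo] at hPz
  set F := eval z fC with hF
  set G := eval z gC with hG
  have hhz : eval z h = G + Complex.I * F := by simp [hh, hF, hG]
  have htz : eval z ht = G - Complex.I * F := by simp [hht, hF, hG]
  have hab : ¬(α = 0 ∧ β = 0) := by
    rintro ⟨rfl, rfl⟩; apply hzero; simp
  have hkey : ‖eval z ht‖ = ‖eval z h‖ := by
    rcases eq_or_ne β 0 with hb | hb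
    · have hα : α ≠ 0 := fun ha => hab ⟨ha, hb⟩
      have hF0 : F = 0 := by
        rw [hb] at hPz
        have hαc : (α : ℂ) ≠ 0 := by exact_mod_cast hα
        simpa [hαc] using hPz
      rw [hhz, htz, hF0]; simp
    · have hβ : (β:ℂ) ≠ 0 := by exact_mod_cast hb
      have hGc : G = ((-α/β : ℝ) : ℂ) * F := by
        have h2 : (β:ℂ) * G = -((α:ℂ) * F) := by linear_combination hPz
        push_cast
        rw [div_mul_eq_mul_div, eq_div_iff hβ]
        linear_combination h2
      rw [hhz, htz, hGc]
      have e1 : ((-α/β : ℝ) : ℂ) * F + Complex.I * F = (((-α/β : ℝ) : ℂ) + Complex.I) * F := by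
        ring
      have e2 : ((-α/β : ℝ) : ℂ) * F - Complex.I * F = (((-α/β : ℝ) : ℂ) - Complex.I) * F := by
        ring
      rw [e1, e2, norm_mul, norm_mul]
      congr 1
      rw [Complex.norm_def, Complex.norm_def]
      congr 1
      simp [Complex.normSq_apply]
  -- maximum modulus
  set u : (Fin n → ℂ) → ℂ := fun w => eval w ht / eval w h with hu
  have hle : ∀ w ∈ U n, ‖u w‖ ≤ 1 := by
    intro w hw
    rw [hu]
    simp only [norm_div]
    exact div_le_one_of_le₀ (reflect_le hpp hw) (norm_nonneg _)
  have huz : ‖u z‖ = 1 := by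
    rw [hu]
    simp only [norm_div]
    rw [hkey, div_self (norm_ne_zero_iff.mpr (hstab z hzU))]
  have hmax : IsMaxOn (norm ∘ u) (U n) z := by
    intro w hw
    simp only [Set.mem_setOf_eq, Function.comp_apply, huz]
    exact hle w hw
  have hdiff : DifferentiableOn ℂ u (U n) := by
    have hinv : DifferentiableOn ℂ (fun w : Fin n → ℂ => (eval w h)⁻¹) (U n) :=
      DifferentiableOn.inv (diff_eval h).differentiableOn hstab
    have hmul := ((diff_eval ht).differentiableOn).mul hinv
    have he : u = fun w : Fin n → ℂ => eval w ht * (eval w h)⁻¹ := by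
      funext w; rw [hu]; exact div_eq_mul_inv _ _
    rw [he]; exact hmul
  have hconst := Complex.eqOn_of_isPreconnected_of_isMaxOn_norm preconnected_U isOpen_U
    hdiff hzU hmax
  set μ := u z with hμdef
  have habs : ‖μ‖ = 1 := huz
  have hid : ∀ w ∈ U n, eval w ht = μ * eval w h := by
    intro w hw
    have h1 : u w = μ := hconst hw
    rw [hu] at h1
    simp only at h1
    exact (div_eq_iff (hstab w hw)).mp h1
  have hpoly : ht = C μ * h := by
    have hvan : ∀ w : Fin n → ℂ, eval w (ht - C μ * h) = 0 := by
      have hev : (fun w : Fin n → ℂ => eval w (ht - C μ * h)) =ᶠ[nhds z] 0 := by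
        refine Filter.eventuallyEq_iff_exists_mem.mpr ⟨U n, isOpen_U.mem_nhds hzU, ?_⟩
        intro w hw
        simp [hid w hw]
      have hEq := (analytic_eval (ht - C μ * h)).eqOn_zero_of_preconnected_of_eventuallyEq_zero
        isPreconnected_univ (Set.mem_univ z) hev
      intro w
      exact hEq (Set.mem_univ w)
    have : ht - C μ * h = 0 := by
      apply MvPolynomial.funext
      intro x
      rw [hvan x]
      simp
    linear_combination this
  rw [hht, hh] at hpoly
  have hrel : C (1 - μ) * gC = C (Complex.I * (1 + μ)) * fC := by
    rw [map_sub, map_one, map_mul, map_add, map_one]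
    linear_combination hpoly
  by_cases hμ1 : μ = 1
  · -- f = 0
    have hf0 : fC = 0 := by
      rw [hμ1] at hrel
      simpa using hrel
    have hfz : f = 0 := (map_eq_zero_iff' f).mp hf0
    have hF0 : F = 0 := by rw [hF, hf0]; simp
    have hGne : G ≠ 0 := by
      have := hstab z hzU
      rw [hhz, hF0] at this
      simpa using this
    have hb0 : β = 0 := by
      rw [hF0] at hPz
      simp [hGne] at hPz
      exact_mod_cast hPz
    exact hzero (by rw [hfz, hb0]; simp)
  by_cases hμ2 : μ = -1
  · -- g = 0
    have hg0 : gC = 0 := by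
      rw [hμ2] at hrel
      simpa using hrel
    have hgz : g = 0 := (map_eq_zero_iff' g).mp hg0
    have hG0 : G = 0 := by rw [hG, hg0]; simp
    have hFne : F ≠ 0 := by
      have := hstab z hzU
      rw [hhz, hG0] at this
      simpa [Complex.I_ne_zero] using this
    have ha0 : α = 0 := by
      rw [hG0] at hPz
      simp [hFne] at hPz
      exact_mod_cast hPz
    exact hzero (by rw [hgz, ha0]; simp)
  · -- g = C r * f
    have h1μ : (1:ℂ) - μ ≠ 0 := fun hc => hμ1 (by linear_combination -hc)
    set κ : ℂ := (1 - μ)⁻¹ * (Complex.I * (1 + μ)) with hκ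
    have hgf : gC = C κ * fC := by
      have := congrArg (fun p => C ((1-μ)⁻¹) * p) hrel
      rw [← mul_assoc, ← mul_assoc, ← map_mul, ← map_mul, inv_mul_cancel₀ h1μ, map_one,
        one_mul] at this
      rw [this, hκ, map_mul]
    clear_value μ
    have hμ0 : μ ≠ 0 := by
      intro hc; rw [hc] at habs; simp at habs
    have hμconj : (starRingEnd ℂ) μ = μ⁻¹ := by
      have h2 : μ * (starRingEnd ℂ) μ = 1 := by
        rw [Complex.mul_conj]
        norm_cast
        rw [Complex.normSq_eq_norm_sq, habs]
        norm_num
      exact eq_inv_of_mul_eq_one_left (by linear_combination h2)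
    have hκ2 : κ = Complex.I * (1 + μ) / (1 - μ) := by rw [hκ]; ring
    have hden : (1:ℂ) - μ⁻¹ ≠ 0 := by
      rw [sub_ne_zero]
      intro hc
      apply hμ1
      rw [eq_comm, inv_eq_one] at hc
      exact hc
    have hκconj : (starRingEnd ℂ) κ = κ := by
      rw [hκ2, map_div₀, map_mul, map_add, map_one, map_sub, map_one, Complex.conj_I, hμconj]
      rw [div_eq_div_iff hden h1μ]
      field_simp [hμ0]
      ring
    obtain ⟨r, hr⟩ := Complex.conj_eq_iff_real.mp hκconj
    have hgfr : g = C r * f := by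
      apply MvPolynomial.map_injective (algebraMap ℝ ℂ) (algebraMap ℝ ℂ).injective
      show gC = MvPolynomial.map (algebraMap ℝ ℂ) (C r * f)
      rw [map_mul, MvPolynomial.map_C, hgf, hr]
      norm_num [Complex.coe_algebraMap]
      exact Or.inl hfC
    have hGr : G = (r:ℂ) * F := by
      rw [hG, hgf, hr]
      simp [hF]
    have hFne : F ≠ 0 := by
      intro hc
      apply hstab z hzU
      rw [hhz, hGr, hc]
      simp
    have har : α + β * r = 0 := by
      rw [hGr] at hPz
      have : ((α + β * r : ℝ) : ℂ) * F = 0 := by push_cast; linear_combination hPz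
      have h2 := (mul_eq_zero.mp this).resolve_right hFne
      exact_mod_cast h2
    apply hzero
    rw [hgfr]
    have : C α * f + C β * (C r * f) = C (α + β * r) * f := by
      rw [map_add, map_mul]; ring
    rw [this, har]
    simp
lemma dep_point (u v : ℂ) (him : ((starRingEnd ℂ) u * v).im = 0) :
    ∃ α β : ℝ, ¬(α = 0 ∧ β = 0) ∧ (α:ℂ) * u + (β:ℂ) * v = 0 := by
  by_cases hu : u = 0
  · exact ⟨1, 0, by simp, by simp [hu]⟩
  · refine ⟨-((starRingEnd ℂ) u * v).re, Complex.normSq u, ?_, ?_⟩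
    · intro hc
      exact hu (Complex.normSq_eq_zero.mp hc.2)
    · have h1 : (starRingEnd ℂ) u * v = ((((starRingEnd ℂ) u * v).re : ℝ) : ℂ) := by
        apply Complex.ext <;> simp [him]
      have h2 : ((-((starRingEnd ℂ) u * v).re : ℝ) : ℂ) = -((starRingEnd ℂ) u * v) := by
        push_cast
        rw [← h1]
      have h3 : ((Complex.normSq u : ℝ) : ℂ) = (starRingEnd ℂ) u * u :=
        Complex.normSq_eq_conj_mul_self
      rw [h2, h3]
      ring

lemma forward {f g : MvPolynomial (Fin n) ℝ}
    (hall : ∀ α β : ℝ, IsRealStable (C α * f + C β * g) ∨ C α * f + C β * g = 0) :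
    ProperPosition f g ∨ ProperPosition g f ∨ (f = 0 ∧ g = 0) := by
  by_cases hf : f = 0
  · subst hf
    by_cases hg : g = 0
    · exact Or.inr (Or.inr ⟨rfl, hg⟩)
    · left
      have h01 := hall 0 1
      simp only [map_zero, zero_mul, map_one, one_mul, mul_zero, zero_add] at h01
      have hs := h01.resolve_right hg
      unfold ProperPosition
      unfold IsRealStable at hs
      simpa using hs
  by_cases hg : g = 0
  · subst hg
    right; left
    have h10 := hall 1 0
    simp only [map_zero, zero_mul, map_one, one_mul, mul_zero, add_zero] at h10
    have hs := h10.resolve_right hf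
    unfold ProperPosition
    unfold IsRealStable at hs
    simpa using hs
  have hfs : IsRealStable f := by
    have h10 := hall 1 0
    simp only [map_zero, zero_mul, map_one, one_mul, mul_zero, add_zero] at h10
    exact h10.resolve_right hf
  have hgs : IsRealStable g := by
    have h01 := hall 0 1
    simp only [map_zero, zero_mul, map_one, one_mul, mul_zero, zero_add] at h01
    exact h01.resolve_right hg
  set fC := f.map (algebraMap ℝ ℂ) with hfC
  set gC := g.map (algebraMap ℝ ℂ) with hgC
  by_cases hdep : ∃ c : ℝ, g = C c * f
  · obtain ⟨c, hc⟩ := hdep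
    left
    intro z hz heq
    rw [← hfC, ← hgC] at heq
    have hFne : eval z fC ≠ 0 := hfs z hz
    have hgCe : gC = C ((c:ℝ) : ℂ) * fC := by
      rw [hgC, hc, map_mul, MvPolynomial.map_C]
      norm_num [Complex.coe_algebraMap]
      exact Or.inl hfC
    rw [hgCe] at heq
    simp only [eval_add, eval_mul, eval_C] at heq
    have h2 : ((c : ℂ) + Complex.I) * eval z fC = 0 := by linear_combination heq
    rcases mul_eq_zero.mp h2 with h3 | h3
    · have : (c : ℂ).im + Complex.I.im = 0 := by
        rw [← Complex.add_im, h3]; simp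
      simp at this
    · exact hFne h3
  · have hnz : ∀ α β : ℝ, ¬(α = 0 ∧ β = 0) → IsRealStable (C α * f + C β * g) := by
      intro α β hab
      rcases hall α β with hs | h0
      · exact hs
      · exfalso
        rcases eq_or_ne β 0 with hb | hb
        · have hα : α ≠ 0 := fun hh => hab ⟨hh, hb⟩
          apply hf
          rw [hb] at h0
          simp only [map_zero, zero_mul, add_zero] at h0
          rcases mul_eq_zero.mp h0 with h1 | h1
          · exact absurd (MvPolynomial.C_eq_zero.mp h1) hα
          · exact h1
        · apply hdep
          refine ⟨-α/β, ?_⟩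
          have hβg : g = C (β⁻¹) * (C β * g) := by
            rw [← mul_assoc, ← MvPolynomial.C_mul, inv_mul_cancel₀ hb]
            simp
          have hcb : C β * g = -(C α * f) := by linear_combination h0
          rw [hβg, hcb, show (-α/β : ℝ) = β⁻¹ * -α by ring, MvPolynomial.C_mul, map_neg]
          ring
    -- sign function
    set φ : (Fin n → ℂ) → ℝ :=
      fun z => ((starRingEnd ℂ) (eval z fC) * eval z gC).im with hφ
    have hcont : ContinuousOn φ (U n) := by
      apply Continuous.continuousOn
      exact Complex.continuous_im.comp
        (((continuous_star.comp (diff_eval fC).continuous).mul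
          (diff_eval gC).continuous))
    have hφne : ∀ z ∈ U n, φ z ≠ 0 := by
      intro z hz h0
      obtain ⟨α, β, hab, hcomb⟩ := dep_point _ _ h0
      have hs := hnz α β hab
      have h2 := hs z hz
      rw [eval_map_combo] at h2
      exact h2 hcomb
    have hsign : (∀ z ∈ U n, 0 < φ z) ∨ (∀ z ∈ U n, φ z < 0) := by
      by_contra hcon
      push_neg at hcon
      obtain ⟨⟨z2, hz2, hle2⟩, ⟨z1, hz1, hle1⟩⟩ := hcon
      have h2 : φ z2 < 0 := lt_of_le_of_ne hle2 (hφne z2 hz2)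
      have h1 : 0 < φ z1 := lt_of_le_of_ne hle1 (Ne.symm (hφne z1 hz1))
      have hmem : (0:ℝ) ∈ Set.Icc (φ z2) (φ z1) := ⟨h2.le, h1.le⟩
      obtain ⟨z0, hz0, hz0v⟩ := preconnected_U.intermediate_value hz2 hz1 hcont hmem
      exact hφne z0 hz0 hz0v
    rcases hsign with hpos | hneg
    · left
      intro z hz heq
      rw [← hfC, ← hgC] at heq
      have hFne : eval z fC ≠ 0 := hfs z hz
      simp only [eval_add, eval_mul, eval_C] at heq
      have hGval : eval z gC = -(Complex.I * eval z fC) := by linear_combination heq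
      have hval : φ z = -Complex.normSq (eval z fC) := by
        rw [hφ]
        simp only
        rw [hGval]
        have he2 : (starRingEnd ℂ) (eval z fC) * -(Complex.I * eval z fC)
            = -(Complex.I * ((Complex.normSq (eval z fC) : ℝ) : ℂ)) := by
          rw [Complex.normSq_eq_conj_mul_self]
          ring
        rw [he2]
        simp
      have hp := hpos z hz
      rw [hval] at hp
      have hn : 0 < Complex.normSq (eval z fC) := Complex.normSq_pos.mpr hFne
      linarith
    · right; left
      intro z hz heq
      rw [← hfC, ← hgC] at heq
      have hGne : eval z gC ≠ 0 := hgs z hz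
      simp only [eval_add, eval_mul, eval_C] at heq
      have hFval : eval z fC = -(Complex.I * eval z gC) := by linear_combination heq
      have hval : φ z = Complex.normSq (eval z gC) := by
        rw [hφ]
        simp only
        rw [hFval]
        have he2 : (starRingEnd ℂ) (-(Complex.I * eval z gC)) * eval z gC
            = Complex.I * ((Complex.normSq (eval z gC) : ℝ) : ℂ) := by
          rw [map_neg, map_mul, Complex.conj_I, Complex.normSq_eq_conj_mul_self]
          ring
        rw [he2]
        simp
      have hp := hneg z hz
      rw [hval] at hp
      have hn : 0 < Complex.normSq (eval z gC) := Complex.normSq_pos.mpr hGne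
      linarith
end StableAux
end

theorem stmt2 {n : ℕ} (f g : MvPolynomial (Fin n) ℝ) :
    (∀ α β : ℝ, IsRealStable (C α * f + C β * g) ∨ C α * f + C β * g = 0) ↔
      (ProperPosition f g ∨ ProperPosition g f ∨ (f = 0 ∧ g = 0)) := by
  constructor
  · exact fun hall => StableAux.forward hall
  · rintro (hpp | hpp | ⟨hf, hg⟩)
    · exact fun α β => StableAux.backward hpp α β
    · intro α β
      rcases StableAux.backward hpp β α with hs | h0
      · left
        rw [add_comm] at hs
        exact hs
      · right
        rw [add_comm]
        exact h0
    · intro α β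
      right
      rw [hf, hg]
      simp
end

section
/- For every n ≥ 1, a polynomial h ∈ ℂ[z₁,…,zₙ] satisfies both h(z) ≠ 0 whenever Im(zⱼ) > 0 for all j, and h(z) ≠ 0 whenever Im(zⱼ) < 0 for all j, if and only if h = c·f for some nonzero c ∈ ℂ and some real stable polynomial f ∈ ℝ[z₁,…,zₙ]. That is, H_n(ℂ) ∩ H_n(ℂ)⁻ = {c·f : c ∈ ℂ∖{0}, f ∈ H_n(ℝ)}. -/
/-!
On a real line `t ↦ u + t (v - u)` with `u < v` coordinatewise, a polynomial `h` that is nonzero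
on both the upper and the lower poly-half-plane has only real roots (a nonreal root `r` would put
`u + r (v - u)` in one of them), so for real `t` its value is the leading coefficient times a real
number; hence `conj (h u) * h v` is real. Any two real points lie below a common real point where
`h ≠ 0`, so `conj (h y₀) * h x` is real for one fixed `y₀` with `h y₀ ≠ 0` and every real `x`:
`conj (h y₀) • h` is real on `ℝⁿ` and therefore has real coefficients. Conversely, a real
polynomial satisfies `f (conj z) = conj (f z)`.
-/

open MvPolynomial

open scoped ComplexConjugate

theorem Complex.im_conj_mul_eq_zero_of_im_conj_mul_eq_zero {a b w : ℂ} (hw : w ≠ 0)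
    (ha : (conj a * w).im = 0) (hb : (conj b * w).im = 0) : (conj a * b).im = 0 := by
  have hfactor : conj a * b * (Complex.normSq w : ℂ) = (conj a * w) * conj (conj b * w) := by
    rw [← Complex.mul_conj]; simp only [map_mul, Complex.conj_conj]; ring
  have hreal : ((conj a * w) * conj (conj b * w)).im = 0 := by
    rw [Complex.mul_im, Complex.conj_re, Complex.conj_im, ha, hb]; ring
  rw [← hfactor, Complex.im_mul_ofReal] at hreal
  exact (mul_eq_zero.mp hreal).resolve_right (Complex.normSq_pos.mpr hw).ne'

namespace Polynomial

theorem exists_eval_ofReal_eq_leadingCoeff_mul {q : ℂ[X]} (hq : ∀ r ∈ q.roots, r.im = 0)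
    (x : ℝ) : ∃ p : ℝ, q.eval (x : ℂ) = q.leadingCoeff * p := by
  refine ⟨(q.roots.map fun r => x - r.re).prod, ?_⟩
  have hcast : (((q.roots.map fun r => x - r.re).prod : ℝ) : ℂ) =
      (q.roots.map fun r => ((x - r.re : ℝ) : ℂ)).prod := by
    simpa using map_multiset_prod Complex.ofRealHom (q.roots.map fun r => x - r.re)
  rw [(IsAlgClosed.splits q).eval_eq_prod_roots, hcast]
  congr 2
  refine Multiset.map_congr rfl fun r hr => ?_
  apply Complex.ext <;> simp [hq r hr]

theorem im_conj_eval_mul_eval_eq_zero {q : ℂ[X]} (hq : ∀ r ∈ q.roots, r.im = 0) (s t : ℝ) :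
    (conj (q.eval (s : ℂ)) * q.eval (t : ℂ)).im = 0 := by
  obtain ⟨ps, hs⟩ := exists_eval_ofReal_eq_leadingCoeff_mul hq s
  obtain ⟨pt, ht⟩ := exists_eval_ofReal_eq_leadingCoeff_mul hq t
  rw [hs, ht, map_mul, Complex.conj_ofReal, mul_mul_mul_comm, Complex.conj_mul',
    ← Complex.ofReal_pow, ← Complex.ofReal_mul, ← Complex.ofReal_mul, Complex.ofReal_im]

end Polynomial

namespace MvPolynomial

variable {σ : Type*}

theorem eval_ofReal_map (p : MvPolynomial σ ℝ) (x : σ → ℝ) :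
    eval (fun j => (x j : ℂ)) (p.map (algebraMap ℝ ℂ)) = eval x p := by
  simpa [aeval_def, eval_map, Function.comp_def] using aeval_algebraMap_apply (B := ℂ) x p

theorem conj_eval_map_ofReal (p : MvPolynomial σ ℝ) (z : σ → ℂ) :
    conj (eval z (p.map (algebraMap ℝ ℂ))) =
      eval (fun j => conj (z j)) (p.map (algebraMap ℝ ℂ)) := by
  rw [eval_map, eval_map, eval₂_comp_left]
  congr 1
  ext r
  simp

theorem exists_eq_map_add_I_mul_map (g : MvPolynomial σ ℂ) :
    ∃ p q : MvPolynomial σ ℝ,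
      g = p.map (algebraMap ℝ ℂ) + C Complex.I * q.map (algebraMap ℝ ℂ) := by
  induction g using MvPolynomial.induction_on with
  | C a =>
    refine ⟨C a.re, C a.im, ?_⟩
    simp only [map_C, ← C_mul, ← C_add]
    congr 1
    apply Complex.ext <;> simp
  | add g₁ g₂ h₁ h₂ =>
    obtain ⟨p₁, q₁, rfl⟩ := h₁
    obtain ⟨p₂, q₂, rfl⟩ := h₂
    exact ⟨p₁ + p₂, q₁ + q₂, by simp only [map_add]; ring⟩
  | mul_X g i h =>
    obtain ⟨p, q, rfl⟩ := h
    exact ⟨p * X i, q * X i, by simp only [map_mul, map_X]; ring⟩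

theorem exists_eq_map_of_forall_im_eval_eq_zero (g : MvPolynomial σ ℂ)
    (hg : ∀ x : σ → ℝ, (eval (fun j => (x j : ℂ)) g).im = 0) :
    ∃ p : MvPolynomial σ ℝ, g = p.map (algebraMap ℝ ℂ) := by
  obtain ⟨p, q, rfl⟩ := exists_eq_map_add_I_mul_map g
  suffices q = 0 by exact ⟨p, by simp [this]⟩
  refine funext fun x => ?_
  have hx := hg x
  rw [map_add, map_mul, eval_C, eval_ofReal_map, eval_ofReal_map] at hx
  simpa using hx

noncomputable def restrictLine (h : MvPolynomial σ ℂ) (a b : σ → ℂ) : Polynomial ℂ :=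
  aeval (fun j => Polynomial.C (a j) + Polynomial.C (b j) * Polynomial.X) h

theorem eval_restrictLine (h : MvPolynomial σ ℂ) (a b : σ → ℂ) (t : ℂ) :
    (restrictLine h a b).eval t = eval (fun j => a j + b j * t) h := by
  rw [restrictLine, ← Polynomial.coe_aeval_eq_eval, ← AlgHom.comp_apply, comp_aeval,
    ← coe_aeval_eq_eval]
  simp

end MvPolynomial

def IsLowerStable {σ : Type*} (f : MvPolynomial σ ℂ) : Prop :=
  ∀ z : σ → ℂ, (∀ i, (z i).im < 0) → eval z f ≠ 0

section Stability

variable {σ : Type*} {h : MvPolynomial σ ℂ}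

theorem IsStable.C_mul (hs : IsStable h) {c : ℂ} (hc : c ≠ 0) : IsStable (C c * h) := by
  intro z hz
  rw [map_mul, eval_C]
  exact mul_ne_zero hc (hs z hz)

theorem IsLowerStable.C_mul (hl : IsLowerStable h) {c : ℂ} (hc : c ≠ 0) :
    IsLowerStable (C c * h) := by
  intro z hz
  rw [map_mul, eval_C]
  exact mul_ne_zero hc (hl z hz)

theorem IsRealStable.isLowerStable_map {f : MvPolynomial σ ℝ} (hf : IsRealStable f) :
    IsLowerStable (f.map (algebraMap ℝ ℂ)) := by
  intro z hz hzero
  refine hf (fun j => conj (z j)) (fun j => by simpa using hz j) ?_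
  rw [← conj_eval_map_ofReal, hzero, map_zero]

theorem IsStable.exists_pos_eval_add_ne_zero (hs : IsStable h) (m : σ → ℝ) :
    ∃ s : ℝ, 0 < s ∧ eval (fun j => ((m j + s : ℝ) : ℂ)) h ≠ 0 := by
  set q := restrictLine h (fun j => (m j : ℂ)) 1
  have hq : q ≠ 0 := by
    intro hq
    apply hs (fun j => (m j : ℂ) + (1 : σ → ℂ) j * Complex.I) (fun j => by simp)
    rw [← eval_restrictLine]
    change q.eval Complex.I = 0
    rw [hq, Polynomial.eval_zero]
  have hroots : {s : ℝ | q.IsRoot s}.Finite :=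
    (Polynomial.finite_setOfPred_isRoot hq).preimage Complex.ofReal_injective.injOn
  obtain ⟨s, hpos, hs⟩ := ((Set.Ioi_infinite 0).sdiff hroots).nonempty
  refine ⟨s, hpos, fun hzero => hs ?_⟩
  simpa [q, Polynomial.IsRoot, eval_restrictLine] using hzero

theorem im_roots_restrictLine_eq_zero (hs : IsStable h) (hl : IsLowerStable h) (u b : σ → ℝ)
    (hb : ∀ j, 0 < b j) :
    ∀ r ∈ (restrictLine h (fun j => (u j : ℂ)) (fun j => (b j : ℂ))).roots, r.im = 0 := by
  intro r hr
  have hzero := (Polynomial.isRoot_of_mem_roots hr).eq_zero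
  rw [eval_restrictLine] at hzero
  have him : ∀ j, ((u j : ℂ) + b j * r).im = b j * r.im := fun j => by simp
  rcases lt_trichotomy r.im 0 with hneg | hreal | hpos
  · exact absurd hzero (hl _ fun j => by rw [him]; exact mul_neg_of_pos_of_neg (hb j) hneg)
  · exact hreal
  · exact absurd hzero (hs _ fun j => by rw [him]; exact mul_pos (hb j) hpos)

theorem im_conj_eval_mul_eval_eq_zero_of_lt (hs : IsStable h) (hl : IsLowerStable h)
    {u v : σ → ℝ} (huv : ∀ j, u j < v j) :
    (conj (eval (fun j => (u j : ℂ)) h) * eval (fun j => (v j : ℂ)) h).im = 0 := by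
  have hline := Polynomial.im_conj_eval_mul_eval_eq_zero
    (im_roots_restrictLine_eq_zero hs hl u (v - u) fun j => sub_pos.mpr (huv j)) 0 1
  simpa [eval_restrictLine] using hline

theorem exists_ne_zero_forall_im_mul_eval_eq_zero (hs : IsStable h) (hl : IsLowerStable h) :
    ∃ c : ℂ, c ≠ 0 ∧ ∀ x : σ → ℝ, (c * eval (fun j => (x j : ℂ)) h).im = 0 := by
  obtain ⟨s₀, -, hy₀⟩ := hs.exists_pos_eval_add_ne_zero 0
  refine ⟨conj (eval (fun _ => (s₀ : ℂ)) h), by simpa using hy₀, fun x => ?_⟩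
  obtain ⟨s, hpos, hw⟩ := hs.exists_pos_eval_add_ne_zero (fun j => max (x j) s₀)
  have hx := im_conj_eval_mul_eval_eq_zero_of_lt hs hl
    (fun j => lt_add_of_le_of_pos (le_max_left (x j) s₀) hpos)
  have hy := im_conj_eval_mul_eval_eq_zero_of_lt hs hl (u := fun _ => s₀)
    (fun j => lt_add_of_le_of_pos (le_max_right (x j) s₀) hpos)
  exact Complex.im_conj_mul_eq_zero_of_im_conj_mul_eq_zero hw hy hx

end Stability

theorem stmt3_general {n : ℕ} (h : MvPolynomial (Fin n) ℂ) :
    (IsStable h ∧ (∀ z : Fin n → ℂ, (∀ i, (z i).im < 0) → eval z h ≠ 0)) ↔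
      ∃ (c : ℂ) (f : MvPolynomial (Fin n) ℝ), c ≠ 0 ∧ IsRealStable f ∧
        h = C c * f.map (algebraMap ℝ ℂ) := by
  constructor
  · rintro ⟨hs, hl⟩
    obtain ⟨c, hc, hreal⟩ := exists_ne_zero_forall_im_mul_eval_eq_zero hs hl
    obtain ⟨f, hf⟩ := exists_eq_map_of_forall_im_eval_eq_zero (C c * h) (by simpa using hreal)
    refine ⟨c⁻¹, f, inv_ne_zero hc, ?_, ?_⟩
    · rw [IsRealStable, ← hf]
      exact hs.C_mul hc
    · rw [← hf, ← mul_assoc, ← C_mul, inv_mul_cancel₀ hc, C_1, one_mul]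
  · rintro ⟨c, f, hc, hf, rfl⟩
    exact ⟨IsStable.C_mul hf hc, hf.isLowerStable_map.C_mul hc⟩

theorem stmt3 {n : ℕ} (hn : 1 ≤ n) (h : MvPolynomial (Fin n) ℂ) :
    (IsStable h ∧ (∀ z : Fin n → ℂ, (∀ i, (z i).im < 0) → eval z h ≠ 0)) ↔
      ∃ (c : ℂ) (f : MvPolynomial (Fin n) ℝ), c ≠ 0 ∧ IsRealStable f ∧
        h = C c * f.map (algebraMap ℝ ℂ) :=
  stmt3_general h
end

section
/- Let f(z₁,z₂) = a₀₀ + a₀₁·z₂ + a₁₀·z₁ + a₁₁·z₁z₂ ∈ ℝ[z₁,z₂] be a multi-affine real polynomial that is not identically zero. Then f is real stable if and only if a₀₀·a₁₁ − a₀₁·a₁₀ ≤ 0. -/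
open MvPolynomial

theorem stmt4 (a00 a01 a10 a11 : ℝ)
    (hne : (C a00 + C a01 * X 1 + C a10 * X 0 + C a11 * X 0 * X 1 :
      MvPolynomial (Fin 2) ℝ) ≠ 0) :
    IsRealStable
        (C a00 + C a01 * X 1 + C a10 * X 0 + C a11 * X 0 * X 1 : MvPolynomial (Fin 2) ℝ) ↔
      a00 * a11 - a01 * a10 ≤ 0 := by
  have heval : ∀ z : Fin 2 → ℂ,
      eval z ((C a00 + C a01 * X 1 + C a10 * X 0 + C a11 * X 0 * X 1 :
        MvPolynomial (Fin 2) ℝ).map (algebraMap ℝ ℂ)) =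
      (a00 : ℂ) + a01 * z 1 + a10 * z 0 + a11 * z 0 * z 1 := by
    intro z; simp
  constructor
  · -- stable ⇒ D ≤ 0
    intro hst
    by_contra hD
    push_neg at hD
    -- D > 0 : counterexample z = I, w = -(a00 + a10 I)/(a01 + a11 I)
    set c : ℂ := (a01 : ℂ) + a11 * Complex.I with hc
    have hcne : c ≠ 0 := by
      intro h
      rw [hc, Complex.ext_iff] at h
      simp at h
      obtain ⟨e1, e2⟩ := h
      rw [e1, e2] at hD
      simp at hD
    set w : ℂ := -((a00 : ℂ) + a10 * Complex.I) / c with hw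
    have him : 0 < w.im := by
      rw [hw, Complex.div_im]
      have hns : 0 < Complex.normSq c := Complex.normSq_pos.mpr hcne
      have hre : c.re = a01 := by simp [hc]
      have hie : c.im = a11 := by simp [hc]
      have h1 : (-((a00 : ℂ) + a10 * Complex.I)).im = -a10 := by simp
      have h2 : (-((a00 : ℂ) + a10 * Complex.I)).re = -a00 := by simp
      rw [h1, h2, hre, hie]
      have heq2 : -a10 * a01 / Complex.normSq c - -a00 * a11 / Complex.normSq c
          = (a00 * a11 - a01 * a10) / Complex.normSq c := by ring
      rw [heq2]
      exact div_pos hD hns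
    have := hst ![Complex.I, w] (by
      intro i
      fin_cases i
      · simp
      · simpa using him)
    apply this
    rw [heval]
    simp only [Matrix.cons_val_one, Matrix.head_cons, Matrix.cons_val_zero]
    rw [hw]
    field_simp
    ring
  · -- D ≤ 0 ⇒ stable
    intro hD z hz
    rw [heval]
    intro heq
    set Z := z 0 with hZ
    set W := z 1 with hW
    have hy : 0 < Z.im := hz 0
    have hv : 0 < W.im := hz 1
    have hre : a00 + a01 * W.re + a10 * Z.re + (a11 * Z.re * W.re - a11 * Z.im * W.im) = 0 := by
      have := congrArg Complex.re heq
      simpa [Complex.add_re, Complex.mul_re, Complex.mul_im] using this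
    have hie : a01 * W.im + a10 * Z.im + (a11 * Z.re * W.im + a11 * Z.im * W.re) = 0 := by
      have := congrArg Complex.im heq
      simpa [Complex.add_im, Complex.mul_re, Complex.mul_im] using this
    by_cases h01 : a11 = 0 ∧ a01 = 0
    · obtain ⟨h11, h01⟩ := h01
      have h10 : a10 = 0 := by
        rw [h11, h01] at hie; nlinarith
      have h00 : a00 = 0 := by
        rw [h11, h01, h10] at hre; linarith
      apply hne
      rw [h00, h01, h10, h11]
      simp
    · have hpos : 0 < (a01 + a11 * Z.re)^2 + (a11 * Z.im)^2 := by
        rcases (not_and_or.mp h01) with h | h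
        · have : a11 * Z.im ≠ 0 := mul_ne_zero h (ne_of_gt hy)
          positivity
        · by_cases h11 : a11 = 0
          · rw [h11]; simp; positivity
          · have : a11 * Z.im ≠ 0 := mul_ne_zero h11 (ne_of_gt hy)
            positivity
      have key : ((a01 + a11 * Z.re)^2 + (a11 * Z.im)^2) * W.im
          = (a00 * a11 - a01 * a10) * Z.im := by
        linear_combination (a01 + a11 * Z.re) * hie - (a11 * Z.im) * hre
      nlinarith [mul_pos hpos hv, mul_nonneg (neg_nonneg.mpr hD) hy.le]
end

section
/- Let z = (z₁,…,zₙ) and w = (w₁,…,wₙ), and for f, g ∈ ℂ[z,w] define the Weyl product (f⋆g)(z,w) = Σ_{κ∈ℕⁿ} ((−1)^{|κ|}/κ!)·∂_z^κ f(z,w)·∂_w^κ g(z,w). If f and g are stable as polynomials in the 2n variables z₁,…,zₙ,w₁,…,wₙ, then f⋆g is stable; moreover, if f and g are real stable, then f⋆g is real stable. -/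
open MvPolynomial

/-- The partial differential operator `∂^β` acting on polynomials:
`∂^β (z^γ) = (γ)_β z^{γ-β}`. -/
noncomputable def pdPow {σ : Type*} {R : Type*} [CommSemiring R] (β : σ →₀ ℕ)
    (f : MvPolynomial σ R) : MvPolynomial σ R :=
  ∑ γ ∈ f.support, monomial (γ - β)
      (((∏ i ∈ β.support, (γ i).descFactorial (β i) : ℕ) : R) * coeff γ f)

/-- The Weyl product
`(f⋆g)(z,w) = Σ_κ ((−1)^{|κ|}/κ!)·∂_z^κ f(z,w)·∂_w^κ g(z,w)`, where the variables
indexed by `Sum.inl` are the `z`-variables and those indexed by `Sum.inr` are the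
`w`-variables.  (The sum below has finite support, so `∑ᶠ` gives the usual sum.) -/
noncomputable def weylProd {n : ℕ} {R : Type*} [Field R]
    (f g : MvPolynomial (Fin n ⊕ Fin n) R) : MvPolynomial (Fin n ⊕ Fin n) R :=
  ∑ᶠ κ : Fin n →₀ ℕ,
    C ((-1 : R) ^ (κ.sum fun _ m => m) /
        ((κ.prod fun _ m => m.factorial : ℕ) : R)) *
      (pdPow (κ.mapDomain Sum.inl) f * pdPow (κ.mapDomain Sum.inr) g)

section Algebra
variable {σ : Type*} {R : Type*} [CommSemiring R]

theorem coeff_pderiv (i : σ) (m : σ →₀ ℕ) (f : MvPolynomial σ R) :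
    coeff m (pderiv i f) = (((m i + 1 : ℕ)) : R) * coeff (m + Finsupp.single i 1) f := by
  classical
  conv_lhs => rw [f.as_sum]
  rw [map_sum, MvPolynomial.coeff_sum]
  simp only [pderiv_monomial]
  have key : ∀ γ : σ →₀ ℕ, γ ≠ m + Finsupp.single i 1 →
      coeff m (monomial (γ - Finsupp.single i 1) (coeff γ f * (γ i : R))) = 0 := by
    intro γ hγ
    rcases Nat.eq_zero_or_pos (γ i) with h0 | hpos
    · simp [h0]
    · rw [MvPolynomial.coeff_monomial]
      have : γ - Finsupp.single i 1 ≠ m := by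
        intro h
        apply hγ
        have hle : Finsupp.single i 1 ≤ γ := by
          rw [Finsupp.le_def]; intro j
          rcases eq_or_ne j i with rfl | hj
      
          · simpa using Nat.succ_le_of_lt hpos
          · simp [Finsupp.single_apply, Ne.symm hj]
        rw [← h, tsub_add_cancel_of_le hle]
      rw [if_neg this]
  by_cases hmem : m + Finsupp.single i 1 ∈ f.support
  · rw [Finset.sum_eq_single_of_mem (m + Finsupp.single i 1) hmem (fun γ _ h => key γ h)]
    rw [MvPolynomial.coeff_monomial, if_pos (add_tsub_cancel_right _ _)]
    have : ((m + Finsupp.single i 1 : σ →₀ ℕ)) i = m i + 1 := by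
      rw [Finsupp.add_apply, Finsupp.single_eq_same]
    rw [this]
    push_cast
    ring
  · rw [MvPolynomial.notMem_support_iff] at hmem
    rw [hmem, mul_zero]
    refine Finset.sum_eq_zero fun γ hγ => key γ ?_
    intro h; rw [h, MvPolynomial.mem_support_iff, hmem] at hγ; exact hγ rfl

theorem coeff_pdPow (β m : σ →₀ ℕ) (f : MvPolynomial σ R) :
    coeff m (pdPow β f) =
      ((∏ i ∈ β.support, ((m + β) i).descFactorial (β i) : ℕ) : R) * coeff (m + β) f := by
  classical
  have hne : ∀ γ ∈ f.support, γ ≠ m + β → γ - β ≠ m ∨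
      ((∏ i ∈ β.support, (γ i).descFactorial (β i) : ℕ) : R) = 0 := by
    intro γ _ hγ
    by_cases hle : β ≤ γ
    · left
      intro h
      exact hγ (by rw [← h, tsub_add_cancel_of_le hle])
    · right
      rw [Finsupp.le_def] at hle
      push_neg at hle
      obtain ⟨i, hi⟩ := hle
      have hsupp : i ∈ β.support := by
        simp only [Finsupp.mem_support_iff]
        omega
      rw [Finset.prod_eq_zero hsupp (by rw [Nat.descFactorial_eq_zero_iff_lt]; omega)]
      simp
  rw [pdPow]
  rw [MvPolynomial.coeff_sum]
  by_cases hmem : m + β ∈ f.support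
  · rw [Finset.sum_eq_single_of_mem (m + β) hmem]
    · rw [MvPolynomial.coeff_monomial, if_pos (add_tsub_cancel_right m β)]
    · intro γ hγ hne'
      rcases hne γ hγ hne' with h | h
      · rw [MvPolynomial.coeff_monomial, if_neg h]
      · rw [MvPolynomial.coeff_monomial]
        split <;> simp [h]
  · rw [MvPolynomial.notMem_support_iff] at hmem
    rw [hmem, mul_zero]
    refine Finset.sum_eq_zero fun γ hγ => ?_
    rcases hne γ hγ (fun h => by rw [h, MvPolynomial.mem_support_iff, hmem] at hγ; exact hγ rfl)
      with h | h
    · rw [MvPolynomial.coeff_monomial, if_neg h]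
    · rw [MvPolynomial.coeff_monomial]
      split <;> simp [h]

theorem descProd_eq {s : Finset σ} (β m : σ →₀ ℕ) (hs : β.support ⊆ s) :
    (∏ i ∈ β.support, (m i).descFactorial (β i)) = ∏ i ∈ s, (m i).descFactorial (β i) := by
  refine Finset.prod_subset hs fun i _ hi => ?_
  rw [Finsupp.notMem_support_iff] at hi
  simp [hi]

theorem pdPow_zero' (f : MvPolynomial σ R) : pdPow 0 f = f := by
  ext m
  rw [coeff_pdPow]
  simp

theorem pdPow_add_poly (β : σ →₀ ℕ) (f g : MvPolynomial σ R) :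
    pdPow β (f + g) = pdPow β f + pdPow β g := by
  ext m
  simp [coeff_pdPow, MvPolynomial.coeff_add, mul_add]

theorem pdPow_smul {S : Type*} [CommSemiring S] [DistribMulAction S R] [SMulCommClass S R R]
    (β : σ →₀ ℕ) (c : S) (f : MvPolynomial σ R) :
    pdPow β (c • f) = c • pdPow β f := by
  ext m
  simp [coeff_pdPow, MvPolynomial.coeff_smul, mul_smul_comm]

theorem pdPow_zero_poly (β : σ →₀ ℕ) : pdPow β (0 : MvPolynomial σ R) = 0 := by
  ext m; simp [coeff_pdPow]

theorem pdPow_single_one (i : σ) (f : MvPolynomial σ R) :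
    pdPow (Finsupp.single i 1) f = pderiv i f := by
  classical
  ext m
  rw [coeff_pdPow, _root_.coeff_pderiv]
  rw [descProd_eq _ _ (Finsupp.support_single_subset)]
  simp

theorem Nat.descFactorial_add_add (a b c : ℕ) :
    (a + b + c).descFactorial (b + c) =
      (a + b + c).descFactorial c * (a + b).descFactorial b := by
  rw [Nat.descFactorial_eq_prod_range, Nat.descFactorial_eq_prod_range,
    Nat.descFactorial_eq_prod_range]
  rw [add_comm b c, Finset.prod_range_add]
  congr 1
  refine Finset.prod_congr rfl fun i _ => ?_
  omega

theorem pdPow_add (β γ : σ →₀ ℕ) (f : MvPolynomial σ R) :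
    pdPow (β + γ) f = pdPow β (pdPow γ f) := by
  classical
  ext m
  rw [coeff_pdPow, coeff_pdPow, coeff_pdPow]
  rw [descProd_eq (β + γ) _ (Finsupp.support_add),
    descProd_eq β (m + β) (Finset.subset_union_left (s₂ := γ.support)),
    descProd_eq γ (m + β + γ) (Finset.subset_union_right (s₁ := β.support))]
  rw [add_assoc m β γ, ← mul_assoc]
  congr 1
  rw [← Nat.cast_mul, ← Finset.prod_mul_distrib]
  congr 1
  refine Finset.prod_congr rfl fun i _ => ?_
  have h1 : ((β + γ : σ →₀ ℕ)) i = β i + γ i := Finsupp.add_apply β γ i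
  have h2 : ((m + (β + γ) : σ →₀ ℕ)) i = m i + β i + γ i := by
    rw [Finsupp.add_apply, Finsupp.add_apply, add_assoc]
  have h3 : ((m + β : σ →₀ ℕ)) i = m i + β i := Finsupp.add_apply m β i
  rw [h1, h2, h3, Nat.descFactorial_add_add, mul_comm]

theorem pdPow_single_succ (i : σ) (k : ℕ) (f : MvPolynomial σ R) :
    pdPow (Finsupp.single i (k + 1)) f = pderiv i (pdPow (Finsupp.single i k) f) := by
  rw [← pdPow_single_one]
  rw [← pdPow_add]
  rw [← Finsupp.single_add, add_comm 1 k]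

theorem pdPow_eq_zero_of_totalDegree_lt (β : σ →₀ ℕ) (f : MvPolynomial σ R)
    (h : f.totalDegree < β.sum fun _ m => m) : pdPow β f = 0 := by
  ext m
  rw [coeff_pdPow, MvPolynomial.coeff_eq_zero_of_totalDegree_lt, mul_zero, MvPolynomial.coeff_zero]
  calc f.totalDegree < β.sum fun _ m => m := h
    _ ≤ (m + β).sum fun _ m => m := by
        rw [Finsupp.sum_add_index' (fun _ => rfl) (fun _ _ _ => rfl)]
        omega
    _ = ∑ i ∈ (m + β).support, (m + β) i := by rw [Finsupp.sum]

theorem totalDegree_pdPow_le (β : σ →₀ ℕ) (f : MvPolynomial σ R) :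
    (pdPow β f).totalDegree ≤ f.totalDegree := by
  rw [MvPolynomial.totalDegree]
  refine Finset.sup_le fun m hm => ?_
  rw [MvPolynomial.mem_support_iff, coeff_pdPow] at hm
  have : coeff (m + β) f ≠ 0 := fun h => hm (by rw [h, mul_zero])
  calc (m.sum fun _ e => e) ≤ ((m + β).sum fun _ e => e) := by
        rw [Finsupp.sum_add_index' (fun _ => rfl) (fun _ _ _ => rfl)]; omega
    _ ≤ f.totalDegree := MvPolynomial.le_totalDegree (by rwa [MvPolynomial.mem_support_iff])

theorem pderiv_comm (a b : σ) (f : MvPolynomial σ R) :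
    pderiv a (pderiv b f) = pderiv b (pderiv a f) := by
  classical
  ext m
  rw [_root_.coeff_pderiv, _root_.coeff_pderiv, _root_.coeff_pderiv, _root_.coeff_pderiv]
  rcases eq_or_ne a b with rfl | hab
  · rfl
  · have h1 : ((m + Finsupp.single a 1 : σ →₀ ℕ)) b = m b := by
      rw [Finsupp.add_apply, Finsupp.single_apply, if_neg hab, add_zero]
    have h2 : ((m + Finsupp.single b 1 : σ →₀ ℕ)) a = m a := by
      rw [Finsupp.add_apply, Finsupp.single_apply, if_neg (Ne.symm hab), add_zero]
    rw [h1, h2, add_right_comm]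
    push_cast
    ring

end Algebra

section Rename
variable {σ : Type*} {τ : Type*} {R : Type*} [CommSemiring R]

theorem pderiv_rename_zero {φ : σ → τ} {i : τ} (hi : i ∉ Set.range φ)
    (f : MvPolynomial σ R) : pderiv i (rename φ f) = 0 := by
  classical
  ext m
  rw [_root_.coeff_pderiv, MvPolynomial.coeff_zero]
  rw [MvPolynomial.coeff_rename_eq_zero]
  · ring
  · intro u hu
    exfalso
    have hmem : i ∈ (Finsupp.mapDomain φ u).support := by
      rw [hu, Finsupp.mem_support_iff]
      have : ((m + Finsupp.single i 1 : τ →₀ ℕ)) i = m i + 1 := by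
        rw [Finsupp.add_apply, Finsupp.single_eq_same]
      omega
    have := Finsupp.mapDomain_support hmem
    rw [Finset.mem_image] at this
    obtain ⟨x, _, hx⟩ := this
    exact hi ⟨x, hx⟩

theorem pdPow_single_rename {φ : σ → τ} (hφ : Function.Injective φ) (a : σ) (b : ℕ)
    (f : MvPolynomial σ R) :
    pdPow (Finsupp.single (φ a) b) (rename φ f) = rename φ (pdPow (Finsupp.single a b) f) := by
  induction b with
  | zero => simp [pdPow_zero']
  | succ k ih => rw [pdPow_single_succ, ih, pdPow_single_succ, pderiv_rename hφ]

theorem pdPow_rename {φ : σ → τ} (hφ : Function.Injective φ) (μ : σ →₀ ℕ)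
    (f : MvPolynomial σ R) :
    pdPow (Finsupp.mapDomain φ μ) (rename φ f) = rename φ (pdPow μ f) := by
  classical
  induction μ using Finsupp.induction with
  | zero => simp [pdPow_zero']
  | single_add a b ν _ hb ih =>
      rw [Finsupp.mapDomain_add, Finsupp.mapDomain_single, pdPow_add, ih,
        pdPow_single_rename hφ, ← pdPow_add]

theorem pdPow_single_mul_right (a : σ) (b : ℕ) (P Q : MvPolynomial σ R)
    (hQ : pderiv a Q = 0) :
    pdPow (Finsupp.single a b) (P * Q) = pdPow (Finsupp.single a b) P * Q := by
  induction b with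
  | zero => simp [pdPow_zero']
  | succ k ih => rw [pdPow_single_succ, ih, pdPow_single_succ, pderiv_mul, hQ, mul_zero, add_zero]

theorem pdPow_mul_right (μ : σ →₀ ℕ) (P Q : MvPolynomial σ R)
    (hQ : ∀ i ∈ μ.support, pderiv i Q = 0) :
    pdPow μ (P * Q) = pdPow μ P * Q := by
  classical
  induction μ using Finsupp.induction with
  | zero => simp [pdPow_zero']
  | single_add a b ν ha' hb ih =>
      have hsupp : (Finsupp.single a b + ν).support = {a} ∪ ν.support := by
        rw [Finsupp.support_add_eq, Finsupp.support_single_ne_zero a hb]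
        rw [Finsupp.support_single_ne_zero a hb]
        simpa using ha'
      rw [pdPow_add, ih (fun i hi => hQ i (by rw [hsupp]; exact Finset.mem_union_right _ hi)),
        pdPow_single_mul_right _ _ _ _ (hQ a (by rw [hsupp]; simp)), ← pdPow_add]

theorem map_pdPow {S : Type*} [CommSemiring S] (φ : R →+* S) (μ : σ →₀ ℕ)
    (f : MvPolynomial σ R) :
    MvPolynomial.map φ (pdPow μ f) = pdPow μ (MvPolynomial.map φ f) := by
  ext m
  rw [MvPolynomial.coeff_map, coeff_pdPow, coeff_pdPow, MvPolynomial.coeff_map]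
  rw [map_mul, map_natCast]

end Rename

theorem multiset_logDeriv (t0 : ℂ) (s : Multiset ℂ)
    (h : ((s.map fun r => Polynomial.X - Polynomial.C r).prod).eval t0 ≠ 0) :
    (Polynomial.derivative ((s.map fun r => Polynomial.X - Polynomial.C r).prod)).eval t0 /
      ((s.map fun r => Polynomial.X - Polynomial.C r).prod).eval t0 = (s.map fun r => (t0 - r)⁻¹).sum := by
  induction s using Multiset.induction_on with
  | empty => simp
  | cons r s ih =>
      rw [Multiset.map_cons, Multiset.prod_cons] at h ⊢
      rw [Multiset.map_cons, Multiset.sum_cons]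
      rw [Polynomial.eval_mul] at h
      have h1 : (Polynomial.X - Polynomial.C r).eval t0 ≠ 0 := fun hh => h (by rw [hh, zero_mul])
      have h2 : ((s.map fun r => Polynomial.X - Polynomial.C r).prod).eval t0 ≠ 0 := fun hh => h (by rw [hh, mul_zero])
      rw [Polynomial.derivative_mul, Polynomial.derivative_X_sub_C]
      rw [Polynomial.eval_add, Polynomial.eval_mul, Polynomial.eval_mul, Polynomial.eval_one]
      rw [← ih h2]
      have h3 : (Polynomial.X - Polynomial.C r).eval t0 = t0 - r := by simp
      rw [h3] at h1 ⊢
      simp only [Polynomial.eval_mul, h3]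
      rw [inv_eq_one_div, div_add_div _ _ h1 h2]

theorem im_logDeriv_lt (q : Polynomial ℂ)
    (hstable : ∀ t : ℂ, 0 < t.im → q.eval t ≠ 0) (t0 : ℂ) (ht0 : 0 < t0.im)
    (hq : q ≠ 0) :
    (q.derivative.eval t0 / q.eval t0).im ≤ 0 ∧
      (q.derivative ≠ 0 → (q.derivative.eval t0 / q.eval t0).im < 0) := by
  have hcard : Multiset.card q.roots = q.natDegree :=
    Polynomial.splits_iff_card_roots.mp (IsAlgClosed.splits q)
  have hfact := (Polynomial.C_leadingCoeff_mul_prod_multiset_X_sub_C (p := q) hcard).symm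
  have hL : q.leadingCoeff ≠ 0 := Polynomial.leadingCoeff_ne_zero.mpr hq
  have hq0 : q.eval t0 ≠ 0 := hstable t0 ht0
  have hP : ((q.roots.map fun r => Polynomial.X - Polynomial.C r).prod).eval t0 ≠ 0 := by
    intro hh
    apply hq0
    rw [hfact, Polynomial.eval_mul, hh, mul_zero]
  have hratio : q.derivative.eval t0 / q.eval t0
      = (q.roots.map fun r => (t0 - r)⁻¹).sum := by
    rw [← multiset_logDeriv t0 q.roots hP]
    conv_lhs => rw [hfact]
    rw [Polynomial.derivative_C_mul, Polynomial.eval_mul, Polynomial.eval_mul, Polynomial.eval_C]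
    rw [mul_div_mul_left _ _ hL]
  have hterm : ∀ r ∈ q.roots, ((t0 - r)⁻¹).im < 0 := by
    intro r hr
    have hroot : q.eval r = 0 := (Polynomial.isRoot_of_mem_roots hr)
    have him : ¬ 0 < r.im := fun hh => hstable r hh hroot
    have hpos : 0 < (t0 - r).im := by
      rw [Complex.sub_im]; push_neg at him; linarith
    rw [Complex.inv_im]
    apply div_neg_of_neg_of_pos
    · linarith
    · have : t0 - r ≠ 0 := fun hh => by rw [hh] at hpos; simp at hpos
      exact Complex.normSq_pos.mpr this
  have hsum : ∀ s : Multiset ℂ, (∀ r ∈ s, ((t0 - r)⁻¹).im < 0) →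
      ((s.map fun r => (t0 - r)⁻¹).sum).im ≤ 0 ∧
        (s ≠ 0 → ((s.map fun r => (t0 - r)⁻¹).sum).im < 0) := by
    intro s
    induction s using Multiset.induction_on with
    | empty => simp
    | cons r s ih =>
        intro hmem
        have := ih (fun r hr => hmem r (Multiset.mem_cons_of_mem hr))
        rw [Multiset.map_cons, Multiset.sum_cons]
        rw [Complex.add_im]
        have h1 := hmem r (Multiset.mem_cons_self r s)
        constructor
        · linarith [this.1]
        · intro _; linarith [this.1]
  constructor
  · rw [hratio]; exact (hsum q.roots hterm).1
  · intro hd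
    rw [hratio]
    apply (hsum q.roots hterm).2
    intro hroots
    have : q.natDegree = 0 := by rw [← hcard, hroots]; simp
    obtain ⟨a, rfl⟩ := Polynomial.natDegree_eq_zero.mp this
    simp at hd

theorem B_eq_zero_of_ratio (A B : Polynomial ℂ)
    (hA : ∀ y : ℂ, 0 < y.im → A.eval y ≠ 0)
    (him : ∀ y : ℂ, 0 < y.im → ((B.eval y) / (A.eval y)).im ≤ 0)
    (y0 : ℂ) (hy0 : 0 < y0.im) (hB0 : B.eval y0 = 0) : B = 0 := by
  set U : Set ℂ := {y : ℂ | 0 < y.im} with hU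
  have hUopen : IsOpen U := isOpen_lt continuous_const Complex.continuous_im
  have hUpre : IsPreconnected U := (convex_halfSpace_im_gt 0).isPreconnected
  set φ : ℂ → ℂ := fun y => B.eval y / A.eval y with hφ
  have hφim : ∀ y ∈ U, (φ y).im ≤ 0 := fun y hy => him y hy
  have hφdiff : DifferentiableOn ℂ φ U :=
    (B.differentiable.differentiableOn).div (A.differentiable.differentiableOn)
      fun y hy => hA y hy
  have hdenom : ∀ y ∈ U, φ y - Complex.I ≠ 0 := by
    intro y hy h
    have h1 : φ y = Complex.I := by linear_combination h
    have h2 := hφim y hy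
    rw [h1, Complex.I_im] at h2
    linarith
  set ψ : ℂ → ℂ := fun y => (φ y + Complex.I) / (φ y - Complex.I) with hψ
  have hψdiff : DifferentiableOn ℂ ψ U :=
    ((hφdiff.add (differentiableOn_const _)).div
      (hφdiff.sub (differentiableOn_const _)) hdenom)
  have key : ∀ z : ℂ, z.im ≤ 0 → ‖z + Complex.I‖ ≤ ‖z - Complex.I‖ := by
    intro z hz
    rw [Complex.norm_def, Complex.norm_def]
    apply Real.sqrt_le_sqrt
    simp only [Complex.normSq_apply, Complex.add_re, Complex.add_im, Complex.sub_re,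
      Complex.sub_im, Complex.I_re, Complex.I_im]
    nlinarith
  have hψnorm : ∀ y ∈ U, ‖ψ y‖ ≤ 1 := by
    intro y hy
    rw [hψ]
    simp only [norm_div]
    exact div_le_one_of_le₀ (key _ (hφim y hy)) (norm_nonneg _)
  have hφ0 : φ y0 = 0 := by rw [hφ]; simp [hB0]
  have hψ0 : ψ y0 = -1 := by
    rw [hψ]
    simp only [hφ0, zero_add, zero_sub]
    rw [div_neg, div_self Complex.I_ne_zero]
  have hy0U : y0 ∈ U := hy0
  have hmax : IsMaxOn (norm ∘ ψ) U y0 := by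
    intro y hy
    simp only [Function.comp_apply, hψ0, norm_neg, norm_one]
    exact hψnorm y hy
  have heq := Complex.eqOn_of_isPreconnected_of_isMaxOn_norm hUpre hUopen hψdiff hy0U hmax
  have hBzero : ∀ y ∈ U, B.eval y = 0 := by
    intro y hy
    have h1 : ψ y = -1 := by
      have := heq hy
      rwa [Function.const_apply, hψ0] at this
    rw [hψ] at h1
    rw [div_eq_iff (hdenom y hy)] at h1
    have hφy : φ y = 0 := by linear_combination h1 / 2
    rw [hφ] at hφy
    rcases div_eq_zero_iff.mp hφy with h | h
    · exact h
    · exact absurd h (hA y hy)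
  apply Polynomial.eq_zero_of_infinite_isRoot
  apply Set.infinite_of_injective_forall_mem
    (f := fun k : ℕ => ((k : ℝ) + 1) * Complex.I)
  case hi =>
    intro j k hjk
    have h1 : ((j : ℝ) + 1 : ℂ) = ((k : ℝ) + 1 : ℂ) :=
      mul_right_cancel₀ Complex.I_ne_zero hjk
    have h2 := congrArg Complex.re h1
    simp at h2
    exact_mod_cast h2
  case hf =>
    intro k
    apply hBzero
    show 0 < (((k : ℝ) + 1) * Complex.I).im
    simp [Complex.mul_im]
    positivity

noncomputable def restrictVar {σ : Type*} [DecidableEq σ] (v : σ → ℂ) (b : σ)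
    (f : MvPolynomial σ ℂ) : Polynomial ℂ :=
  MvPolynomial.aeval (fun s => if s = b then Polynomial.X else Polynomial.C (v s)) f

theorem restrictVar_eval {σ : Type*} [DecidableEq σ] (v : σ → ℂ) (b : σ)
    (f : MvPolynomial σ ℂ) (t : ℂ) :
    (restrictVar v b f).eval t = eval (Function.update v b t) f := by
  induction f using MvPolynomial.induction_on with
  | C a => simp [restrictVar]
  | add p q hp hq => simp only [restrictVar, map_add, Polynomial.eval_add] at *; rw [hp, hq]
  | mul_X p s hp =>
      simp only [restrictVar, map_mul, aeval_X, Polynomial.eval_mul] at *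
      rw [hp]
      congr 1
      rcases eq_or_ne s b with rfl | hsb
      · simp
      · simp [hsb, Function.update_of_ne hsb]

theorem restrictVar_pderiv {σ : Type*} [DecidableEq σ] (v : σ → ℂ) (b : σ)
    (f : MvPolynomial σ ℂ) :
    restrictVar v b (pderiv b f) = Polynomial.derivative (restrictVar v b f) := by
  induction f using MvPolynomial.induction_on with
  | C a => simp [restrictVar, pderiv_C]
  | add p q hp hq => simp only [restrictVar, map_add] at *; rw [hp, hq]
  | mul_X p s hp =>
      rw [pderiv_mul]
      rcases eq_or_ne s b with rfl | hsb
      · rw [pderiv_X_self, mul_one]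
        simp only [restrictVar, map_add, map_mul, aeval_X, if_pos rfl] at *
        rw [hp, Polynomial.derivative_mul]
        simp
      · rw [pderiv_X_of_ne hsb, mul_zero, add_zero]
        simp only [restrictVar, map_mul, aeval_X, if_neg hsb] at *
        rw [hp, Polynomial.derivative_mul, Polynomial.derivative_C, mul_zero, add_zero]

section MLS
variable {σ : Type*} [DecidableEq σ]

theorem update_pos_im {v : σ → ℂ} (hv : ∀ i, 0 < (v i).im) {b : σ} {t : ℂ}
    (ht : 0 < t.im) : ∀ i, 0 < ((Function.update v b t) i).im := by
  intro i
  rw [Function.update_apply]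
  split
  · exact ht
  · exact hv i

theorem lieb_sokal {f : MvPolynomial σ ℂ} (hf : IsStable f) {a b : σ} (hab : a ≠ b)
    {c : ℝ} (hc : 0 ≤ c) :
    IsStable (f - C (c : ℂ) * pderiv a (pderiv b f)) := by
  intro v hv
  rw [map_sub, eval_mul, eval_C]
  set A := restrictVar v b f with hA_def
  set B := restrictVar v b (pderiv a f) with hB_def
  have hA : ∀ t : ℂ, 0 < t.im → A.eval t ≠ 0 := by
    intro t ht
    rw [hA_def, restrictVar_eval]
    exact hf _ (update_pos_im hv ht)
  have hBA : ∀ y : ℂ, 0 < y.im →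
      B.eval y = eval (Function.update v b y) (pderiv a f) ∧
      A.eval y = eval (Function.update v b y) f := by
    intro y hy
    exact ⟨by rw [hB_def, restrictVar_eval], by rw [hA_def, restrictVar_eval]⟩
  have him : ∀ y : ℂ, 0 < y.im → ((B.eval y) / (A.eval y)).im ≤ 0 := by
    intro y hy
    set w := Function.update v b y with hw_def
    have hw : ∀ i, 0 < (w i).im := update_pos_im hv hy
    set q := restrictVar w a f with hq_def
    have hqstable : ∀ t : ℂ, 0 < t.im → q.eval t ≠ 0 := by
      intro t ht
      rw [hq_def, restrictVar_eval]
      exact hf _ (update_pos_im hw ht)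
    have hwa : w a = v a := by rw [hw_def, Function.update_of_ne hab]
    have hqva : q.eval (v a) = eval w f := by
      rw [hq_def, restrictVar_eval, ← hwa, Function.update_eq_self]
    have hq0 : q ≠ 0 := by
      intro h
      apply hf w hw
      rw [← hqva, h, Polynomial.eval_zero]
    have hlog := (im_logDeriv_lt q hqstable (v a) (hv a) hq0).1
    have hqd : q.derivative.eval (v a) = eval w (pderiv a f) := by
      rw [← restrictVar_pderiv, restrictVar_eval, ← hwa, Function.update_eq_self]
    rw [hqd, hqva] at hlog
    rw [(hBA y hy).1, (hBA y hy).2]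
    exact hlog
  intro hval
  -- the value is zero; derive a contradiction
  have evA : A.eval (v b) = eval v f := by
    rw [hA_def, restrictVar_eval, Function.update_eq_self]
  have evB' : (Polynomial.derivative B).eval (v b) = eval v (pderiv a (pderiv b f)) := by
    rw [← restrictVar_pderiv, restrictVar_eval, Function.update_eq_self, pderiv_comm]
  have hAvb : A.eval (v b) ≠ 0 := hA (v b) (hv b)
  rcases eq_or_ne ((Polynomial.derivative B).eval (v b)) 0 with hB'0 | hB'0
  · rw [hB'0] at evB'
    rw [← evB', mul_zero, sub_zero] at hval
    exact hf v hv hval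
  · have hcpos : 0 < c := by
      rcases hc.lt_or_eq with h | h
      · exact h
      · exfalso
        rw [← h, Complex.ofReal_zero, zero_mul, sub_zero] at hval
        exact hf v hv hval
    have hBne : B ≠ 0 := by
      intro h
      rw [h] at hB'0
      simp at hB'0
    have hBstable : ∀ t : ℂ, 0 < t.im → B.eval t ≠ 0 := by
      intro t ht
      intro hzero
      exact hBne (B_eq_zero_of_ratio A B hA him t ht hzero)
    have hBd : B.derivative ≠ 0 := by
      intro h
      rw [h] at hB'0
      simp at hB'0
    have hβ := (im_logDeriv_lt B hBstable (v b) (hv b) hBne).2 hBd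
    have hφ0 := him (v b) (hv b)
    have hBvb : B.eval (v b) ≠ 0 := hBstable (v b) (hv b)
    -- key equation
    set β := B.derivative.eval (v b) / B.eval (v b) with hβdef
    set φ0 := B.eval (v b) / A.eval (v b) with hφ0def
    have hEq : (c : ℂ) * β * φ0 = 1 := by
      rw [hβdef, hφ0def]
      have hstep : (c : ℂ) * (B.derivative.eval (v b) / B.eval (v b)) *
          (B.eval (v b) / A.eval (v b)) =
          ((c : ℂ) * B.derivative.eval (v b)) / A.eval (v b) := by
        field_simp
      have h1 : eval v f = (c : ℂ) * (Polynomial.derivative B).eval (v b) := by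
        rw [evB']
        linear_combination hval
      rw [hstep, ← h1, ← evA, div_self hAvb]
    have him' := congrArg Complex.im hEq
    have hre' := congrArg Complex.re hEq
    simp only [Complex.mul_im, Complex.mul_re, Complex.ofReal_re, Complex.ofReal_im,
      Complex.one_im, Complex.one_re, zero_mul, sub_zero, add_zero, zero_add] at him' hre'
    set b1 := β.re with hb1def
    set b2 := β.im with hb2def
    set p1 := φ0.re with hp1def
    set p2 := φ0.im with hp2def
    have hb2 : b2 < 0 := hβ
    have hp2le : p2 ≤ 0 := hφ0
    have key : -(c * b2) * (p1 ^ 2 + p2 ^ 2) = p2 := by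
      linear_combination p2 * hre' - p1 * him'
    have hcb2 : 0 < -(c * b2) := by nlinarith
    have hprod : 0 ≤ -(c * b2) * (p1 ^ 2 + p2 ^ 2) :=
      mul_nonneg hcb2.le (by positivity)
    have hp2 : p2 = 0 := le_antisymm hp2le (by linarith)
    have hp1 : p1 = 0 := by
      have h5 : -(c * b2) * (p1 ^ 2) = 0 := by
        rw [hp2] at key
        linear_combination key
      have h6 : p1 ^ 2 = 0 := by
        rcases mul_eq_zero.mp h5 with h | h
        · exact absurd h (by linarith)
        · exact h
      exact pow_eq_zero_iff (by norm_num) |>.mp h6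
    rw [hp1, hp2] at hre'
    simp at hre'
end MLS
section Hurwitz
variable {τ : Type*} [Fintype τ]

noncomputable def polyOfPath (v y : τ → ℂ) (f : MvPolynomial τ ℂ) : Polynomial ℂ :=
  MvPolynomial.aeval (fun s => Polynomial.C (v s) + Polynomial.X * Polynomial.C (y s - v s)) f

theorem polyOfPath_eval (v y : τ → ℂ) (f : MvPolynomial τ ℂ) (t : ℂ) :
    (polyOfPath v y f).eval t = eval (fun s => v s + t * (y s - v s)) f := by
  induction f using MvPolynomial.induction_on with
  | C a => simp [polyOfPath]
  | add p q hp hq => simp only [polyOfPath, map_add, Polynomial.eval_add] at *; rw [hp, hq]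
  | mul_X p s hp =>
      simp only [polyOfPath, map_mul, aeval_X, Polynomial.eval_mul, eval_mul, eval_X] at *
      rw [hp]
      simp

theorem hurwitz_stable (p : ℕ → MvPolynomial τ ℂ) (q : MvPolynomial τ ℂ)
    (S : Finset (τ →₀ ℕ))
    (hsupp : ∀ N, (p N).support ⊆ S) (hqsupp : q.support ⊆ S)
    (hst : ∀ N, IsStable (p N))
    (hconv : ∀ m, Filter.Tendsto (fun N => coeff m (p N)) Filter.atTop (nhds (coeff m q)))
    (hq0 : q ≠ 0) : IsStable q := by
  classical
  intro v hv hzero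
  -- a point where q does not vanish
  have hy : ∃ y : τ → ℂ, eval y q ≠ 0 := by
    by_contra h
    push_neg at h
    exact hq0 (MvPolynomial.funext fun x => by rw [h x, map_zero])
  obtain ⟨y, hy⟩ := hy
  set w : ℂ → τ → ℂ := fun t s => v s + t * (y s - v s) with hw_def
  set Q : Polynomial ℂ := polyOfPath v y q with hQ_def
  set P : ℕ → Polynomial ℂ := fun N => polyOfPath v y (p N) with hP_def
  have hQeval : ∀ t, Q.eval t = eval (w t) q := fun t => polyOfPath_eval v y q t
  have hPeval : ∀ N t, (P N).eval t = eval (w t) (p N) := fun N t => polyOfPath_eval v y (p N) t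
  have hQ1 : Q.eval 1 ≠ 0 := by
    rw [hQeval]
    have : w 1 = y := by funext s; simp [hw_def]
    rwa [this]
  have hQne : Q ≠ 0 := fun h => hQ1 (by rw [h, Polynomial.eval_zero])
  have hQ0 : Q.eval 0 = 0 := by
    rw [hQeval]
    have : w 0 = v := by funext s; simp [hw_def]
    rwa [this]
  set T : Set ℂ := {t : ℂ | ∀ s, 0 < (w t s).im} with hT_def
  have hTopen : IsOpen T := by
    rw [hT_def]
    have : {t : ℂ | ∀ s, 0 < (w t s).im} = ⋂ s, {t : ℂ | 0 < (w t s).im} := by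
      ext t; simp
    rw [this]
    refine isOpen_iInter_of_finite fun s => ?_
    exact isOpen_lt continuous_const
      (Complex.continuous_im.comp (continuous_const.add (continuous_id.mul continuous_const)))
  have h0T : (0 : ℂ) ∈ T := by
    intro s
    simp only [hw_def, zero_mul, add_zero]
    exact hv s
  obtain ⟨ε, hε, hball⟩ := Metric.isOpen_iff.mp hTopen 0 h0T
  set r := ε / 2 with hr_def
  have hrpos : 0 < r := by positivity
  have hrT : Metric.closedBall (0 : ℂ) r ⊆ T :=
    (Metric.closedBall_subset_ball (by rw [hr_def]; linarith)).trans hball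
  -- bound on monomial evaluations along the path
  set G : (τ →₀ ℕ) → ℂ → ℂ := fun m t => ∏ i, (w t i) ^ (m i) with hG_def
  have hGcont : ∀ m, Continuous (G m) := by
    intro m
    refine continuous_finset_prod _ fun i _ => ?_
    exact ((continuous_const.add (continuous_id.mul continuous_const))).pow _
  have hGbound : ∀ m : τ →₀ ℕ, ∃ C : ℝ, 0 ≤ C ∧
      ∀ t ∈ Metric.closedBall (0 : ℂ) r, ‖G m t‖ ≤ C := by
    intro m
    obtain ⟨C, hC⟩ := (isCompact_closedBall (0 : ℂ) r).exists_bound_of_continuousOn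
      (hGcont m).continuousOn
    refine ⟨max C 0, le_max_right _ _, fun t ht => (hC t ht).trans (le_max_left _ _)⟩
  choose Cm hCm0 hCm using hGbound
  set u : ℕ → ℝ := fun N => ∑ m ∈ S, ‖coeff m (p N) - coeff m q‖ * Cm m with hu_def
  have hu0 : Filter.Tendsto u Filter.atTop (nhds 0) := by
    have : Filter.Tendsto (fun N => ∑ m ∈ S, ‖coeff m (p N) - coeff m q‖ * Cm m)
        Filter.atTop (nhds (∑ m ∈ S, 0)) := by
      refine tendsto_finset_sum _ fun m _ => ?_
      have h1 : Filter.Tendsto (fun N => coeff m (p N) - coeff m q) Filter.atTop (nhds 0) := by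
        have := (hconv m).sub (tendsto_const_nhds (x := coeff m q))
        simpa using this
      have h2 : Filter.Tendsto (fun N => ‖coeff m (p N) - coeff m q‖) Filter.atTop (nhds 0) :=
        (tendsto_norm_zero).comp h1
      have := h2.mul_const (Cm m)
      simpa using this
    simpa using this
  -- uniform bound on closed ball
  have hdiff : ∀ N, ∀ t ∈ Metric.closedBall (0 : ℂ) r, ‖(P N).eval t - Q.eval t‖ ≤ u N := by
    intro N t ht
    have hPt : (P N).eval t = ∑ m ∈ S, coeff m (p N) * G m t := by
      rw [hPeval, MvPolynomial.eval_eq']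
      exact Finset.sum_subset (hsupp N) fun m _ hm => by
        rw [MvPolynomial.notMem_support_iff.mp hm, zero_mul]
    have hQt : Q.eval t = ∑ m ∈ S, coeff m q * G m t := by
      rw [hQeval, MvPolynomial.eval_eq']
      exact Finset.sum_subset hqsupp fun m _ hm => by
        rw [MvPolynomial.notMem_support_iff.mp hm, zero_mul]
    rw [hPt, hQt, ← Finset.sum_sub_distrib]
    refine (norm_sum_le _ _).trans ?_
    refine Finset.sum_le_sum fun m _ => ?_
    rw [← sub_mul, norm_mul]
    exact mul_le_mul_of_nonneg_left (hCm m t ht) (norm_nonneg _)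
  -- for each small radius there is a root of Q on the sphere
  have hroot : ∀ k : ℕ, ∃ t : ℂ, ‖t‖ = r / (k + 1) ∧ Q.eval t = 0 := by
    intro k
    set ρ := r / (k + 1) with hρ_def
    have hρpos : 0 < ρ := by positivity
    have hρler : ρ ≤ r := by
      rw [hρ_def]
      rw [div_le_iff₀ (by positivity)]
      nlinarith
    have hsub : Metric.closedBall (0 : ℂ) ρ ⊆ Metric.closedBall 0 r :=
      Metric.closedBall_subset_closedBall hρler
    have hPne : ∀ N, ∀ t ∈ Metric.closedBall (0 : ℂ) ρ, (P N).eval t ≠ 0 := by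
      intro N t ht
      rw [hPeval]
      exact hst N (w t) (hrT (hsub ht))
    -- minimum of ‖Q‖ on the sphere
    obtain ⟨t0, ht0mem, ht0min⟩ := (isCompact_sphere (0 : ℂ) ρ).exists_isMinOn
      (NormedSpace.sphere_nonempty.mpr hρpos.le)
      (Q.continuous.norm.continuousOn)
    refine ⟨t0, by simpa using ht0mem, ?_⟩
    -- show ‖Q.eval t0‖ ≤ 2 * u N for every N
    have hkey : ∀ N, ‖Q.eval t0‖ ≤ 2 * u N := by
      intro N
      -- minimum of ‖P N‖ on the sphere
      obtain ⟨t1, ht1mem, ht1min⟩ := (isCompact_sphere (0 : ℂ) ρ).exists_isMinOn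
        (NormedSpace.sphere_nonempty.mpr hρpos.le)
        ((P N).continuous.norm.continuousOn)
      have hsphere_ball : Metric.sphere (0 : ℂ) ρ ⊆ Metric.closedBall 0 ρ :=
        Metric.sphere_subset_closedBall
      have ht1pos : 0 < ‖(P N).eval t1‖ :=
        norm_pos_iff.mpr (hPne N t1 (hsphere_ball ht1mem))
      -- minimum modulus principle: ‖P N 0‖ ≥ ‖P N t1‖
      have hmaxmod : ‖(P N).eval t1‖ ≤ ‖(P N).eval 0‖ := by
        set g : ℂ → ℂ := fun t => ((P N).eval t)⁻¹ with hg_def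
        have hgd : DiffContOnCl ℂ g (Metric.ball 0 ρ) := by
          constructor
          · exact (((P N).differentiable.differentiableOn).inv
              fun t ht => hPne N t (Metric.ball_subset_closedBall ht))
          · rw [closure_ball _ hρpos.ne']
            exact ((P N).continuous.continuousOn).inv₀ fun t ht => hPne N t ht
        have hfront : ∀ z ∈ frontier (Metric.ball (0 : ℂ) ρ), ‖g z‖ ≤ ‖(P N).eval t1‖⁻¹ := by
          rw [frontier_ball _ hρpos.ne']
          intro z hz
          rw [hg_def]
          simp only [norm_inv]
          exact inv_anti₀ ht1pos (ht1min hz)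
        have h0cl : (0 : ℂ) ∈ closure (Metric.ball (0 : ℂ) ρ) := by
          rw [closure_ball _ hρpos.ne']
          exact Metric.mem_closedBall_self hρpos.le
        have := Complex.norm_le_of_forall_mem_frontier_norm_le
          Metric.isBounded_ball hgd hfront h0cl
        rw [hg_def] at this
        simp only [norm_inv] at this
        have hP0pos : 0 < ‖(P N).eval 0‖ :=
          norm_pos_iff.mpr (hPne N 0 (Metric.mem_closedBall_self hρpos.le))
        rwa [inv_le_inv₀ hP0pos ht1pos] at this
      have h0ball : (0 : ℂ) ∈ Metric.closedBall (0 : ℂ) r :=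
        Metric.mem_closedBall_self hrpos.le
      have ht1ball : t1 ∈ Metric.closedBall (0 : ℂ) r := hsub (hsphere_ball ht1mem)
      have e1 : ‖Q.eval t0‖ ≤ ‖Q.eval t1‖ := ht0min ht1mem
      have e2 : ‖Q.eval t1‖ ≤ ‖(P N).eval t1‖ + u N := by
        have := hdiff N t1 ht1ball
        have h4 : ‖Q.eval t1‖ - ‖(P N).eval t1‖ ≤ ‖Q.eval t1 - (P N).eval t1‖ :=
          norm_sub_norm_le _ _
        have h5 : ‖Q.eval t1 - (P N).eval t1‖ = ‖(P N).eval t1 - Q.eval t1‖ := norm_sub_rev _ _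
        linarith [h4, h5.le, h5.ge]
      have e3 : ‖(P N).eval 0‖ ≤ u N := by
        have := hdiff N 0 h0ball
        rw [hQ0, sub_zero] at this
        exact this
      linarith
    have : Filter.Tendsto (fun N => 2 * u N) Filter.atTop (nhds 0) := by
      have := hu0.const_mul 2
      simpa using this
    have hle : ‖Q.eval t0‖ ≤ 0 := ge_of_tendsto' this hkey
    have : ‖Q.eval t0‖ = 0 := le_antisymm hle (norm_nonneg _)
    exact norm_eq_zero.mp this
  choose troot htnorm htzero using hroot
  have : Q = 0 := by
    apply Polynomial.eq_zero_of_infinite_isRoot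
    refine Set.infinite_of_injective_forall_mem (f := troot) ?_ fun k => htzero k
    intro j k hjk
    have := congrArg norm hjk
    rw [htnorm j, htnorm k] at this
    field_simp at this
    exact_mod_cast (add_right_cancel this).symm
  exact hQne this

end Hurwitz
section ExpOp
open Filter
variable {σ : Type*}

/-- The operator `exp(-∂ₐ∂_b)` applied to `f`. -/
noncomputable def expOp (a b : σ) (f : MvPolynomial σ ℂ) : MvPolynomial σ ℂ :=
  ∑ᶠ k : ℕ, ((-1 : ℂ) ^ k * ((k.factorial : ℂ))⁻¹) •
    pdPow (Finsupp.single a k + Finsupp.single b k) f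

theorem single_add_single_sum (a b : σ) (k : ℕ) :
    ((Finsupp.single a k + Finsupp.single b k).sum fun _ m => m) = k + k := by
  rw [Finsupp.sum_add_index' (fun _ => rfl) (fun _ _ _ => rfl)]
  rw [Finsupp.sum_single_index rfl, Finsupp.sum_single_index rfl]

theorem pdPow_single_pair_zero {a b : σ} {k : ℕ} {f : MvPolynomial σ ℂ} {d : ℕ}
    (hd : f.totalDegree ≤ d) (hk : d < k) :
    pdPow (Finsupp.single a k + Finsupp.single b k) f = 0 := by
  apply pdPow_eq_zero_of_totalDegree_lt
  rw [single_add_single_sum]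
  omega

theorem expOp_eq_sum (a b : σ) (f : MvPolynomial σ ℂ) {d : ℕ} (hd : f.totalDegree ≤ d) :
    expOp a b f = ∑ k ∈ Finset.range (d + 1),
      ((-1 : ℂ) ^ k * ((k.factorial : ℂ))⁻¹) •
        pdPow (Finsupp.single a k + Finsupp.single b k) f := by
  apply finsum_eq_finset_sum_of_support_subset
  intro k hk
  simp only [Function.mem_support] at hk
  simp only [Finset.coe_range, Set.mem_Iio]
  by_contra h
  push_neg at h
  rw [pdPow_single_pair_zero hd (by omega), smul_zero] at hk
  exact hk rfl

theorem expOp_ne_zero (a b : σ) {f : MvPolynomial σ ℂ} (hf : f ≠ 0) : expOp a b f ≠ 0 := by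
  classical
  obtain ⟨m, hmem, hm⟩ := Finset.exists_mem_eq_sup f.support
    (MvPolynomial.support_nonempty.mpr hf) (fun s => s.sum fun _ e => e)
  have hcoeffm : coeff m f ≠ 0 := MvPolynomial.mem_support_iff.mp hmem
  intro h
  apply hcoeffm
  have h2 : coeff m (expOp a b f) = 0 := by rw [h, MvPolynomial.coeff_zero]
  rw [expOp_eq_sum a b f (le_refl f.totalDegree)] at h2
  rw [MvPolynomial.coeff_sum] at h2
  rw [Finset.sum_eq_single_of_mem 0 (Finset.mem_range.mpr (by omega))] at h2
  · simpa [pdPow_zero'] using h2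
  · intro k _ hk
    rw [MvPolynomial.coeff_smul, coeff_pdPow]
    rw [MvPolynomial.coeff_eq_zero_of_totalDegree_lt, mul_zero, smul_zero]
    have hsum : ((m + (Finsupp.single a k + Finsupp.single b k)).sum fun _ e => e)
        = f.totalDegree + (k + k) := by
      rw [Finsupp.sum_add_index' (fun _ => rfl) (fun _ _ _ => rfl), single_add_single_sum, ← hm]
      have htd : f.totalDegree = f.support.sup fun s => s.sum fun _ e => e := rfl
      omega
    rw [Finsupp.sum] at hsum
    rw [hsum]
    omega

/-- The composite derivative `∂ₐ ∘ ∂_b` as a linear endomorphism. -/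
noncomputable def pdEnd (a b : σ) : Module.End ℂ (MvPolynomial σ ℂ) :=
  ((pderiv a : Derivation ℂ (MvPolynomial σ ℂ) (MvPolynomial σ ℂ)).toLinearMap).comp
    ((pderiv b : Derivation ℂ (MvPolynomial σ ℂ) (MvPolynomial σ ℂ)).toLinearMap)

theorem pdEnd_apply (a b : σ) (f : MvPolynomial σ ℂ) :
    pdEnd a b f = pderiv a (pderiv b f) := rfl

theorem pdEnd_pow_apply (a b : σ) (k : ℕ) (f : MvPolynomial σ ℂ) :
    ((pdEnd a b) ^ k) f = pdPow (Finsupp.single a k + Finsupp.single b k) f := by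
  induction k generalizing f with
  | zero => simp [pdPow_zero']
  | succ j ih =>
      rw [pow_succ', Module.End.mul_apply, pdEnd_apply]
      have h1 : Finsupp.single a (j + 1) + Finsupp.single b (j + 1) =
          (Finsupp.single a 1 + Finsupp.single b 1) + (Finsupp.single a j + Finsupp.single b j) := by
        rw [Finsupp.single_add, Finsupp.single_add]
        abel
      have h2 : ∀ g : MvPolynomial σ ℂ, pdPow (Finsupp.single a 1 + Finsupp.single b 1) g
          = pderiv a (pderiv b g) := by
        intro g
        rw [pdPow_add, pdPow_single_one, pdPow_single_one]
      rw [h1, pdPow_add (Finsupp.single a 1 + Finsupp.single b 1), h2, ih]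

theorem approx_expand (a b : σ) (c : ℂ) (N : ℕ) (f : MvPolynomial σ ℂ) :
    (((1 : Module.End ℂ (MvPolynomial σ ℂ)) - c • pdEnd a b) ^ N) f =
      ∑ k ∈ Finset.range (N + 1), ((N.choose k : ℂ) * (-c) ^ k) •
        pdPow (Finsupp.single a k + Finsupp.single b k) f := by
  have h1 : (1 : Module.End ℂ (MvPolynomial σ ℂ)) - c • pdEnd a b
      = (-(c • pdEnd a b)) + 1 := by abel
  rw [h1, (Commute.one_right (-(c • pdEnd a b))).add_pow]
  have h2 : ∀ k, (-(c • pdEnd a b)) ^ k = (-c) ^ k • (pdEnd a b) ^ k := by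
    intro k
    have h0 : -(c • pdEnd a b) = (-c) • pdEnd a b := (neg_smul c (pdEnd a b)).symm
    rw [h0, smul_pow]
  rw [LinearMap.coe_sum, Finset.sum_apply]
  refine Finset.sum_congr rfl fun k hk => ?_
  rw [one_pow, mul_one, h2]
  rw [Module.End.mul_apply, LinearMap.smul_apply]
  rw [Module.End.natCast_apply]
  rw [map_nsmul]
  rw [pdEnd_pow_apply]
  rw [← Nat.cast_smul_eq_nsmul ℂ]
  rw [smul_smul]
  congr 1
  ring

theorem tendsto_choose_mul_inv_pow (k : ℕ) :
    Tendsto (fun N : ℕ => (N.choose k : ℝ) * ((N : ℝ)⁻¹) ^ k) atTop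
      (nhds ((k.factorial : ℝ)⁻¹)) := by
  have hprod : Tendsto (fun N : ℕ => ∏ i ∈ Finset.range k, (1 - (i : ℝ) / N)) atTop
      (nhds 1) := by
    have h1 : Tendsto (fun N : ℕ => ∏ i ∈ Finset.range k, (1 - (i : ℝ) / N)) atTop
        (nhds (∏ _i ∈ Finset.range k, (1 : ℝ))) := by
      refine tendsto_finset_prod _ fun i _ => ?_
      have h2 : Tendsto (fun N : ℕ => (i : ℝ) / N) atTop (nhds 0) :=
        tendsto_const_div_atTop_nhds_zero_nat (i : ℝ)
      have := (tendsto_const_nhds (x := (1:ℝ)) (f := atTop)).sub h2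
      simpa using this
    simpa using h1
  have heq : (fun N : ℕ => ∏ i ∈ Finset.range k, (1 - (i : ℝ) / N)) =ᶠ[atTop]
      (fun N : ℕ => (N.descFactorial k : ℝ) * ((N : ℝ)⁻¹) ^ k) := by
    filter_upwards [eventually_ge_atTop k, eventually_gt_atTop 0] with N hN hN0
    have hNne : (N : ℝ) ≠ 0 := Nat.cast_ne_zero.mpr (by omega)
    have hpow : ((N : ℝ)⁻¹) ^ k = ∏ _i ∈ Finset.range k, (N : ℝ)⁻¹ := by
      rw [Finset.prod_const, Finset.card_range]
    rw [Nat.descFactorial_eq_prod_range, Nat.cast_prod, hpow, ← Finset.prod_mul_distrib]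
    refine (Finset.prod_congr rfl fun i hi => ?_).symm
    have h1 : i ≤ N := le_trans (Finset.mem_range.mp hi).le hN
    rw [Nat.cast_sub h1]
    field_simp
  have hdesc : Tendsto (fun N : ℕ => (N.descFactorial k : ℝ) * ((N : ℝ)⁻¹) ^ k) atTop
      (nhds 1) := Tendsto.congr' heq hprod
  have hchoose : ∀ N : ℕ, (N.choose k : ℝ) * ((N : ℝ)⁻¹) ^ k
      = ((N.descFactorial k : ℝ) * ((N : ℝ)⁻¹) ^ k) / (k.factorial : ℝ) := by
    intro N
    have h1 : (N.descFactorial k : ℝ) = (k.factorial : ℝ) * (N.choose k : ℝ) := by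
      exact_mod_cast congrArg (Nat.cast (R := ℝ)) (Nat.descFactorial_eq_factorial_mul_choose N k)
    rw [h1]
    have hkne : (k.factorial : ℝ) ≠ 0 := Nat.cast_ne_zero.mpr k.factorial_ne_zero
    field_simp
  have := hdesc.div_const (k.factorial : ℝ)
  rw [one_div] at this
  exact this.congr fun N => (hchoose N).symm

theorem tendsto_coeff_approx (a b : σ) (f : MvPolynomial σ ℂ) (m : σ →₀ ℕ) :
    Tendsto (fun N : ℕ =>
        coeff m ((((1 : Module.End ℂ (MvPolynomial σ ℂ)) -
          (((N : ℝ) : ℂ))⁻¹ • pdEnd a b) ^ N) f))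
      atTop (nhds (coeff m (expOp a b f))) := by
  set d := f.totalDegree with hd_def
  have htarget : coeff m (expOp a b f) = ∑ k ∈ Finset.range (d + 1),
      ((-1 : ℂ) ^ k * ((k.factorial : ℂ))⁻¹) *
        coeff m (pdPow (Finsupp.single a k + Finsupp.single b k) f) := by
    rw [expOp_eq_sum a b f (le_refl _), MvPolynomial.coeff_sum]
    exact Finset.sum_congr rfl fun k _ => by rw [MvPolynomial.coeff_smul, smul_eq_mul]
  rw [htarget]
  have heq : (fun N : ℕ => ∑ k ∈ Finset.range (d + 1),
          ((N.choose k : ℂ) * (-(((N : ℝ) : ℂ))⁻¹) ^ k) *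
            coeff m (pdPow (Finsupp.single a k + Finsupp.single b k) f)) =ᶠ[atTop]
      (fun N : ℕ => coeff m ((((1 : Module.End ℂ (MvPolynomial σ ℂ)) -
          (((N : ℝ) : ℂ))⁻¹ • pdEnd a b) ^ N) f)) := by
    filter_upwards [eventually_ge_atTop d] with N hN
    symm
    rw [approx_expand, MvPolynomial.coeff_sum]
    rw [← Finset.sum_subset (Finset.range_subset_range.mpr (by omega : d + 1 ≤ N + 1))]
    · exact Finset.sum_congr rfl fun k _ => by rw [MvPolynomial.coeff_smul, smul_eq_mul]
    · intro k hk hk2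
      rw [pdPow_single_pair_zero (le_refl _) (by
          simp only [Finset.mem_range] at hk hk2
          omega), smul_zero, MvPolynomial.coeff_zero]
  apply Tendsto.congr' heq
  refine tendsto_finset_sum _ fun k _ => ?_
  refine Tendsto.mul_const _ ?_
  have hreal := tendsto_choose_mul_inv_pow k
  have hcomp := (Complex.continuous_ofReal.tendsto _).comp hreal
  have heq2 : (fun N : ℕ => ((((N : ℕ).choose k : ℝ) * ((N : ℝ)⁻¹) ^ k : ℝ) : ℂ))
      = fun N : ℕ => ((N.choose k : ℂ) * ((((N : ℝ)) : ℂ))⁻¹ ^ k) := by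
    funext N
    push_cast
    ring
  have hlim : Tendsto (fun N : ℕ => ((N.choose k : ℂ) * ((((N : ℝ)) : ℂ))⁻¹ ^ k)) atTop
      (nhds (((k.factorial : ℝ)⁻¹ : ℝ) : ℂ)) := by
    rw [← heq2]
    exact hcomp
  have hfinal : Tendsto (fun N : ℕ => ((N.choose k : ℂ) * (-((((N : ℝ)) : ℂ))⁻¹) ^ k)) atTop
      (nhds ((-1 : ℂ) ^ k * ((k.factorial : ℂ))⁻¹)) := by
    have : ∀ N : ℕ, ((N.choose k : ℂ) * (-((((N : ℝ)) : ℂ))⁻¹) ^ k)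
        = (-1 : ℂ) ^ k * ((N.choose k : ℂ) * ((((N : ℝ)) : ℂ))⁻¹ ^ k) := by
      intro N
      rw [neg_pow]
      ring
    rw [funext this]
    have := hlim.const_mul ((-1 : ℂ) ^ k)
    convert this using 2
    push_cast
    ring
  exact hfinal

end ExpOp

section ExpStab
open Filter
variable {σ : Type*} [Fintype σ] [DecidableEq σ]

theorem approx_apply (a b : σ) (c : ℝ) (g : MvPolynomial σ ℂ) :
    (((1 : Module.End ℂ (MvPolynomial σ ℂ)) - ((c : ℂ)) • pdEnd a b)) g
      = g - C (c : ℂ) * pderiv a (pderiv b g) := by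
  rw [LinearMap.sub_apply, Module.End.one_apply, LinearMap.smul_apply, pdEnd_apply]
  rw [MvPolynomial.smul_eq_C_mul]

theorem approx_stable {a b : σ} (hab : a ≠ b) {c : ℝ} (hc : 0 ≤ c) (N : ℕ)
    {f : MvPolynomial σ ℂ} (hf : IsStable f) :
    IsStable ((((1 : Module.End ℂ (MvPolynomial σ ℂ)) - ((c : ℂ)) • pdEnd a b) ^ N) f) := by
  induction N with
  | zero => simpa using hf
  | succ j ih =>
      rw [pow_succ', Module.End.mul_apply, approx_apply]
      exact lieb_sokal ih hab hc

theorem expOp_stable {a b : σ} (hab : a ≠ b) {f : MvPolynomial σ ℂ} (hf : IsStable f) :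
    IsStable (expOp a b f) := by
  classical
  set d := f.totalDegree with hd_def
  set S : Finset (σ →₀ ℕ) := (Finset.range (d + 1)).biUnion
    (fun k => (pdPow (Finsupp.single a k + Finsupp.single b k) f).support) with hS_def
  set p : ℕ → MvPolynomial σ ℂ := fun N =>
    (((1 : Module.End ℂ (MvPolynomial σ ℂ)) - (((N : ℝ) : ℂ))⁻¹ • pdEnd a b) ^ N) f with hp_def
  have hkey : ∀ (m : σ →₀ ℕ), m ∉ S →
      ∀ k : ℕ, coeff m (pdPow (Finsupp.single a k + Finsupp.single b k) f) = 0 := by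
    intro m hm k
    by_cases hk : k ≤ d
    · by_contra hne
      exact hm (Finset.mem_biUnion.mpr ⟨k, Finset.mem_range.mpr (by omega),
        MvPolynomial.mem_support_iff.mpr hne⟩)
    · rw [pdPow_single_pair_zero (le_refl _) (by omega), MvPolynomial.coeff_zero]
  have hsupp : ∀ N, (p N).support ⊆ S := by
    intro N m hm
    rw [MvPolynomial.mem_support_iff] at hm
    by_contra hmS
    apply hm
    have hpN : p N = (((1 : Module.End ℂ (MvPolynomial σ ℂ)) -
        (((N : ℝ) : ℂ))⁻¹ • pdEnd a b) ^ N) f := rfl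
    rw [hpN, approx_expand, MvPolynomial.coeff_sum]
    refine Finset.sum_eq_zero fun k _ => ?_
    rw [MvPolynomial.coeff_smul, hkey m hmS k, smul_zero]
  have hqsupp : (expOp a b f).support ⊆ S := by
    intro m hm
    rw [MvPolynomial.mem_support_iff] at hm
    by_contra hmS
    apply hm
    rw [expOp_eq_sum a b f (le_refl _), MvPolynomial.coeff_sum]
    refine Finset.sum_eq_zero fun k _ => ?_
    rw [MvPolynomial.coeff_smul, hkey m hmS k, smul_zero]
  have hstab : ∀ N, IsStable (p N) := by
    intro N
    have hpN : p N = (((1 : Module.End ℂ (MvPolynomial σ ℂ)) -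
        (((N : ℝ) : ℂ))⁻¹ • pdEnd a b) ^ N) f := rfl
    have hio : ((((N : ℝ) : ℂ))⁻¹) = ((((N : ℝ)⁻¹ : ℝ)) : ℂ) := by push_cast; ring
    rw [hpN, hio]
    exact approx_stable hab (by positivity) N hf
  have hfne : f ≠ 0 := by
    intro h
    exact hf (fun _ => Complex.I) (fun _ => by simp) (by rw [h, map_zero])
  exact hurwitz_stable p (expOp a b f) S hsupp hqsupp hstab
    (fun m => tendsto_coeff_approx a b f m) (expOp_ne_zero a b hfne)

end ExpStab

section Assembly
variable {n : ℕ}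

theorem pdPow_finset_sum {σ R ι : Type*} [CommSemiring R] (β : σ →₀ ℕ) (s : Finset ι)
    (F : ι → MvPolynomial σ R) :
    pdPow β (∑ i ∈ s, F i) = ∑ i ∈ s, pdPow β (F i) := by
  classical
  induction s using Finset.induction with
  | empty => simp [pdPow_zero_poly]
  | insert _ _ hx ih =>
      rw [Finset.sum_insert hx, Finset.sum_insert hx, pdPow_add_poly, ih]

/-- The constant box `(d,…,d)`. -/
noncomputable def boxB (n d : ℕ) : Fin n →₀ ℕ := Finsupp.equivFunOnFinite.symm (fun _ => d)

theorem mem_Iic_boxB {d : ℕ} {κ : Fin n →₀ ℕ} :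
    κ ∈ Finset.Iic (boxB n d) ↔ ∀ i, κ i ≤ d := by
  rw [Finset.mem_Iic, Finsupp.le_def]
  exact Iff.rfl

/-- Indices with support constrained to a list. -/
noncomputable def TS (n d : ℕ) (js : List (Fin n)) : Finset (Fin n →₀ ℕ) :=
  (Finset.Iic (boxB n d)).filter (fun κ => ∀ j, j ∉ js → κ j = 0)

theorem mem_TS {d : ℕ} {js : List (Fin n)} {κ : Fin n →₀ ℕ} :
    κ ∈ TS n d js ↔ (∀ i, κ i ≤ d) ∧ (∀ j, j ∉ js → κ j = 0) := by
  rw [TS, Finset.mem_filter, mem_Iic_boxB]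

/-- The doubled index `(κ on the z variables) + (κ on the v variables)`. -/
noncomputable def extK (κ : Fin n →₀ ℕ) : ((Fin n ⊕ Fin n) ⊕ (Fin n ⊕ Fin n)) →₀ ℕ :=
  Finsupp.mapDomain (Sum.inl ∘ Sum.inl) κ + Finsupp.mapDomain (Sum.inr ∘ Sum.inr) κ

theorem TS_nil (d : ℕ) : TS n d [] = {0} := by
  ext κ
  rw [mem_TS, Finset.mem_singleton]
  constructor
  · rintro ⟨-, h2⟩
    ext i
    exact h2 i List.not_mem_nil
  · rintro rfl
    exact ⟨fun i => by simp, fun j _ => rfl⟩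

theorem cconst_zero : ((-1 : ℂ) ^ (0:ℕ) * (((0:ℕ).factorial : ℂ))⁻¹) = 1 := by norm_num

theorem fold_expand (d : ℕ) (js : List (Fin n)) (hnd : js.Nodup)
    (H : MvPolynomial ((Fin n ⊕ Fin n) ⊕ (Fin n ⊕ Fin n)) ℂ) (hH : H.totalDegree ≤ d) :
    js.foldr (fun j h => expOp (Sum.inl (Sum.inl j)) (Sum.inr (Sum.inr j)) h) H
      = ∑ κ ∈ TS n d js,
          (κ.prod fun _ m => (-1 : ℂ) ^ m * ((m.factorial : ℂ))⁻¹) • pdPow (extK κ) H := by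
  classical
  induction js with
  | nil =>
      rw [List.foldr_nil, TS_nil, Finset.sum_singleton]
      rw [show (0 : Fin n →₀ ℕ).prod (fun _ m => (-1 : ℂ) ^ m * ((m.factorial : ℂ))⁻¹) = 1
        from Finsupp.prod_zero_index]
      rw [show extK (0 : Fin n →₀ ℕ) = 0 by rw [extK]; simp [Finsupp.mapDomain_zero]]
      rw [pdPow_zero', one_smul]
  | cons j l ih =>
      have hj : j ∉ l := (List.nodup_cons.mp hnd).1
      have hl : l.Nodup := (List.nodup_cons.mp hnd).2
      rw [List.foldr_cons, ih hl]
      set G := ∑ κ ∈ TS n d l,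
          (κ.prod fun _ m => (-1 : ℂ) ^ m * ((m.factorial : ℂ))⁻¹) • pdPow (extK κ) H with hG
      have hGdeg : G.totalDegree ≤ d := by
        rw [hG]
        refine (MvPolynomial.totalDegree_finset_sum _ _).trans (Finset.sup_le fun κ _ => ?_)
        exact (MvPolynomial.totalDegree_smul_le _ _).trans
          ((totalDegree_pdPow_le _ _).trans hH)
      rw [expOp_eq_sum _ _ _ hGdeg]
      have hterm : ∀ k, ((-1 : ℂ) ^ k * ((k.factorial : ℂ))⁻¹) •
          pdPow (Finsupp.single (Sum.inl (Sum.inl j)) k +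
            Finsupp.single (Sum.inr (Sum.inr j)) k) G
          = ∑ κ ∈ TS n d l,
              (((-1 : ℂ) ^ k * ((k.factorial : ℂ))⁻¹) *
                (κ.prod fun _ m => (-1 : ℂ) ^ m * ((m.factorial : ℂ))⁻¹)) •
              pdPow (Finsupp.single (Sum.inl (Sum.inl j)) k +
                Finsupp.single (Sum.inr (Sum.inr j)) k + extK κ) H := by
        intro k
        rw [hG, pdPow_finset_sum, Finset.smul_sum]
        refine Finset.sum_congr rfl fun κ _ => ?_
        rw [pdPow_smul, ← pdPow_add, smul_smul]
      rw [Finset.sum_congr rfl fun k _ => hterm k]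
      rw [← Finset.sum_product']
      refine Finset.sum_nbij' (fun x => x.2 + Finsupp.single j x.1)
        (fun κ => (κ j, κ.erase j)) ?_ ?_ ?_ ?_ ?_
      · rintro ⟨k, κ⟩ hx
        dsimp only
        rw [Finset.mem_product, Finset.mem_range] at hx
        obtain ⟨hk, hκ⟩ := hx
        rw [mem_TS] at hκ ⊢
        have hκj : κ j = 0 := hκ.2 j hj
        constructor
        · intro i
          rcases eq_or_ne i j with rfl | hij
          · rw [Finsupp.add_apply, hκj, Finsupp.single_eq_same, zero_add]
            omega
          · rw [Finsupp.add_apply, Finsupp.single_apply, if_neg (Ne.symm hij), add_zero]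
            exact hκ.1 i
        · intro i hi
          have hij : i ≠ j := fun h => hi (h ▸ List.mem_cons_self (a := j) (l := l))
          have hil : i ∉ l := fun h => hi (List.mem_cons_of_mem j h)
          rw [Finsupp.add_apply, Finsupp.single_apply, if_neg (Ne.symm hij), add_zero]
          exact hκ.2 i hil
      · intro κ hκ
        rw [mem_TS] at hκ
        rw [Finset.mem_product, Finset.mem_range, mem_TS]
        refine ⟨by have := hκ.1 j; omega, fun i => ?_, fun i hi => ?_⟩
        · rcases eq_or_ne i j with rfl | hij
          · rw [Finsupp.erase_same]; omega
          · rw [Finsupp.erase_ne hij]; exact hκ.1 i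
        · rcases eq_or_ne i j with rfl | hij
          · rw [Finsupp.erase_same]
          · rw [Finsupp.erase_ne hij]
            exact hκ.2 i (fun h => hi (by
              rcases List.mem_cons.mp h with h1 | h2
              · exact absurd h1 hij
              · exact h2))
      · rintro ⟨k, κ⟩ hx
        dsimp only
        rw [Finset.mem_product, mem_TS] at hx
        have hκj : κ j = 0 := hx.2.2 j hj
        have h1 : (κ + Finsupp.single j k) j = k := by
          rw [Finsupp.add_apply, hκj, Finsupp.single_eq_same, zero_add]
        have h2 : (κ + Finsupp.single j k).erase j = κ := by
          ext i
          rcases eq_or_ne i j with rfl | hij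
          · rw [Finsupp.erase_same, hκj]
          · rw [Finsupp.erase_ne hij, Finsupp.add_apply, Finsupp.single_apply,
              if_neg (Ne.symm hij), add_zero]
        show ((κ + Finsupp.single j k) j, (κ + Finsupp.single j k).erase j) = (k, κ)
        rw [h1, h2]
      · intro κ hκ
        show κ.erase j + Finsupp.single j (κ j) = κ
        rw [add_comm]
        exact Finsupp.single_add_erase j κ
      · rintro ⟨k, κ⟩ hx
        dsimp only
        rw [Finset.mem_product, mem_TS] at hx
        have hκj : κ j = 0 := hx.2.2 j hj
        have hdisj : Disjoint κ.support (Finsupp.single j k).support := by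
          rw [Finset.disjoint_right]
          intro i hi
          have : i = j := by
            by_contra hij
            simp [Finsupp.single_apply, Ne.symm hij] at hi
          subst this
          simp [hκj]
        have hprod : ((κ + Finsupp.single j k).prod fun _ m =>
            (-1 : ℂ) ^ m * ((m.factorial : ℂ))⁻¹)
            = (κ.prod fun _ m => (-1 : ℂ) ^ m * ((m.factorial : ℂ))⁻¹) *
              ((-1 : ℂ) ^ k * ((k.factorial : ℂ))⁻¹) := by
          rw [Finsupp.prod_add_index_of_disjoint hdisj]
          congr 1
          exact Finsupp.prod_single_index (by norm_num)
        have hext : extK (κ + Finsupp.single j k)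
            = Finsupp.single (Sum.inl (Sum.inl j)) k +
              Finsupp.single (Sum.inr (Sum.inr j)) k + extK κ := by
          rw [extK, extK, Finsupp.mapDomain_add, Finsupp.mapDomain_add,
            Finsupp.mapDomain_single, Finsupp.mapDomain_single]
          simp only [Function.comp_apply]
          abel
        rw [hprod, hext]
        congr 1
        ring

end Assembly

section Final
variable {n : ℕ}

theorem isStable_rename {σ τ : Type*} (φ : σ → τ) {f : MvPolynomial σ ℂ}
    (hf : IsStable f) : IsStable (rename φ f) := by
  intro v hv
  rw [eval_rename]
  exact hf (v ∘ φ) (fun i => hv (φ i))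

theorem isStable_mul {σ : Type*} {f g : MvPolynomial σ ℂ}
    (hf : IsStable f) (hg : IsStable g) : IsStable (f * g) := by
  intro v hv
  rw [eval_mul]
  exact mul_ne_zero (hf v hv) (hg v hv)

theorem TS_finRange (d : ℕ) : TS n d (List.finRange n) = Finset.Iic (boxB n d) := by
  rw [TS]
  apply Finset.filter_true_of_mem
  intro κ _ j hj
  exact absurd (List.mem_finRange j) hj

theorem totalDegree_map_le' {σ : Type*} {R S : Type*} [CommSemiring R] [CommSemiring S]
    (φ : R →+* S) (f : MvPolynomial σ R) :
    (MvPolynomial.map φ f).totalDegree ≤ f.totalDegree := by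
  rw [MvPolynomial.totalDegree]
  refine Finset.sup_le fun m hm => ?_
  rw [MvPolynomial.mem_support_iff, MvPolynomial.coeff_map] at hm
  refine MvPolynomial.le_totalDegree (MvPolynomial.mem_support_iff.mpr fun h => hm ?_)
  rw [h, map_zero]

theorem sum_mapDomain_eq {σ τ : Type*} (φ : σ → τ) (κ : σ →₀ ℕ) :
    ((Finsupp.mapDomain φ κ).sum fun _ m => m) = κ.sum fun _ m => m :=
  Finsupp.sum_mapDomain_index (fun _ => rfl) (fun _ _ _ => rfl)

theorem weylProd_term_zero {R : Type*} [Field R] {d : ℕ}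
    {f : MvPolynomial (Fin n ⊕ Fin n) R} (hf : f.totalDegree ≤ d)
    {κ : Fin n →₀ ℕ} (hκ : κ ∉ Finset.Iic (boxB n d)) :
    pdPow (κ.mapDomain Sum.inl) f = 0 := by
  rw [mem_Iic_boxB] at hκ
  push_neg at hκ
  obtain ⟨i, hi⟩ := hκ
  apply pdPow_eq_zero_of_totalDegree_lt
  rw [sum_mapDomain_eq]
  have hmem : i ∈ κ.support := Finsupp.mem_support_iff.mpr (by omega)
  have : κ i ≤ κ.sum fun _ m => m := by
    rw [Finsupp.sum]
    exact Finset.single_le_sum (fun _ _ => Nat.zero_le _) hmem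
  omega

theorem weylProd_eq_sum {R : Type*} [Field R] {d : ℕ}
    (f g : MvPolynomial (Fin n ⊕ Fin n) R) (hf : f.totalDegree ≤ d) :
    weylProd f g = ∑ κ ∈ Finset.Iic (boxB n d),
      C ((-1 : R) ^ (κ.sum fun _ m => m) /
          ((κ.prod fun _ m => m.factorial : ℕ) : R)) *
        (pdPow (κ.mapDomain Sum.inl) f * pdPow (κ.mapDomain Sum.inr) g) := by
  apply finsum_eq_finset_sum_of_support_subset
  intro κ hκ
  simp only [Function.mem_support] at hκ
  by_contra h
  rw [Finset.mem_coe] at h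
  rw [weylProd_term_zero hf h, zero_mul, mul_zero] at hκ
  exact hκ rfl

theorem cconst_prod (κ : Fin n →₀ ℕ) :
    (κ.prod fun _ m => (-1 : ℂ) ^ m * ((m.factorial : ℂ))⁻¹)
      = (-1 : ℂ) ^ (κ.sum fun _ m => m) /
          ((κ.prod fun _ m => m.factorial : ℕ) : ℂ) := by
  rw [Finsupp.prod, Finsupp.sum, Finsupp.prod]
  rw [Finset.prod_mul_distrib, Finset.prod_pow_eq_pow_sum]
  rw [div_eq_mul_inv]
  congr 1
  rw [Nat.cast_prod, ← Finset.prod_inv_distrib]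

/-- splitting the `z`- and `v`-derivatives of the product over disjoint variables. -/
theorem pdPow_extK_mul (κ : Fin n →₀ ℕ) (f g : MvPolynomial (Fin n ⊕ Fin n) ℂ) :
    pdPow (extK κ) (rename Sum.inl f * rename Sum.inr g)
      = rename Sum.inl (pdPow (κ.mapDomain Sum.inl) f) *
        rename Sum.inr (pdPow (κ.mapDomain Sum.inr) g) := by
  classical
  rw [extK, pdPow_add]
  have h1 : pdPow (Finsupp.mapDomain (Sum.inr ∘ Sum.inr) κ)
      (rename Sum.inl f * rename Sum.inr g)
      = rename Sum.inl f * rename Sum.inr (pdPow (κ.mapDomain Sum.inr) g) := by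
    rw [mul_comm, pdPow_mul_right, mul_comm]
    · congr 1
      rw [Finsupp.mapDomain_comp, pdPow_rename Sum.inr_injective]
    · intro i hi
      have := Finsupp.mapDomain_support hi
      rw [Finset.mem_image] at this
      obtain ⟨x, -, hx⟩ := this
      refine pderiv_rename_zero ?_ f
      rintro ⟨y, hy⟩
      rw [← hx] at hy
      exact Sum.inl_ne_inr hy
  rw [h1, pdPow_mul_right]
  · congr 1
    rw [Finsupp.mapDomain_comp, pdPow_rename Sum.inl_injective]
  · intro i hi
    have := Finsupp.mapDomain_support hi
    rw [Finset.mem_image] at this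
    obtain ⟨x, -, hx⟩ := this
    refine pderiv_rename_zero ?_ (pdPow (κ.mapDomain Sum.inr) g)
    rintro ⟨y, hy⟩
    rw [← hx] at hy
    exact Sum.inr_ne_inl hy

theorem rename_elim_mul (P Q : MvPolynomial (Fin n ⊕ Fin n) ℂ) :
    rename (Sum.elim id id) (rename Sum.inl P * rename Sum.inr Q) = P * Q := by
  rw [map_mul, rename_rename, rename_rename]
  have h1 : (Sum.elim id id ∘ Sum.inl : (Fin n ⊕ Fin n) → (Fin n ⊕ Fin n)) = id := rfl
  have h2 : (Sum.elim id id ∘ Sum.inr : (Fin n ⊕ Fin n) → (Fin n ⊕ Fin n)) = id := rfl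
  rw [h1, h2, rename_id, AlgHom.id_apply, AlgHom.id_apply]

theorem weylProd_eq_fold (f g : MvPolynomial (Fin n ⊕ Fin n) ℂ) :
    weylProd f g = rename (Sum.elim id id)
      ((List.finRange n).foldr
        (fun j h => expOp (Sum.inl (Sum.inl j)) (Sum.inr (Sum.inr j)) h)
        (rename Sum.inl f * rename Sum.inr g)) := by
  classical
  set d := f.totalDegree + g.totalDegree with hd
  have hH : (rename Sum.inl f * rename Sum.inr g).totalDegree ≤ d := by
    refine (MvPolynomial.totalDegree_mul _ _).trans ?_
    exact add_le_add (MvPolynomial.totalDegree_rename_le _ _)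
      (MvPolynomial.totalDegree_rename_le _ _)
  rw [fold_expand d (List.finRange n) (List.nodup_finRange n) _ hH, TS_finRange]
  rw [weylProd_eq_sum f g (by omega : f.totalDegree ≤ d)]
  rw [map_sum]
  refine Finset.sum_congr rfl fun κ _ => ?_
  rw [map_smul, pdPow_extK_mul, rename_elim_mul, ← cconst_prod, MvPolynomial.smul_eq_C_mul]

theorem weylProd_stable (f g : MvPolynomial (Fin n ⊕ Fin n) ℂ)
    (hf : IsStable f) (hg : IsStable g) : IsStable (weylProd f g) := by
  rw [weylProd_eq_fold]
  apply isStable_rename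
  have : ∀ js : List (Fin n),
      IsStable ((js).foldr
        (fun j h => expOp (Sum.inl (Sum.inl j)) (Sum.inr (Sum.inr j)) h)
        (rename Sum.inl f * rename Sum.inr g)) := by
    intro js
    induction js with
    | nil => exact isStable_mul (isStable_rename _ hf) (isStable_rename _ hg)
    | cons j l ih =>
        rw [List.foldr_cons]
        exact expOp_stable (by simp) ih
  exact this _

theorem map_weylProd (f g : MvPolynomial (Fin n ⊕ Fin n) ℝ) :
    (weylProd f g).map (algebraMap ℝ ℂ) = weylProd (f.map (algebraMap ℝ ℂ))
      (g.map (algebraMap ℝ ℂ)) := by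
  set d := f.totalDegree with hd
  rw [weylProd_eq_sum f g (le_refl _)]
  rw [weylProd_eq_sum (f.map (algebraMap ℝ ℂ)) (g.map (algebraMap ℝ ℂ))
    ((totalDegree_map_le' _ f).trans (le_refl _))]
  rw [map_sum]
  refine Finset.sum_congr rfl fun κ _ => ?_
  rw [map_mul, map_mul, MvPolynomial.map_C, map_pdPow, map_pdPow]
  congr 2
  rw [map_div₀, map_pow, map_neg, map_one, map_natCast]

end Final

theorem stmt13 {n : ℕ} :
    (∀ f g : MvPolynomial (Fin n ⊕ Fin n) ℂ,
      IsStable f → IsStable g → IsStable (weylProd f g)) ∧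
    (∀ f g : MvPolynomial (Fin n ⊕ Fin n) ℝ,
      IsRealStable f → IsRealStable g → IsRealStable (weylProd f g)) := by
  constructor
  · exact fun f g hf hg => weylProd_stable f g hf hg
  · intro f g hf hg
    rw [IsRealStable, map_weylProd]
    exact weylProd_stable _ _ hf hg
end

section
/- Let A₁,…,Aₙ be positive semidefinite complex Hermitian m×m matrices and let B be a complex Hermitian m×m matrix. Then the polynomial f(z₁,…,zₙ) = det(z₁A₁ + z₂A₂ + ⋯ + zₙAₙ + B) has all real coefficients and is either real stable or identically zero. -/
open MvPolynomial ComplexOrder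

/-!
Write `f = det (∑ Xᵢ Aᵢ + B)`. Since the `Aᵢ` and `B` are Hermitian, conjugating the
coefficients of the pencil transposes it, so `f` equals its own conjugate and has real
coefficients. If `f(z) = 0` with every `Im zᵢ > 0`, take `v ≠ 0` in the kernel of
`∑ zᵢ Aᵢ + B`. The imaginary part of `v* (∑ zᵢ Aᵢ + B) v = 0` is `∑ Im zᵢ · v* Aᵢ v`, a sum
of nonnegative terms, so `v* Aᵢ v = 0`, hence `Aᵢ v = 0` for all `i` and then `B v = 0`.
Thus `v` lies in the kernel of `∑ wᵢ Aᵢ + B` for every `w`, and `f` vanishes identically.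
-/

open Matrix

theorem MvPolynomial.exists_map_algebraMap_eq_of_map_conj_eq {σ : Type*}
    {f : MvPolynomial σ ℂ} (hf : f.map (starRingEnd ℂ) = f) :
    ∃ g : MvPolynomial σ ℝ, g.map (algebraMap ℝ ℂ) = f := by
  refine mem_range_map_iff_coeffs_subset.mpr fun c hc => ?_
  obtain ⟨d, -, rfl⟩ := mem_coeffs_iff.mp hc
  have h_conj : starRingEnd ℂ (f.coeff d) = f.coeff d := by
    rw [← coeff_map, hf]
  obtain ⟨r, hr⟩ := Complex.conj_eq_iff_real.mp h_conj
  exact ⟨r, hr.symm⟩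

variable {σ m R : Type*} [Fintype σ]

section CommRing

variable [CommRing R] (A : σ → Matrix m m R) (B : Matrix m m R)

noncomputable def linearPencil : Matrix m m (MvPolynomial σ R) :=
  ∑ i, (X i : MvPolynomial σ R) • (A i).map C + B.map C

theorem map_eval_linearPencil (z : σ → R) :
    (linearPencil A B).map (eval z) = ∑ i, z i • A i + B := by
  ext j k
  simp [linearPencil, Matrix.sum_apply]

theorem eval_det_linearPencil [Fintype m] [DecidableEq m] (z : σ → R) :
    eval z (linearPencil A B).det = (∑ i, z i • A i + B).det := by
  rw [RingHom.map_det, RingHom.mapMatrix_apply, map_eval_linearPencil]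

theorem Matrix.pencil_mulVec [Fintype m] (z : σ → R) (v : m → R) :
    (∑ i, z i • A i + B) *ᵥ v = ∑ i, z i • (A i *ᵥ v) + B *ᵥ v := by
  simp only [add_mulVec, sum_mulVec, smul_mulVec]

variable [StarRing R] {A B}

theorem map_star_linearPencil (hA : ∀ i, (A i).IsHermitian) (hB : B.IsHermitian) :
    (linearPencil A B).map (MvPolynomial.map (starRingEnd R)) = (linearPencil A B)ᵀ := by
  have h_star : ∀ (M : Matrix m m R), M.IsHermitian → ∀ j k, starRingEnd R (M j k) = M k j :=
    fun M hM j k => hM.apply k j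
  ext j k
  simp [linearPencil, Matrix.sum_apply, h_star _ (hA _), h_star _ hB]

theorem map_star_det_linearPencil [Fintype m] [DecidableEq m] (hA : ∀ i, (A i).IsHermitian)
    (hB : B.IsHermitian) :
    MvPolynomial.map (starRingEnd R) (linearPencil A B).det = (linearPencil A B).det := by
  rw [RingHom.map_det, RingHom.mapMatrix_apply, map_star_linearPencil hA hB, det_transpose]

end CommRing

theorem Matrix.mulVec_eq_zero_of_pencil_mulVec_eq_zero [Fintype m] {A : σ → Matrix m m ℂ}
    {B : Matrix m m ℂ} (hA : ∀ i, (A i).PosSemidef) (hB : B.IsHermitian) {z : σ → ℂ}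
    (hz : ∀ i, 0 < (z i).im) {v : m → ℂ} (hv : (∑ i, z i • A i + B) *ᵥ v = 0) :
    (∀ i, A i *ᵥ v = 0) ∧ B *ᵥ v = 0 := by
  set q : σ → ℂ := fun i => star v ⬝ᵥ A i *ᵥ v
  have hq : ∀ i, 0 ≤ q i := fun i => (hA i).dotProduct_mulVec_nonneg v
  have h_form : ∑ i, z i * q i + star v ⬝ᵥ B *ᵥ v = 0 := by
    simpa [pencil_mulVec, dotProduct_sum, q] using congrArg (star v ⬝ᵥ ·) hv
  have h_im : ∑ i, (z i).im * (q i).re = 0 := by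
    have := congrArg Complex.im h_form
    simp only [Complex.add_im, Complex.im_sum, Complex.mul_im, Complex.zero_im,
      ← (Complex.nonneg_iff.mp (hq _)).2, mul_zero, zero_add] at this
    have hB_im : (star v ⬝ᵥ B *ᵥ v).im = 0 := hB.im_star_dotProduct_mulVec_self v
    rwa [hB_im, add_zero] at this
  have hq_zero : ∀ i, q i = 0 := by
    intro i
    have h_term := (Finset.sum_eq_zero_iff_of_nonneg fun j _ =>
      mul_nonneg (hz j).le (Complex.nonneg_iff.mp (hq j)).1).mp h_im i (Finset.mem_univ i)
    have h_re : (q i).re = 0 := (mul_eq_zero.mp h_term).resolve_left (hz i).ne'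
    exact Complex.ext h_re (Complex.nonneg_iff.mp (hq i)).2.symm
  have hAv : ∀ i, A i *ᵥ v = 0 := fun i => ((hA i).dotProduct_mulVec_zero_iff v).mp (hq_zero i)
  refine ⟨hAv, ?_⟩
  simpa [pencil_mulVec, hAv] using hv

theorem isStable_det_linearPencil_or_eq_zero [Fintype m] [DecidableEq m]
    {A : σ → Matrix m m ℂ} {B : Matrix m m ℂ} (hA : ∀ i, (A i).PosSemidef) (hB : B.IsHermitian) :
    IsStable (linearPencil A B).det ∨ (linearPencil A B).det = 0 := by
  refine or_iff_not_imp_left.mpr fun h_unstable => ?_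
  obtain ⟨z, hz, h_root⟩ :
      ∃ z : σ → ℂ, (∀ i, 0 < (z i).im) ∧ eval z (linearPencil A B).det = 0 := by
    simpa [IsStable] using h_unstable
  rw [eval_det_linearPencil] at h_root
  obtain ⟨v, hv, h_ker⟩ := exists_mulVec_eq_zero_iff.mpr h_root
  obtain ⟨hAv, hBv⟩ := mulVec_eq_zero_of_pencil_mulVec_eq_zero hA hB hz h_ker
  refine MvPolynomial.funext fun w => ?_
  rw [eval_det_linearPencil, map_zero]
  exact exists_mulVec_eq_zero_iff.mp ⟨v, hv, by simp [pencil_mulVec, hAv, hBv]⟩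

theorem stmt15 {n m : ℕ} (A : Fin n → Matrix (Fin m) (Fin m) ℂ)
    (B : Matrix (Fin m) (Fin m) ℂ)
    (hA : ∀ i, (A i).PosSemidef) (hB : B.IsHermitian) :
    ∃ g : MvPolynomial (Fin n) ℝ,
      g.map (algebraMap ℝ ℂ) =
        Matrix.det (∑ i, (X i : MvPolynomial (Fin n) ℂ) • (A i).map C + B.map C) ∧
      (IsRealStable g ∨ g = 0) := by
  obtain ⟨g, hg⟩ := exists_map_algebraMap_eq_of_map_conj_eq
    (map_star_det_linearPencil (fun i => (hA i).isHermitian) hB)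
  refine ⟨g, hg, ?_⟩
  rcases isStable_det_linearPencil_or_eq_zero hA hB with h_stable | h_zero
  · left
    rwa [IsRealStable, hg]
  · right
    apply map_injective _ (algebraMap ℝ ℂ).injective
    rw [hg, map_zero]
    exact h_zero
end

section
/- Let A be a complex Hermitian n×n matrix, let Z = diag(z₁,…,zₙ) be the diagonal matrix of the indeterminates, and set C(A,z) = det(Z − A) ∈ ℂ[z₁,…,zₙ]. Then C(A,z) has real coefficients and is real stable, and for each 1 ≤ j ≤ n one has C(A^{jj}, z∖zⱼ) ≪ C(A,z), i.e., the polynomial C(A,z) + i·C(A^{jj}, z∖zⱼ) is stable; here A^{jj} denotes the (n−1)×(n−1) principal submatrix of A obtained by deleting row j and column j, and C(A^{jj}, z∖zⱼ) = det(diag(z₁,…,z_{j−1},z_{j+1},…,zₙ) − A^{jj}) is regarded as a polynomial in z₁,…,zₙ not involving zⱼ. -/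
open MvPolynomial

open Matrix Complex in
lemma aux_det_ne_zero {m : ℕ} (B : Matrix (Fin m) (Fin m) ℂ)
    (h : ∀ v : Fin m → ℂ, v ≠ 0 → 0 < (star v ⬝ᵥ B *ᵥ v).im) : B.det ≠ 0 := by
  intro h0
  obtain ⟨v, hv, hBv⟩ := (Matrix.exists_mulVec_eq_zero_iff).2 h0
  have := h v hv
  rw [hBv, dotProduct_zero] at this
  simp at this

open Matrix Complex in
lemma aux_herm_quad_im {m : ℕ} {A : Matrix (Fin m) (Fin m) ℂ} (hA : A.IsHermitian)
    (v : Fin m → ℂ) : (star v ⬝ᵥ A *ᵥ v).im = 0 := by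
  have h : star (star v ⬝ᵥ A *ᵥ v) = star v ⬝ᵥ A *ᵥ v := by
    rw [← star_dotProduct, star_mulVec, dotProduct_mulVec, hA.eq]
  rw [← Complex.conj_eq_iff_im]
  exact h

open Matrix Complex in
lemma aux_diag_quad_im {m : ℕ} (z : Fin m → ℂ) (v : Fin m → ℂ) :
    (star v ⬝ᵥ (Matrix.diagonal z) *ᵥ v).im = ∑ i, (z i).im * Complex.normSq (v i) := by
  have : star v ⬝ᵥ (Matrix.diagonal z) *ᵥ v
      = ∑ i, (starRingEnd ℂ) (v i) * (z i * v i) := by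
    simp [dotProduct, mulVec_diagonal]
  rw [this, Complex.im_sum]
  refine Finset.sum_congr rfl fun i _ => ?_
  have h1 : (starRingEnd ℂ) (v i) * (z i * v i)
      = z i * (v i * (starRingEnd ℂ) (v i)) := by ring
  rw [h1, Complex.mul_conj]
  simp [Complex.mul_im]

open Matrix Complex in
lemma aux_quad_pos {m : ℕ} {A : Matrix (Fin m) (Fin m) ℂ} (hA : A.IsHermitian)
    (z : Fin m → ℂ) (hz : ∀ i, 0 < (z i).im) (v : Fin m → ℂ) (hv : v ≠ 0) :
    0 < (star v ⬝ᵥ (Matrix.diagonal z - A) *ᵥ v).im := by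
  rw [sub_mulVec, dotProduct_sub, Complex.sub_im, aux_herm_quad_im hA, sub_zero,
    aux_diag_quad_im]
  obtain ⟨i0, hi0⟩ := Function.ne_iff.1 hv
  refine Finset.sum_pos' (fun i _ => mul_nonneg (le_of_lt (hz i)) (Complex.normSq_nonneg _))
    ⟨i0, Finset.mem_univ _, mul_pos (hz i0) ?_⟩
  simpa [Complex.normSq_pos] using hi0

open Matrix Complex in
lemma aux_eval_det {m : ℕ} (A : Matrix (Fin m) (Fin m) ℂ) (z : Fin m → ℂ) :
    eval z (Matrix.det ((Matrix.diagonal fun k => (X k : MvPolynomial (Fin m) ℂ)) - A.map C))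
      = (Matrix.diagonal z - A).det := by
  rw [RingHom.map_det, RingHom.mapMatrix_apply]
  congr 1
  ext i k
  by_cases h : i = k <;>
    simp [Matrix.map_apply, Matrix.sub_apply, Matrix.diagonal_apply, h]

open Matrix Complex in
lemma aux_det_single_row {m : ℕ} (M : Matrix (Fin (m + 1)) (Fin (m + 1)) ℂ)
    (j : Fin (m + 1)) :
    (M.updateRow j (Pi.single j 1)).det = (M.submatrix j.succAbove j.succAbove).det := by
  rw [Matrix.det_succ_row _ j]
  rw [Finset.sum_eq_single j]
  · have hsub : (M.updateRow j (Pi.single j 1)).submatrix j.succAbove j.succAbove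
        = M.submatrix j.succAbove j.succAbove := by
      ext i k
      simp [Matrix.submatrix_apply, Matrix.updateRow_ne (Fin.succAbove_ne j i)]
    simp [hsub]
  · intro k _ hk
    simp [Matrix.updateRow_self, Pi.single_eq_of_ne hk]
  · simp

theorem stmt16 {n : ℕ} (A : Matrix (Fin (n + 1)) (Fin (n + 1)) ℂ) (hA : A.IsHermitian) :
    (∃ g : MvPolynomial (Fin (n + 1)) ℝ,
        g.map (algebraMap ℝ ℂ) =
          Matrix.det
            ((Matrix.diagonal fun k => (X k : MvPolynomial (Fin (n + 1)) ℂ)) - A.map C) ∧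
        IsRealStable g) ∧
    ∀ j : Fin (n + 1),
      IsStable
        (Matrix.det
            ((Matrix.diagonal fun k => (X k : MvPolynomial (Fin (n + 1)) ℂ)) - A.map C) +
          C Complex.I *
            Matrix.det
              ((Matrix.diagonal fun k : Fin n =>
                  (X (j.succAbove k) : MvPolynomial (Fin (n + 1)) ℂ)) -
                (A.submatrix j.succAbove j.succAbove).map C)) := by
  classical
  set p : MvPolynomial (Fin (n + 1)) ℂ :=
    Matrix.det ((Matrix.diagonal fun k => (X k : MvPolynomial (Fin (n + 1)) ℂ)) - A.map C)
    with hp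
  -- stability of p
  have hstab : IsStable p := by
    intro z hz
    rw [hp, aux_eval_det]
    exact aux_det_ne_zero _ (fun v hv => aux_quad_pos hA z hz v hv)
  -- conjugation invariance
  have hconj : MvPolynomial.map (starRingEnd ℂ) p = p := by
    rw [hp, RingHom.map_det, RingHom.mapMatrix_apply]
    have : ((Matrix.diagonal fun k => (X k : MvPolynomial (Fin (n + 1)) ℂ)) - A.map C).map
        (MvPolynomial.map (starRingEnd ℂ))
        = Matrix.transpose ((Matrix.diagonal fun k => (X k : MvPolynomial (Fin (n + 1)) ℂ)) - A.map C) := by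
      ext i k
      have hAik : (starRingEnd ℂ) (A i k) = A k i := by
        conv_rhs => rw [← hA.eq]
        simp [Matrix.conjTranspose_apply]
      rcases eq_or_ne i k with h | h
      · subst h
        simp [Matrix.map_apply, Matrix.sub_apply, Matrix.transpose_apply,
          Matrix.diagonal_apply_eq, hAik]
      · simp [Matrix.map_apply, Matrix.sub_apply, Matrix.transpose_apply,
          Matrix.diagonal_apply_ne _ h, Matrix.diagonal_apply_ne _ (Ne.symm h), hAik]
    rw [this, Matrix.det_transpose]
  have hreal : ∀ m : Fin (n + 1) →₀ ℕ, ((p.coeff m).re : ℂ) = p.coeff m := by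
    intro m
    rw [← Complex.conj_eq_iff_re]
    have := congrArg (fun q => MvPolynomial.coeff m q) hconj
    simpa [MvPolynomial.coeff_map] using this
  refine ⟨⟨(∑ m ∈ p.support, monomial m ((p.coeff m).re)), ?_, ?_⟩, ?_⟩
  · have : (∑ m ∈ p.support, monomial m ((p.coeff m).re)).map (algebraMap ℝ ℂ)
        = ∑ m ∈ p.support, monomial m (((p.coeff m).re : ℂ)) := by
      rw [map_sum]
      refine Finset.sum_congr rfl fun m _ => ?_
      simp [MvPolynomial.map_monomial]
    rw [this]
    have : ∑ m ∈ p.support, monomial m (((p.coeff m).re : ℂ))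
        = ∑ m ∈ p.support, monomial m (p.coeff m) := by
      refine Finset.sum_congr rfl fun m _ => ?_
      rw [hreal]
    rw [this, p.support_sum_monomial_coeff]
  · unfold IsRealStable
    have : (∑ m ∈ p.support, monomial m ((p.coeff m).re)).map (algebraMap ℝ ℂ) = p := by
      rw [map_sum]
      have h1 : ∀ m ∈ p.support, (monomial m ((p.coeff m).re)).map (algebraMap ℝ ℂ)
          = monomial m (p.coeff m) := by
        intro m _
        rw [MvPolynomial.map_monomial]
        congr 1
        exact hreal m
      rw [Finset.sum_congr rfl h1, p.support_sum_monomial_coeff]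
    rw [this]
    exact hstab
  · intro j z hz
    set w : Fin (n + 1) → ℂ := Function.update z j (z j + Complex.I) with hw
    have hwim : ∀ i, 0 < (w i).im := by
      intro i
      by_cases h : i = j
      · subst h; simp [hw, Complex.add_im]
        linarith [hz i]
      · simpa [hw, Function.update_of_ne h] using hz i
    set M : Matrix (Fin (n + 1)) (Fin (n + 1)) ℂ := Matrix.diagonal z - A with hM
    have hupd : Matrix.diagonal w - A
        = M.updateRow j (M j + Complex.I • (Pi.single j 1 : Fin (n + 1) → ℂ)) := by
      ext i k
      rcases eq_or_ne i j with h | h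
      · subst h
        rw [Matrix.updateRow_self]
        rcases eq_or_ne i k with h2 | h2
        · subst h2
          simp [hM, hw, Matrix.sub_apply, Matrix.diagonal_apply_eq, Function.update_self,
            Pi.single_eq_same, smul_eq_mul]
          ring
        · simp [hM, hw, Matrix.sub_apply, Matrix.diagonal_apply_ne _ h2,
            Pi.single_eq_of_ne (Ne.symm h2), smul_eq_mul]
      · rw [Matrix.updateRow_ne h]
        have hwz : w i = z i := Function.update_of_ne h _ _
        simp [hM, Matrix.sub_apply, Matrix.diagonal_apply, hwz]
    have hdetw : (Matrix.diagonal w - A).det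
        = M.det + Complex.I * (M.submatrix j.succAbove j.succAbove).det := by
      rw [hupd, Matrix.det_updateRow_add, Matrix.updateRow_eq_self,
        Matrix.det_updateRow_smul, aux_det_single_row]
    have hsubM : M.submatrix j.succAbove j.succAbove
        = Matrix.diagonal (fun k : Fin n => z (j.succAbove k))
          - A.submatrix j.succAbove j.succAbove := by
      ext i k
      by_cases h : i = k <;>
        simp [hM, Matrix.submatrix_apply, Matrix.sub_apply, Matrix.diagonal_apply, h,
          Fin.succAbove_right_injective.eq_iff]
    have heval : eval z
        (p + C Complex.I *
          Matrix.det ((Matrix.diagonal fun k : Fin n =>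
            (X (j.succAbove k) : MvPolynomial (Fin (n + 1)) ℂ)) -
            (A.submatrix j.succAbove j.succAbove).map C))
        = (Matrix.diagonal w - A).det := by
      rw [map_add, map_mul, eval_C, hp, aux_eval_det, hdetw, hsubM]
      congr 2
      rw [RingHom.map_det, RingHom.mapMatrix_apply]
      congr 1
      ext i k
      by_cases h : i = k <;>
        simp [Matrix.map_apply, Matrix.sub_apply, Matrix.diagonal_apply, h]
    rw [heval]
    exact aux_det_ne_zero _ (fun v hv => aux_quad_pos hA w hwim v hv)
end

section
/- Let f ∈ ℝ[z₁,…,zₙ] be a nonzero polynomial of degree d and let f_H ∈ ℝ[z₁,…,z_{n+1}] be its homogenization, i.e., the unique homogeneous polynomial of degree d with f_H(z₁,…,zₙ,1) = f(z₁,…,zₙ). Then f is real stable if and only if f_H is Gårding hyperbolic with respect to every vector v ∈ ℝ^{n+1} with v_{n+1} = 0 and vᵢ > 0 for all 1 ≤ i ≤ n. -/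
open MvPolynomial

/-- A real polynomial `p` in `m` variables is Gårding hyperbolic with respect to a
vector `v ∈ ℝ^m` if `p(v) ≠ 0` and for every `α ∈ ℝ^m` the univariate polynomial
`t ↦ p(α + t·v)` has only real zeros. -/
def GardingHyperbolic {m : ℕ} (p : MvPolynomial (Fin m) ℝ) (v : Fin m → ℝ) : Prop :=
  eval v p ≠ 0 ∧ ∀ α : Fin m → ℝ, ∀ t : ℂ,
    eval (fun i => (α i : ℂ) + t * (v i : ℂ)) (p.map (algebraMap ℝ ℂ)) = 0 → t.im = 0

namespace Stmt17Aux

open Polynomial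

noncomputable def lineP {R : Type*} [CommSemiring R] {m : ℕ} (p : MvPolynomial (Fin m) R)
    (a v : Fin m → R) : Polynomial R :=
  MvPolynomial.aeval (fun i => Polynomial.C (a i) + Polynomial.X * Polynomial.C (v i)) p

lemma lineP_eval {R : Type*} [CommSemiring R] {m : ℕ} (p : MvPolynomial (Fin m) R)
    (a v : Fin m → R) (t : R) :
    (lineP p a v).eval t = MvPolynomial.eval (fun i => a i + t * v i) p := by
  unfold lineP
  rw [MvPolynomial.aeval_def]
  have h := MvPolynomial.eval₂_comp_left (Polynomial.evalRingHom t)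
    (algebraMap R (Polynomial R)) (fun i => Polynomial.C (a i) + Polynomial.X * Polynomial.C (v i)) p
  simp only [Polynomial.coe_evalRingHom] at h
  rw [h]
  have h1 : (Polynomial.evalRingHom t).comp (algebraMap R (Polynomial R)) = RingHom.id R := by
    ext c; simp
  rw [h1]
  simp only [MvPolynomial.eval, Function.comp_def]
  congr 1
  · funext i; simp; ring

lemma lineP_natDegree_le {m : ℕ} (p : MvPolynomial (Fin m) ℂ) (a v : Fin m → ℂ) :
    (lineP p a v).natDegree ≤ p.totalDegree := by
  unfold lineP
  conv_lhs => rw [p.as_sum, map_sum]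
  apply Polynomial.natDegree_sum_le_of_forall_le
  intro β hβ
  rw [MvPolynomial.aeval_monomial]
  apply le_trans (Polynomial.natDegree_mul_le)
  have h0 : (algebraMap ℂ (Polynomial ℂ) (MvPolynomial.coeff β p)).natDegree = 0 := by
    simp [Polynomial.natDegree_C]
  rw [h0, zero_add]
  refine le_trans ?_ (MvPolynomial.le_totalDegree hβ)
  rw [Finsupp.prod]
  refine le_trans (Polynomial.natDegree_prod_le _ _) ?_
  rw [Finsupp.sum]
  apply Finset.sum_le_sum
  intro i _
  refine le_trans Polynomial.natDegree_pow_le ?_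
  have h2 : (Polynomial.C (a i) + Polynomial.X * Polynomial.C (v i)).natDegree ≤ 1 := by
    apply le_trans (Polynomial.natDegree_add_le _ _)
    simp only [Polynomial.natDegree_C, max_le_iff]
    exact ⟨Nat.zero_le _, le_trans (Polynomial.natDegree_mul_le) (by simp [Polynomial.natDegree_C])⟩
  calc β i * (Polynomial.C (a i) + Polynomial.X * Polynomial.C (v i)).natDegree
      ≤ β i * 1 := Nat.mul_le_mul_left _ h2
    _ = β i := mul_one _

lemma homog_eval_mul {m d : ℕ} {p : MvPolynomial (Fin m) ℂ} (hp : p.IsHomogeneous d)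
    (c : ℂ) (x : Fin m → ℂ) :
    MvPolynomial.eval (fun i => c * x i) p = c ^ d * MvPolynomial.eval x p := by
  rw [MvPolynomial.eval_eq, MvPolynomial.eval_eq, Finset.mul_sum]
  apply Finset.sum_congr rfl
  intro β hβ
  have hdeg : Finsupp.degree β = d := by
    have := hp (MvPolynomial.mem_support_iff.mp hβ)
    rw [Finsupp.degree_eq_weight_one]
    exact this
  have h1 : ∏ i ∈ β.support, (c * x i) ^ β i
      = (∏ i ∈ β.support, c ^ β i) * ∏ i ∈ β.support, x i ^ β i := by
    rw [← Finset.prod_mul_distrib]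
    exact Finset.prod_congr rfl fun i _ => mul_pow _ _ _
  have h2 : ∏ i ∈ β.support, c ^ β i = c ^ d := by
    rw [Finset.prod_pow_eq_pow_sum]
    congr 1
  rw [h1, h2]
  ring

lemma eq_of_eval_eq_on_ne_zero {q R : Polynomial ℂ}
    (h : ∀ t : ℂ, t ≠ 0 → q.eval t = R.eval t) : q = R := by
  apply Polynomial.eq_of_infinite_eval_eq
  exact ((Set.finite_singleton (0:ℂ)).infinite_compl).mono (fun t ht => h t ht)

lemma lineP_coeff_top {m d : ℕ} {p : MvPolynomial (Fin m) ℂ} (hp : p.IsHomogeneous d)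
    (a v : Fin m → ℂ) :
    (lineP p a v).coeff d = MvPolynomial.eval v p := by
  set r := lineP p v a with hr
  have hrdeg : r.natDegree < d + 1 :=
    Nat.lt_succ_of_le (le_trans (lineP_natDegree_le p v a) hp.totalDegree_le)
  set R : Polynomial ℂ := ∑ k ∈ Finset.range (d+1), Polynomial.C (r.coeff k) * Polynomial.X ^ (d - k) with hR
  have hqR : lineP p a v = R := by
    apply eq_of_eval_eq_on_ne_zero
    intro t ht
    rw [lineP_eval]
    have h1 : (fun i => a i + t * v i) = (fun i => t * (v i + t⁻¹ * a i)) := by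
      funext i; field_simp; ring
    rw [h1, homog_eval_mul hp t (fun i => v i + t⁻¹ * a i)]
    have h2 : MvPolynomial.eval (fun i => v i + t⁻¹ * a i) p = r.eval t⁻¹ := by
      rw [hr, lineP_eval]
    rw [h2, Polynomial.eval_eq_sum_range' hrdeg, hR]
    rw [Polynomial.eval_finset_sum, Finset.mul_sum]
    apply Finset.sum_congr rfl
    intro k hk
    simp only [Polynomial.eval_mul, Polynomial.eval_C, Polynomial.eval_pow, Polynomial.eval_X]
    have hk' : k ≤ d := Nat.lt_succ_iff.mp (Finset.mem_range.mp hk)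
    rw [show t ^ (d - k) = t ^ d * (t⁻¹)^k by
      rw [inv_pow, eq_comm, mul_inv_eq_iff_eq_mul₀ (pow_ne_zero _ ht), ← pow_add]
      congr 1; omega]
    ring
  rw [hqR, hR, Polynomial.finset_sum_coeff]
  have hsum : ∀ k ∈ Finset.range (d+1), (Polynomial.C (r.coeff k) * Polynomial.X ^ (d - k)).coeff d
      = if k = 0 then r.coeff 0 else 0 := by
    intro k hk
    rw [Polynomial.coeff_C_mul, Polynomial.coeff_X_pow]
    have hk2 : k ≤ d := Nat.lt_succ_iff.mp (Finset.mem_range.mp hk)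
    rcases Nat.eq_zero_or_pos k with h0 | h0
    · subst h0; simp
    · have hne : ¬ (d = d - k) := by omega
      rw [if_neg hne, if_neg (by omega : ¬ k = 0), mul_zero]
  rw [Finset.sum_congr rfl hsum, Finset.sum_ite_eq' (Finset.range (d+1)) 0 (fun _ => r.coeff 0),
    if_pos (Finset.mem_range.mpr (Nat.succ_pos d)), Polynomial.coeff_zero_eq_eval_zero, hr, lineP_eval,
    show (fun i => v i + 0 * a i) = v from funext fun i => by simp]

lemma pow_card_le_prod_real {s : Multiset ℝ} {b : ℝ} (hb : 0 ≤ b)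
    (h : ∀ x ∈ s, b ≤ x) : b ^ (Multiset.card s) ≤ s.prod := by
  induction s using Multiset.induction_on with
  | empty => simp
  | cons a s ih =>
    have ha : b ≤ a := h a (Multiset.mem_cons_self a s)
    have hs : ∀ x ∈ s, b ≤ x := fun x hx => h x (Multiset.mem_cons_of_mem hx)
    rw [Multiset.card_cons, Multiset.prod_cons, pow_succ']
    exact mul_le_mul ha (ih hs) (pow_nonneg hb _) (le_trans hb ha)

lemma eval_lower_bound {p : Polynomial ℂ} {m : ℝ}
    (hroots : ∀ r ∈ p.roots, r.im ≤ m) {t : ℂ} (ht : m ≤ t.im) :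
    ‖p.leadingCoeff‖ * (t.im - m) ^ p.natDegree ≤ ‖p.eval t‖ := by
  have hcard : Multiset.card p.roots = p.natDegree := by
    have := (IsAlgClosed.splits p).natDegree_eq_card_roots
    omega
  conv_rhs => rw [(IsAlgClosed.splits p).eq_prod_roots]
  rw [Polynomial.eval_mul, Polynomial.eval_C, norm_mul, Polynomial.eval_multiset_prod]
  apply mul_le_mul_of_nonneg_left ?_ (norm_nonneg _)
  rw [← normHom_apply, map_multiset_prod, Multiset.map_map, Multiset.map_map]
  have hcard2 : Multiset.card (Multiset.map (⇑(normHom (α := ℂ)) ∘ Polynomial.eval t ∘ fun a => Polynomial.X - Polynomial.C a) p.roots) = p.natDegree := by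
    rw [Multiset.card_map, hcard]
  rw [← hcard2]
  apply pow_card_le_prod_real (by linarith)
  intro x hx
  rw [Multiset.mem_map] at hx
  obtain ⟨r, hr, rfl⟩ := hx
  simp only [normHom_apply, Function.comp_apply, Polynomial.eval_sub, Polynomial.eval_X, Polynomial.eval_C]
  calc t.im - m ≤ (t - r).im := by
        rw [Complex.sub_im]; have := hroots r hr; linarith
    _ ≤ |(t - r).im| := le_abs_self _
    _ ≤ ‖t - r‖ := Complex.abs_im_le_norm _

lemma eval_map_aeval {n m : ℕ} (g : Fin m → MvPolynomial (Fin n) ℝ)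
    (p : MvPolynomial (Fin m) ℝ) (z : Fin n → ℂ) :
    MvPolynomial.eval z (MvPolynomial.map (algebraMap ℝ ℂ) (MvPolynomial.aeval g p))
      = MvPolynomial.eval (fun i => MvPolynomial.eval z (MvPolynomial.map (algebraMap ℝ ℂ) (g i)))
          (MvPolynomial.map (algebraMap ℝ ℂ) p) := by
  rw [MvPolynomial.eval_map, MvPolynomial.eval_map, MvPolynomial.aeval_def]
  have h := MvPolynomial.eval₂_comp_left (MvPolynomial.eval₂Hom (algebraMap ℝ ℂ) z)
    (algebraMap ℝ (MvPolynomial (Fin n) ℝ)) g p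
  simp only [MvPolynomial.coe_eval₂Hom] at h
  rw [h]
  congr 1
  · ext r
    simp
  · funext i
    rw [MvPolynomial.eval_map]
    rfl

lemma eval_conj {m : ℕ} (p : MvPolynomial (Fin m) ℝ) (z : Fin m → ℂ) :
    MvPolynomial.eval (fun i => (starRingEnd ℂ) (z i)) (MvPolynomial.map (algebraMap ℝ ℂ) p)
      = (starRingEnd ℂ) (MvPolynomial.eval z (MvPolynomial.map (algebraMap ℝ ℂ) p)) := by
  rw [MvPolynomial.eval_map, MvPolynomial.eval_map]
  have h := MvPolynomial.eval₂_comp_left (starRingEnd ℂ) (algebraMap ℝ ℂ) z p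
  rw [h]
  congr 1
  ext r
  simp

lemma algebraMap_eval {m : ℕ} (p : MvPolynomial (Fin m) ℝ) (x : Fin m → ℝ) :
    MvPolynomial.eval (fun i => (x i : ℂ)) (MvPolynomial.map (algebraMap ℝ ℂ) p)
      = ((MvPolynomial.eval x p : ℝ) : ℂ) := by
  rw [MvPolynomial.eval_map]
  have h := MvPolynomial.eval₂_comp_left (algebraMap ℝ ℂ) (RingHom.id ℝ) x p
  simp only [RingHom.comp_id] at h
  rw [show (fun i => ((x i : ℂ))) = ⇑(algebraMap ℝ ℂ) ∘ x from rfl, ← h]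
  rfl

lemma exists_pos_eval_ne_zero {m : ℕ} {g : MvPolynomial (Fin m) ℝ} (hg : g ≠ 0) :
    ∃ w : Fin m → ℝ, (∀ i, 0 < w i) ∧ MvPolynomial.eval w g ≠ 0 := by
  obtain ⟨x₀, hx₀⟩ : ∃ x₀ : Fin m → ℝ, MvPolynomial.eval x₀ g ≠ 0 := by
    by_contra h
    push_neg at h
    exact hg (MvPolynomial.funext (fun x => by rw [h x, map_zero]))
  set q : Polynomial ℝ := lineP g x₀ (fun _ => 1) with hq
  have hq0 : q.eval 0 = MvPolynomial.eval x₀ g := by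
    rw [hq, lineP_eval, show (fun i => x₀ i + (0:ℝ) * 1) = x₀ from funext fun i => by simp]
  have hqne : q ≠ 0 := fun h => hx₀ (by rw [← hq0, h, Polynomial.eval_zero])
  have hfin : {t : ℝ | q.IsRoot t}.Finite := Polynomial.finite_setOf_isRoot hqne
  set M : ℝ := ∑ i, |x₀ i| with hM
  have hinf : (Set.Ioi M \ {t : ℝ | q.IsRoot t}).Infinite := (Set.Ioi_infinite M).diff hfin
  obtain ⟨t, ht⟩ := hinf.nonempty
  obtain ⟨htM, htr⟩ := ht
  refine ⟨fun i => x₀ i + t, fun i => ?_, ?_⟩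
  · have h1 : |x₀ i| ≤ M := Finset.single_le_sum (f := fun i => |x₀ i|)
      (fun i _ => abs_nonneg _) (Finset.mem_univ i)
    have h2 : -x₀ i ≤ |x₀ i| := neg_le_abs _
    have h3 : M < t := htM
    show 0 < x₀ i + t
    linarith
  · have : MvPolynomial.eval (fun i => x₀ i + t) g = q.eval t := by
      rw [hq, lineP_eval, show (fun i => x₀ i + t * 1) = (fun i => x₀ i + t) from funext fun i => by simp]
    rw [this]
    exact htr

lemma coeff_lineP_zero {m : ℕ} (F : MvPolynomial (Fin m) ℂ) (x : Fin m → ℂ) (k : ℕ) :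
    (lineP F 0 x).coeff k = MvPolynomial.eval x ((homogeneousComponent k) F) := by
  set N := F.totalDegree with hN
  set P : Polynomial ℂ := ∑ j ∈ Finset.range (N+1),
    Polynomial.C (MvPolynomial.eval x ((homogeneousComponent j) F)) * Polynomial.X ^ j with hP
  have hqP : lineP F 0 x = P := by
    apply Polynomial.funext
    intro t
    rw [lineP_eval, show (fun i => (0 : Fin m → ℂ) i + t * x i) = (fun i => t * x i) from funext fun i => by simp]
    conv_lhs => rw [← MvPolynomial.sum_homogeneousComponent F, map_sum]
    rw [hP, Polynomial.eval_finset_sum]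
    apply Finset.sum_congr rfl
    intro j hj
    rw [homog_eval_mul (homogeneousComponent_isHomogeneous j F) t x]
    simp only [Polynomial.eval_mul, Polynomial.eval_C, Polynomial.eval_pow, Polynomial.eval_X]
    ring
  rw [hqP, hP, Polynomial.finset_sum_coeff]
  have hterm : ∀ j ∈ Finset.range (N+1),
      (Polynomial.C (MvPolynomial.eval x ((homogeneousComponent j) F)) * Polynomial.X ^ j).coeff k
      = if j = k then MvPolynomial.eval x ((homogeneousComponent j) F) else 0 := by
    intro j hj
    rw [Polynomial.coeff_C_mul, Polynomial.coeff_X_pow]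
    by_cases h : k = j
    · subst h; simp
    · simp [h, Ne.symm h]
  rw [Finset.sum_congr rfl hterm, Finset.sum_ite_eq' (Finset.range (N+1)) k _]
  by_cases hk : k ∈ Finset.range (N+1)
  · rw [if_pos hk]
  · rw [if_neg hk]
    have hNk : N < k := by simp only [Finset.mem_range] at hk; omega
    rw [homogeneousComponent_eq_zero k F hNk, map_zero]

lemma im_aux (a w : ℝ) (t : ℂ) : ((a:ℂ) + t * (w:ℂ)).im = t.im * w := by
  simp [Complex.add_im, Complex.mul_im]

lemma im_aux2 (c : ℝ) (z : ℂ) : (((c:ℝ):ℂ)⁻¹ * z).im = c⁻¹ * z.im := by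
  rw [← Complex.ofReal_inv]
  simp [Complex.mul_im]

end Stmt17Aux

open Stmt17Aux Polynomial Filter

theorem stmt17 {n d : ℕ} (f : MvPolynomial (Fin n) ℝ) (hf : f ≠ 0)
    (hd : f.totalDegree = d)
    (fH : MvPolynomial (Fin (n + 1)) ℝ) (hH : fH.IsHomogeneous d)
    (hfH : aeval (Fin.snoc (fun i => (X i : MvPolynomial (Fin n) ℝ)) 1) fH = f) :
    IsRealStable f ↔
      ∀ v : Fin (n + 1) → ℝ, v (Fin.last n) = 0 →
        (∀ i : Fin n, 0 < v i.castSucc) → GardingHyperbolic fH v := by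
  classical
  have FHhom : (fH.map (algebraMap ℝ ℂ)).IsHomogeneous d := hH.map _
  -- dehomogenization identity
  have hB : ∀ z : Fin n → ℂ,
      MvPolynomial.eval (Fin.snoc z 1) (fH.map (algebraMap ℝ ℂ))
        = MvPolynomial.eval z (f.map (algebraMap ℝ ℂ)) := by
    intro z
    have h := Stmt17Aux.eval_map_aeval (Fin.snoc (fun i => (X i : MvPolynomial (Fin n) ℝ)) 1) fH z
    rw [hfH] at h
    have hpt : (fun i => MvPolynomial.eval z (MvPolynomial.map (algebraMap ℝ ℂ)
        ((Fin.snoc (fun i => (X i : MvPolynomial (Fin n) ℝ)) 1 : Fin (n+1) → MvPolynomial (Fin n) ℝ) i)))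
        = (Fin.snoc z 1 : Fin (n+1) → ℂ) := by
      funext i
      refine Fin.lastCases ?_ (fun j => ?_) i
      · rw [Fin.snoc_last, Fin.snoc_last]; simp
      · rw [Fin.snoc_castSucc, Fin.snoc_castSucc]; simp
    rw [hpt] at h
    exact h.symm
  -- scaling identity
  have hC : ∀ (z : Fin n → ℂ) (c : ℂ), c ≠ 0 →
      MvPolynomial.eval (Fin.snoc z c) (fH.map (algebraMap ℝ ℂ))
        = c ^ d * MvPolynomial.eval (fun j => c⁻¹ * z j) (f.map (algebraMap ℝ ℂ)) := by
    intro z c hc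
    have h1 : (Fin.snoc z c : Fin (n+1) → ℂ)
        = fun i => c * ((Fin.snoc (fun j => c⁻¹ * z j) 1 : Fin (n+1) → ℂ) i) := by
      funext i
      refine Fin.lastCases ?_ (fun j => ?_) i
      · rw [Fin.snoc_last, Fin.snoc_last, mul_one]
      · rw [Fin.snoc_castSucc, Fin.snoc_castSucc, ← mul_assoc, mul_inv_cancel₀ hc, one_mul]
    rw [h1, homog_eval_mul FHhom, hB]
  -- existence of a positive point for the top slice
  have hw' : ∃ w' : Fin n → ℝ, (∀ i, 0 < w' i) ∧
      MvPolynomial.eval (Fin.snoc (fun i => ((w' i : ℝ) : ℂ)) 0) (fH.map (algebraMap ℝ ℂ)) ≠ 0 := by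
    set gR := MvPolynomial.aeval (Fin.snoc (fun i => (X i : MvPolynomial (Fin n) ℝ)) 0) fH with hgRdef
    have hG : ∀ z : Fin n → ℂ,
        MvPolynomial.eval (Fin.snoc z 0) (fH.map (algebraMap ℝ ℂ))
          = MvPolynomial.eval z (gR.map (algebraMap ℝ ℂ)) := by
      intro z
      have h := Stmt17Aux.eval_map_aeval (Fin.snoc (fun i => (X i : MvPolynomial (Fin n) ℝ)) 0) fH z
      have hpt : (fun i => MvPolynomial.eval z (MvPolynomial.map (algebraMap ℝ ℂ)
          ((Fin.snoc (fun i => (X i : MvPolynomial (Fin n) ℝ)) 0 : Fin (n+1) → MvPolynomial (Fin n) ℝ) i)))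
          = (Fin.snoc z 0 : Fin (n+1) → ℂ) := by
        funext i
        refine Fin.lastCases ?_ (fun j => ?_) i
        · rw [Fin.snoc_last, Fin.snoc_last]; simp
        · rw [Fin.snoc_castSucc, Fin.snoc_castSucc]; simp
      rw [hpt] at h
      exact h.symm
    have hgRne : gR ≠ 0 := by
      intro hg0
      -- degree-d coefficient of f
      obtain ⟨β₀, hβ₀mem, hβ₀⟩ := Finset.exists_mem_eq_sup f.support
        (MvPolynomial.support_nonempty.mpr hf) (fun s => s.sum fun _ e => e)
      have hdeg : Finsupp.degree β₀ = d := by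
        have h1 : f.totalDegree = β₀.sum fun _ e => e := hβ₀
        rw [hd] at h1
        exact h1.symm
      have hcomp : (homogeneousComponent d (f.map (algebraMap ℝ ℂ))) ≠ 0 := by
        intro hz0
        have h2 := congrArg (MvPolynomial.coeff β₀) hz0
        rw [coeff_homogeneousComponent, if_pos hdeg, MvPolynomial.coeff_map] at h2
        simp only [MvPolynomial.coeff_zero] at h2
        exact (MvPolynomial.mem_support_iff.mp hβ₀mem)
          ((algebraMap ℝ ℂ).injective (by rw [h2, map_zero]))
      obtain ⟨x, hx⟩ : ∃ x : Fin n → ℂ,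
          MvPolynomial.eval x (homogeneousComponent d (f.map (algebraMap ℝ ℂ))) ≠ 0 := by
        by_contra hcon
        push_neg at hcon
        exact hcomp (MvPolynomial.funext fun x => by rw [hcon x, map_zero])
      have e1 : MvPolynomial.eval x (homogeneousComponent d (f.map (algebraMap ℝ ℂ)))
          = (lineP (f.map (algebraMap ℝ ℂ)) 0 x).coeff d := (coeff_lineP_zero _ x d).symm
      have e2 : lineP (f.map (algebraMap ℝ ℂ)) 0 x
          = lineP (fH.map (algebraMap ℝ ℂ)) (Fin.snoc (0 : Fin n → ℂ) 1) (Fin.snoc x 0) := by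
        apply Polynomial.funext
        intro t
        rw [lineP_eval, lineP_eval]
        have hptt : (fun i => (Fin.snoc (0 : Fin n → ℂ) 1 : Fin (n+1) → ℂ) i
            + t * (Fin.snoc x 0 : Fin (n+1) → ℂ) i)
            = (Fin.snoc (fun j => t * x j) 1 : Fin (n+1) → ℂ) := by
          funext i
          refine Fin.lastCases ?_ (fun j => ?_) i
          · rw [Fin.snoc_last, Fin.snoc_last, Fin.snoc_last]; simp
          · rw [Fin.snoc_castSucc, Fin.snoc_castSucc, Fin.snoc_castSucc]; simp
        rw [show (fun i => (0 : Fin n → ℂ) i + t * x i) = (fun j => t * x j) from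
          funext fun i => by simp, hptt, hB]
      have e3 : (lineP (fH.map (algebraMap ℝ ℂ)) (Fin.snoc (0 : Fin n → ℂ) 1) (Fin.snoc x 0)).coeff d
          = MvPolynomial.eval (Fin.snoc x 0) (fH.map (algebraMap ℝ ℂ)) := lineP_coeff_top FHhom _ _
      rw [e1, e2, e3, hG x, hg0] at hx
      simp at hx
    obtain ⟨w', hw'pos, hw'ne⟩ := exists_pos_eval_ne_zero hgRne
    refine ⟨w', hw'pos, ?_⟩
    rw [hG, algebraMap_eval]
    exact_mod_cast hw'ne
  constructor
  · intro hs
    have hzero : ∀ z : Fin n → ℂ,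
        MvPolynomial.eval z (f.map (algebraMap ℝ ℂ)) = 0 → ∃ j, (z j).im ≤ 0 := by
      intro z h0
      by_contra hcon
      push_neg at hcon
      exact hs z hcon h0
    have step1 : ∀ w : Fin n → ℝ, (∀ i, 0 < w i) →
        MvPolynomial.eval (Fin.snoc (fun i => ((w i : ℝ) : ℂ)) 0) (fH.map (algebraMap ℝ ℂ)) ≠ 0 := by
      obtain ⟨w', hw'pos, hA⟩ := hw'
      intro w hwpos hBzero
      by_cases hn0 : n = 0
      · subst hn0
        exact hA (by
          rw [show (fun i : Fin 0 => ((w' i : ℝ):ℂ)) = (fun i : Fin 0 => ((w i : ℝ):ℂ)) from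
            funext fun i => i.elim0]
          exact hBzero)
      · have hne : Nonempty (Fin n) := ⟨⟨0, Nat.pos_of_ne_zero hn0⟩⟩
        have hU : (Finset.univ : Finset (Fin n)).Nonempty := Finset.univ_nonempty
        set δ := Finset.univ.inf' hU (fun j => w j / w' j) with hδdef
        have hδpos : 0 < δ := (Finset.lt_inf'_iff hU).mpr (fun j _ => div_pos (hwpos j) (hw'pos j))
        have hδle : ∀ j, δ * w' j ≤ w j := by
          intro j
          have h1 : δ ≤ w j / w' j := Finset.inf'_le _ (Finset.mem_univ j)
          exact (le_div_iff₀ (hw'pos j)).mp h1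
        set ρ1 : Polynomial ℂ := lineP (fH.map (algebraMap ℝ ℂ))
          (Fin.snoc (fun j => ((w j : ℝ):ℂ)) 0) (Fin.snoc (0 : Fin n → ℂ) 1) with hρ1def
        have hρ1eval : ∀ u : ℂ, ρ1.eval u
            = MvPolynomial.eval (Fin.snoc (fun j => ((w j : ℝ):ℂ)) u) (fH.map (algebraMap ℝ ℂ)) := by
          intro u
          rw [hρ1def, lineP_eval,
            show (fun i => (Fin.snoc (fun j => ((w j : ℝ):ℂ)) 0 : Fin (n+1) → ℂ) i
                + u * (Fin.snoc (0 : Fin n → ℂ) 1 : Fin (n+1) → ℂ) i)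
              = (Fin.snoc (fun j => ((w j : ℝ):ℂ)) u : Fin (n+1) → ℂ) from
              funext fun i => Fin.lastCases (by simp) (fun j => by simp) i]
        set A := MvPolynomial.eval (Fin.snoc (fun i => ((w' i : ℝ) : ℂ)) 0) (fH.map (algebraMap ℝ ℂ)) with hAdef
        have key : ∀ τ : ℝ, 0 < τ →
            ‖A‖ * δ ^ d ≤ ‖ρ1.eval ((Complex.I * (τ:ℂ))⁻¹)‖ := by
          intro τ hτ
          have hIτ : (Complex.I * (τ:ℂ)) ≠ 0 :=
            mul_ne_zero Complex.I_ne_zero (by exact_mod_cast ne_of_gt hτ)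
          set q : Polynomial ℂ := lineP (fH.map (algebraMap ℝ ℂ))
            (Fin.snoc (fun j => (Complex.I * (τ:ℂ)) * ((w j : ℝ):ℂ)) 1)
            (Fin.snoc (fun j => ((w' j : ℝ):ℂ)) 0) with hqdef
          have hco : q.coeff d = A := by rw [hqdef, lineP_coeff_top FHhom]
          have hnd : q.natDegree = d := le_antisymm
            (le_trans (lineP_natDegree_le _ _ _) FHhom.totalDegree_le)
            (Polynomial.le_natDegree_of_ne_zero (by rw [hco]; exact hA))
          have hqne : q ≠ 0 := fun h => hA (by rw [← hco, h, Polynomial.coeff_zero])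
          have hlc : q.leadingCoeff = A := by rw [Polynomial.leadingCoeff, hnd, hco]
          have hroots : ∀ r ∈ q.roots, r.im ≤ -(δ * τ) := by
            intro r hr
            have hr0 : q.eval r = 0 := ((Polynomial.mem_roots hqne).mp hr)
            rw [hqdef, lineP_eval] at hr0
            have hpt2 : (fun i =>
                (Fin.snoc (fun j => (Complex.I * (τ:ℂ)) * ((w j : ℝ):ℂ)) 1 : Fin (n+1) → ℂ) i
                  + r * (Fin.snoc (fun j => ((w' j : ℝ):ℂ)) 0 : Fin (n+1) → ℂ) i)
                = (Fin.snoc (fun j => (Complex.I * (τ:ℂ)) * ((w j : ℝ):ℂ) + r * ((w' j : ℝ):ℂ)) 1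
                    : Fin (n+1) → ℂ) := by
              funext i
              refine Fin.lastCases ?_ (fun j => ?_) i
              · simp
              · simp
            rw [hpt2, hB] at hr0
            obtain ⟨j, hj⟩ := hzero _ hr0
            have him : ((Complex.I * (τ:ℂ)) * ((w j : ℝ):ℂ) + r * ((w' j : ℝ):ℂ)).im
                = τ * w j + r.im * w' j := by
              simp [Complex.add_im, Complex.mul_im]
            rw [him] at hj
            have h4 := hδle j
            have h5 : r.im * w' j ≤ (-(δ * τ)) * w' j := by nlinarith [hw'pos j]
            exact le_of_mul_le_mul_right h5 (hw'pos j)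
          have hlb := eval_lower_bound hroots (t := (0:ℂ))
            (by rw [Complex.zero_im]; nlinarith [mul_pos hδpos hτ])
          rw [hlc, hnd, Complex.zero_im] at hlb
          rw [show (0 : ℝ) - -(δ * τ) = δ * τ from by ring] at hlb
          have h7 : q.eval 0 = (Complex.I * (τ:ℂ))^d * ρ1.eval ((Complex.I * (τ:ℂ))⁻¹) := by
            rw [hqdef, lineP_eval]
            have hpt3 : (fun i =>
                (Fin.snoc (fun j => (Complex.I * (τ:ℂ)) * ((w j : ℝ):ℂ)) 1 : Fin (n+1) → ℂ) i
                  + 0 * (Fin.snoc (fun j => ((w' j : ℝ):ℂ)) 0 : Fin (n+1) → ℂ) i)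
                = fun i => (Complex.I * (τ:ℂ)) *
                    ((Fin.snoc (fun j => ((w j : ℝ):ℂ)) ((Complex.I * (τ:ℂ))⁻¹) : Fin (n+1) → ℂ) i) := by
              funext i
              refine Fin.lastCases ?_ (fun j => ?_) i
              · simp only [Fin.snoc_last]
                rw [mul_inv_cancel₀ hIτ]
                ring
              · simp
            rw [hpt3, homog_eval_mul FHhom, ← hρ1eval]
          rw [h7, norm_mul, norm_pow] at hlb
          rw [show ‖Complex.I * (τ:ℂ)‖ = τ from by
            rw [norm_mul, Complex.norm_I, one_mul, Complex.norm_real, Real.norm_eq_abs, abs_of_pos hτ]] at hlb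
          rw [mul_pow] at hlb
          have hτd : (0:ℝ) < τ ^ d := pow_pos hτ d
          have h9 : (‖A‖ * δ ^ d) * τ ^ d
              ≤ ‖ρ1.eval ((Complex.I * (τ:ℂ))⁻¹)‖ * τ ^ d := by
            calc (‖A‖ * δ ^ d) * τ ^ d = ‖A‖ * (δ ^ d * τ ^ d) := by ring
              _ ≤ τ ^ d * ‖ρ1.eval ((Complex.I * (τ:ℂ))⁻¹)‖ := hlb
              _ = ‖ρ1.eval ((Complex.I * (τ:ℂ))⁻¹)‖ * τ ^ d := by ring
          exact le_of_mul_le_mul_right h9 hτd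
        have hlim1 : Tendsto (fun τ : ℝ => (Complex.I * (τ:ℂ))⁻¹) atTop (nhds 0) := by
          have h4 := (Complex.continuous_ofReal.tendsto 0).comp
            (tendsto_inv_atTop_zero (𝕜 := ℝ))
          rw [Complex.ofReal_zero] at h4
          have h5 := Filter.Tendsto.const_mul (Complex.I⁻¹) h4
          rw [mul_zero] at h5
          apply h5.congr
          intro τ
          show Complex.I⁻¹ * ((τ⁻¹:ℝ):ℂ) = (Complex.I * (τ:ℂ))⁻¹
          rw [Complex.ofReal_inv, ← mul_inv]
        have hcont : Tendsto (fun u : ℂ => ‖ρ1.eval u‖) (nhds 0)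
            (nhds (‖ρ1.eval 0‖)) :=
          ((continuous_norm.comp (Polynomial.continuous ρ1)).tendsto 0)
        have hfin : ‖A‖ * δ ^ d ≤ ‖ρ1.eval 0‖ :=
          ge_of_tendsto (hcont.comp hlim1) (by
            filter_upwards [eventually_gt_atTop (0:ℝ)] with τ hτ
            exact key τ hτ)
        have hz0 : ρ1.eval 0 = 0 := by rw [hρ1eval 0]; exact hBzero
        rw [hz0, norm_zero] at hfin
        have hposA : 0 < ‖A‖ * δ ^ d :=
          mul_pos (norm_pos_iff.mpr hA) (pow_pos hδpos d)
        linarith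
    have step2 : ∀ (w : Fin n → ℝ), (∀ i, 0 < w i) → ∀ (a : Fin n → ℝ) (c : ℝ) (t : ℂ), 0 < t.im →
        MvPolynomial.eval (Fin.snoc (fun j => (a j : ℂ) + t * ((w j : ℝ):ℂ)) ((c:ℝ):ℂ))
          (fH.map (algebraMap ℝ ℂ)) ≠ 0 := by
      intro w hwpos a c t ht heval
      by_cases hc : c = 0
      · subst hc
        rw [Complex.ofReal_zero] at heval
        set Bc := MvPolynomial.eval (Fin.snoc (fun i => ((w i : ℝ) : ℂ)) 0)
          (fH.map (algebraMap ℝ ℂ)) with hBcdef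
        have hBne : Bc ≠ 0 := step1 w hwpos
        have key : ∀ u : ℝ, 0 < u →
            ‖Bc‖ * t.im ^ d ≤ ‖MvPolynomial.eval
              (Fin.snoc (fun j => (a j:ℂ) + t * ((w j : ℝ):ℂ)) ((u:ℝ):ℂ))
              (fH.map (algebraMap ℝ ℂ))‖ := by
          intro u hu
          have huC : ((u:ℝ):ℂ) ≠ 0 := by exact_mod_cast ne_of_gt hu
          set g : Polynomial ℂ := lineP (fH.map (algebraMap ℝ ℂ))
            (Fin.snoc (fun j => ((a j : ℝ):ℂ)) ((u:ℝ):ℂ)) (Fin.snoc (fun j => ((w j : ℝ):ℂ)) 0) with hgdef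
          have hco : g.coeff d = Bc := by rw [hgdef, lineP_coeff_top FHhom]
          have hnd : g.natDegree = d := le_antisymm
            (le_trans (lineP_natDegree_le _ _ _) FHhom.totalDegree_le)
            (Polynomial.le_natDegree_of_ne_zero (by rw [hco]; exact hBne))
          have hgne : g ≠ 0 := fun h => hBne (by rw [← hco, h, Polynomial.coeff_zero])
          have hlc : g.leadingCoeff = Bc := by rw [Polynomial.leadingCoeff, hnd, hco]
          have hroots : ∀ r ∈ g.roots, r.im ≤ 0 := by
            intro r hr
            have hr0 : g.eval r = 0 := ((Polynomial.mem_roots hgne).mp hr)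
            rw [hgdef, lineP_eval] at hr0
            have hpt2 : (fun i =>
                (Fin.snoc (fun j => ((a j : ℝ):ℂ)) ((u:ℝ):ℂ) : Fin (n+1) → ℂ) i
                  + r * (Fin.snoc (fun j => ((w j : ℝ):ℂ)) 0 : Fin (n+1) → ℂ) i)
                = (Fin.snoc (fun j => ((a j : ℝ):ℂ) + r * ((w j : ℝ):ℂ)) ((u:ℝ):ℂ)
                    : Fin (n+1) → ℂ) := by
              funext i
              refine Fin.lastCases ?_ (fun j => ?_) i
              · simp
              · simp
            rw [hpt2, hC _ _ huC] at hr0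
            have h2 : MvPolynomial.eval
                (fun j => ((u:ℝ):ℂ)⁻¹ * (((a j : ℝ):ℂ) + r * ((w j : ℝ):ℂ)))
                (f.map (algebraMap ℝ ℂ)) = 0 := by
              rcases mul_eq_zero.mp hr0 with h | h
              · exact absurd h (pow_ne_zero _ huC)
              · exact h
            obtain ⟨j, hj⟩ := hzero _ h2
            rw [im_aux2, im_aux] at hj
            by_contra hcon
            push_neg at hcon
            have hgt0 : 0 < u⁻¹ * (r.im * w j) :=
              mul_pos (inv_pos.mpr hu) (mul_pos hcon (hwpos j))
            linarith
          have hlb := eval_lower_bound hroots (t := t) (le_of_lt ht)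
          rw [hlc, hnd, sub_zero] at hlb
          have h7 : g.eval t = MvPolynomial.eval
              (Fin.snoc (fun j => (a j:ℂ) + t * ((w j : ℝ):ℂ)) ((u:ℝ):ℂ))
              (fH.map (algebraMap ℝ ℂ)) := by
            rw [hgdef, lineP_eval,
              show (fun i => (Fin.snoc (fun j => ((a j : ℝ):ℂ)) ((u:ℝ):ℂ) : Fin (n+1) → ℂ) i
                  + t * (Fin.snoc (fun j => ((w j : ℝ):ℂ)) 0 : Fin (n+1) → ℂ) i)
                = (Fin.snoc (fun j => (a j:ℂ) + t * ((w j : ℝ):ℂ)) ((u:ℝ):ℂ) : Fin (n+1) → ℂ) from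
                funext fun i => Fin.lastCases (by simp) (fun j => by simp) i]
          rw [h7] at hlb
          exact hlb
        set ρ : Polynomial ℂ := lineP (fH.map (algebraMap ℝ ℂ))
          (Fin.snoc (fun j => (a j:ℂ) + t * ((w j : ℝ):ℂ)) 0) (Fin.snoc (0 : Fin n → ℂ) 1) with hρdef
        have hρeval : ∀ u : ℂ, ρ.eval u = MvPolynomial.eval
            (Fin.snoc (fun j => (a j:ℂ) + t * ((w j : ℝ):ℂ)) u) (fH.map (algebraMap ℝ ℂ)) := by
          intro u
          rw [hρdef, lineP_eval,
            show (fun i => (Fin.snoc (fun j => (a j:ℂ) + t * ((w j : ℝ):ℂ)) 0 : Fin (n+1) → ℂ) i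
                + u * (Fin.snoc (0 : Fin n → ℂ) 1 : Fin (n+1) → ℂ) i)
              = (Fin.snoc (fun j => (a j:ℂ) + t * ((w j : ℝ):ℂ)) u : Fin (n+1) → ℂ) from
              funext fun i => Fin.lastCases (by simp) (fun j => by simp) i]
        have hlim1 : Tendsto (fun τ : ℝ => (((τ⁻¹ : ℝ)) : ℂ)) atTop (nhds 0) := by
          have h4 := (Complex.continuous_ofReal.tendsto 0).comp
            (tendsto_inv_atTop_zero (𝕜 := ℝ))
          rw [Complex.ofReal_zero] at h4
          exact h4
        have hcont : Tendsto (fun u : ℂ => ‖ρ.eval u‖) (nhds 0)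
            (nhds (‖ρ.eval 0‖)) :=
          ((continuous_norm.comp (Polynomial.continuous ρ)).tendsto 0)
        have hfin : ‖Bc‖ * t.im ^ d ≤ ‖ρ.eval 0‖ :=
          ge_of_tendsto (hcont.comp hlim1) (by
            filter_upwards [eventually_gt_atTop (0:ℝ)] with τ hτ
            show ‖Bc‖ * t.im ^ d ≤ ‖ρ.eval (((τ⁻¹ : ℝ)) : ℂ)‖
            rw [hρeval]
            exact key τ⁻¹ (inv_pos.mpr hτ))
        have hz0 : ρ.eval 0 = 0 := by rw [hρeval 0]; exact heval
        rw [hz0, norm_zero] at hfin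
        have hposB : 0 < ‖Bc‖ * t.im ^ d :=
          mul_pos (norm_pos_iff.mpr hBne) (pow_pos ht d)
        linarith
      · have hcC : ((c:ℝ):ℂ) ≠ 0 := by exact_mod_cast hc
        rw [hC _ _ hcC] at heval
        have h2 : MvPolynomial.eval
            (fun j => ((c:ℝ):ℂ)⁻¹ * ((a j:ℂ) + t * ((w j : ℝ):ℂ)))
            (f.map (algebraMap ℝ ℂ)) = 0 := by
          rcases mul_eq_zero.mp heval with h | h
          · exact absurd h (pow_ne_zero _ hcC)
          · exact h
        rcases lt_or_gt_of_ne hc with hneg | hpos2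
        · have hconj := Stmt17Aux.eval_conj f
            (fun j => ((c:ℝ):ℂ)⁻¹ * ((a j:ℂ) + t * ((w j : ℝ):ℂ)))
          rw [h2, map_zero] at hconj
          obtain ⟨j, hj⟩ := hzero _ hconj
          have him : ((starRingEnd ℂ) (((c:ℝ):ℂ)⁻¹ * ((a j:ℂ) + t * ((w j : ℝ):ℂ)))).im
              = -(c⁻¹ * (t.im * w j)) := by
            rw [Complex.conj_im, im_aux2, im_aux]
          rw [him] at hj
          have hc1 : c⁻¹ < 0 := inv_lt_zero.mpr hneg
          have hc2 : 0 < t.im * w j := mul_pos ht (hwpos j)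
          nlinarith
        · obtain ⟨j, hj⟩ := hzero _ h2
          rw [im_aux2, im_aux] at hj
          have hc1 : 0 < c⁻¹ := inv_pos.mpr hpos2
          have hc2 : 0 < t.im * w j := mul_pos ht (hwpos j)
          nlinarith
    intro v hlast hpos
    constructor
    · intro h0
      have h1 : (fun i => ((v i : ℝ):ℂ))
          = (Fin.snoc (fun j => ((v (Fin.castSucc j) : ℝ):ℂ)) 0 : Fin (n+1) → ℂ) := by
        funext i
        refine Fin.lastCases ?_ (fun j => ?_) i
        · rw [Fin.snoc_last, hlast]; simp
        · rw [Fin.snoc_castSucc]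
      apply step1 (fun j => v (Fin.castSucc j)) hpos
      rw [← h1, algebraMap_eval, h0]
      simp
    · intro α t heval
      by_contra him0
      rcases lt_or_gt_of_ne him0 with hlt | hgt
      · have hconj := Stmt17Aux.eval_conj fH (fun i => (α i:ℂ) + t * ((v i : ℝ):ℂ))
        rw [heval, map_zero] at hconj
        have hptc : (fun i => (starRingEnd ℂ) ((α i:ℂ) + t * ((v i : ℝ):ℂ)))
            = (fun i => (α i:ℂ) + (starRingEnd ℂ) t * ((v i : ℝ):ℂ)) := by
          funext i
          simp [map_add, map_mul, Complex.conj_ofReal]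
        rw [hptc] at hconj
        have hpt : (fun i => (α i:ℂ) + (starRingEnd ℂ) t * ((v i : ℝ):ℂ))
            = (Fin.snoc (fun j => ((α (Fin.castSucc j) : ℝ):ℂ)
                + (starRingEnd ℂ) t * ((v (Fin.castSucc j) : ℝ):ℂ))
              ((α (Fin.last n) : ℝ):ℂ) : Fin (n+1) → ℂ) := by
          funext i
          refine Fin.lastCases ?_ (fun j => ?_) i
          · rw [Fin.snoc_last, hlast]; simp
          · rw [Fin.snoc_castSucc]
        rw [hpt] at hconj
        exact step2 _ hpos _ _ _ (by rw [Complex.conj_im]; linarith) hconj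
      · have hpt : (fun i => (α i:ℂ) + t * ((v i : ℝ):ℂ))
            = (Fin.snoc (fun j => ((α (Fin.castSucc j) : ℝ):ℂ)
                + t * ((v (Fin.castSucc j) : ℝ):ℂ))
              ((α (Fin.last n) : ℝ):ℂ) : Fin (n+1) → ℂ) := by
          funext i
          refine Fin.lastCases ?_ (fun j => ?_) i
          · rw [Fin.snoc_last, hlast]; simp
          · rw [Fin.snoc_castSucc]
        rw [hpt] at heval
        exact step2 _ hpos _ _ _ hgt heval
  · -- easy direction
    intro h
    intro z hz
    set v : Fin (n+1) → ℝ := Fin.snoc (fun j => (z j).im) 0 with hv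
    set α : Fin (n+1) → ℝ := Fin.snoc (fun j => (z j).re) 1 with hα
    have hhyp := h v (by rw [hv, Fin.snoc_last]) (fun i => by rw [hv, Fin.snoc_castSucc]; exact hz i)
    intro h0
    have hpt : (fun i => (α i : ℂ) + Complex.I * (v i : ℂ)) = (Fin.snoc z 1 : Fin (n+1) → ℂ) := by
      funext i
      refine Fin.lastCases ?_ (fun j => ?_) i
      · rw [hv, hα, Fin.snoc_last, Fin.snoc_last, Fin.snoc_last]
        simp
      · rw [hv, hα, Fin.snoc_castSucc, Fin.snoc_castSucc, Fin.snoc_castSucc]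
        rw [mul_comm]
        exact Complex.re_add_im (z j)
    have h2 := hhyp.2 α Complex.I (by rw [hpt, hB, h0])
    rw [Complex.I_im] at h2
    exact one_ne_zero h2
end
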